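/- arXiv:2603.13551 — 3 statements merged into one kernel-verified Lean document; each statement's English description precedes it below -/
import Mathlib

section
/- Let L be a pseudo-Finsler Lagrangian on Ω with spray coefficients G^α and spray nonlinear connection N. Let I ⊆ ℝ be an open interval, ε > 0, and let x : I × (−ε,ε) → ℝ^m be smooth with (x(t,s), ∂x/∂t(t,s)) ∈ Ω for all (t,s), such that each curve t ↦ x(t,s) is a geodesic: ∂²x^α/∂t² + 2G^α(x, ∂x/∂t) = 0. Set γ(t) := x(t,0) and J(t) := ∂x/∂s(t,0). Then the Jacobi equation holds on I: D̃_γ̇(D̃_γ̇ J) + R_γ̇(J) = 0, where for a smooth W : I → ℝ^m one defines (D̃_γ̇ W)^α(t) := dW^α/dt + N^α_μ(γ(t),γ̇(t)) W^μ(t), and R_γ̇(J)^α := R^α{}_{βμ}(γ,γ̇) J^β γ̇^μ. -/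
open scoped BigOperators

noncomputable section

/-- `Vec m` is the model space `ℝ^m`. -/
abbrev Vec (m : ℕ) : Type := Fin m → ℝ

variable {m : ℕ}

/-- Partial derivative in the velocity (second) variable: `∂f/∂v^i (x,v)`. -/
def pdv (f : Vec m → Vec m → ℝ) (i : Fin m) (x v : Vec m) : ℝ :=
  fderiv ℝ (f x) v (Pi.single i 1)

/-- Partial derivative in the position (first) variable: `∂f/∂x^i (x,v)`. -/
def pdx (f : Vec m → Vec m → ℝ) (i : Fin m) (x v : Vec m) : ℝ :=
  fderiv ℝ (fun y => f y v) x (Pi.single i 1)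

/-- Vertical Hessian `g_{αβ}(x,v) = ∂²L/∂v^α∂v^β` of the Lagrangian. -/
def gmet (L : Vec m → Vec m → ℝ) (x v : Vec m) : Matrix (Fin m) (Fin m) ℝ :=
  Matrix.of fun α β => pdv (pdv L β) α x v

/-- Inverse metric `g^{αβ}` (nonsingular matrix inverse). -/
def ginv (L : Vec m → Vec m → ℝ) (x v : Vec m) : Matrix (Fin m) (Fin m) ℝ :=
  (gmet L x v)⁻¹

/-- Geodesic spray coefficients
`G^α = (1/4) g^{αδ}(∂g_{δγ}/∂x^β + ∂g_{δβ}/∂x^γ − ∂g_{βγ}/∂x^δ) v^β v^γ`. -/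
def spray (L : Vec m → Vec m → ℝ) (α : Fin m) (x v : Vec m) : ℝ :=
  (1/4) * ∑ δ, ginv L x v α δ *
    (∑ β, ∑ γ,
      (pdx (fun y w => gmet L y w δ γ) β x v
        + pdx (fun y w => gmet L y w δ β) γ x v
        - pdx (fun y w => gmet L y w β γ) δ x v) * v β * v γ)

/-- The spray nonlinear connection `N^α_μ = ∂G^α/∂v^μ`. -/
def nConn (L : Vec m → Vec m → ℝ) (α μ : Fin m) (x v : Vec m) : ℝ :=
  pdv (spray L α) μ x v

/-- Horizontal derivative `δ_μ f = ∂f/∂x^μ − N^ν_μ ∂f/∂v^ν` for a nonlinear connection `N`. -/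
def hderiv (N : Fin m → Fin m → Vec m → Vec m → ℝ) (f : Vec m → Vec m → ℝ)
    (μ : Fin m) (x v : Vec m) : ℝ :=
  pdx f μ x v - ∑ ν, N ν μ x v * pdv f ν x v

/-- Curvature of the nonlinear connection: `R^μ_{αβ} = δ_α N^μ_β − δ_β N^μ_α`. -/
def curv (N : Fin m → Fin m → Vec m → Vec m → ℝ) (μ α β : Fin m) (x v : Vec m) : ℝ :=
  hderiv N (N μ β) α x v - hderiv N (N μ α) β x v

/-- Ricci scalar `Ric(v) = R^μ{}_{μα} v^α`. -/
def ricciScalar (N : Fin m → Fin m → Vec m → Vec m → ℝ) (x v : Vec m) : ℝ :=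
  ∑ α, (∑ μ, curv N μ μ α x v) * v α

/-- Ricci 1-form component `(Ric_v)_α = R^μ{}_{μα}`. -/
def ricciOne (N : Fin m → Fin m → Vec m → Vec m → ℝ) (α : Fin m) (x v : Vec m) : ℝ :=
  ∑ μ, curv N μ μ α x v

/-- `χ_α := (∂R^γ{}_{αν}/∂v^γ) v^ν`. -/
def chiForm (N : Fin m → Fin m → Vec m → Vec m → ℝ) (α : Fin m) (x v : Vec m) : ℝ :=
  ∑ γ, ∑ ν, pdv (curv N γ α ν) γ x v * v ν

/-- Partial derivative `∂u^α/∂x^μ` of a vector field on the base. -/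
def pde (u : Vec m → Vec m) (α μ : Fin m) (x : Vec m) : ℝ :=
  fderiv ℝ (fun y => u y α) x (Pi.single μ 1)

/-- Covariant derivative `(D_X u)^α = (∂u^α/∂x^μ + N^α_μ(x,u(x))) X^μ`. -/
def covD (L : Vec m → Vec m → ℝ) (u X : Vec m → Vec m) (x : Vec m) : Vec m :=
  fun α => ∑ μ, (pde u α μ x + nConn L α μ x (u x)) * X x μ

/-- Flipped derivative `(D̃_u X)^α = (∂X^α/∂x^μ) u^μ + N^α_μ(x,u(x)) X^μ`. -/
def flipD (L : Vec m → Vec m → ℝ) (u X : Vec m → Vec m) (x : Vec m) : Vec m :=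
  fun α => (∑ μ, pde X α μ x * u x μ) + ∑ μ, nConn L α μ x (u x) * X x μ

/-- Lie bracket `[X,Y]^α = X^μ ∂Y^α/∂x^μ − Y^μ ∂X^α/∂x^μ`. -/
def lieB (X Y : Vec m → Vec m) (x : Vec m) : Vec m :=
  fun α => ∑ μ, (X x μ * pde Y α μ x - Y x μ * pde X α μ x)

/-- Scalar product `g_u(X,Y)(x) = g_{αβ}(x,u(x)) X^α Y^β`. -/
def gProd (L : Vec m → Vec m → ℝ) (u X Y : Vec m → Vec m) (x : Vec m) : ℝ :=
  ∑ α, ∑ β, gmet L x (u x) α β * X x α * Y x β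

/-- Directional derivative `∂_X f = X^μ ∂f/∂x^μ`. -/
def dirD (X : Vec m → Vec m) (f : Vec m → ℝ) (x : Vec m) : ℝ :=
  ∑ μ, X x μ * fderiv ℝ f x (Pi.single μ 1)


/-- Velocity of a curve. -/
def velC (γ : ℝ → Vec m) (t : ℝ) : Vec m := fun α => deriv (fun τ => γ τ α) t

/-- Flipped (dynamical) derivative along a curve:
`(D̃_γ̇ W)^α(t) = dW^α/dt + N^α_μ(γ(t),γ̇(t)) W^μ(t)`. -/
def DtilC (L : Vec m → Vec m → ℝ) (γ W : ℝ → Vec m) (t : ℝ) : Vec m :=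
  fun α => deriv (fun τ => W τ α) t + ∑ μ, nConn L α μ (γ t) (velC γ t) * W t μ

open scoped ContDiff

def unc (f : Vec m → Vec m → ℝ) : Vec m × Vec m → ℝ := fun p => f p.1 p.2

lemma pdv_eq_fderiv (f : Vec m → Vec m → ℝ) (i : Fin m) {x v : Vec m}
    (h : DifferentiableAt ℝ (unc f) (x, v)) :
    pdv f i x v = fderiv ℝ (unc f) (x, v) (0, Pi.single i 1) := by
  have h2 : HasFDerivAt (f x)
      ((fderiv ℝ (unc f) (x, v)).comp (ContinuousLinearMap.inr ℝ (Vec m) (Vec m))) v :=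
    h.hasFDerivAt.comp v (hasFDerivAt_prodMk_right x v)
  rw [pdv, h2.fderiv]; rfl

lemma pdx_eq_fderiv (f : Vec m → Vec m → ℝ) (i : Fin m) {x v : Vec m}
    (h : DifferentiableAt ℝ (unc f) (x, v)) :
    pdx f i x v = fderiv ℝ (unc f) (x, v) (Pi.single i 1, 0) := by
  have h2 : HasFDerivAt (fun y => f y v)
      ((fderiv ℝ (unc f) (x, v)).comp (ContinuousLinearMap.inl ℝ (Vec m) (Vec m))) x :=
    by have := h.hasFDerivAt.comp (x := x) (hasFDerivAt_prodMk_left (𝕜 := ℝ) x v); exact this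
  rw [pdx, h2.fderiv]; rfl

def SOn (Ω : Set (Vec m × Vec m)) (f : Vec m → Vec m → ℝ) : Prop :=
  ContDiffOn ℝ ∞ (unc f) Ω

variable {Ω : Set (Vec m × Vec m)}

lemma SOn.diffAt (hΩ : IsOpen Ω) {f : Vec m → Vec m → ℝ} (hf : SOn Ω f) {p : Vec m × Vec m} (hp : p ∈ Ω) :
    DifferentiableAt ℝ (unc f) p :=
  (hf.contDiffAt (hΩ.mem_nhds hp)).differentiableAt (by norm_num)

lemma SOn.contDiffAt' (hΩ : IsOpen Ω) {f : Vec m → Vec m → ℝ} (hf : SOn Ω f) {p : Vec m × Vec m} (hp : p ∈ Ω) :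
    ContDiffAt ℝ ∞ (unc f) p := hf.contDiffAt (hΩ.mem_nhds hp)

/-- smoothness of directional fderiv -/
lemma SOn.fderiv_apply (hΩ : IsOpen Ω) {f : Vec m → Vec m → ℝ} (hf : SOn Ω f) (w : Vec m × Vec m) :
    ContDiffOn ℝ ∞ (fun p => fderiv ℝ (unc f) p w) Ω := by
  have h := ((contDiffOn_infty_iff_fderiv_of_isOpen hΩ).1 hf).2
  exact h.clm_apply contDiffOn_const

lemma SOn.pdv' (hΩ : IsOpen Ω) {f : Vec m → Vec m → ℝ} (hf : SOn Ω f) (i : Fin m) : SOn Ω (pdv f i) := by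
  apply (SOn.fderiv_apply hΩ hf (0, Pi.single i 1)).congr
  intro p hp
  have h2 : HasFDerivAt (f p.1)
      ((fderiv ℝ (unc f) p).comp (ContinuousLinearMap.inr ℝ (Vec m) (Vec m))) p.2 :=
    by have := (SOn.diffAt hΩ hf hp).hasFDerivAt.comp (x := p.2) (hasFDerivAt_prodMk_right (𝕜 := ℝ) p.1 p.2); exact this
  show pdv f i p.1 p.2 = _
  rw [pdv, h2.fderiv]; rfl

lemma SOn.pdx' (hΩ : IsOpen Ω) {f : Vec m → Vec m → ℝ} (hf : SOn Ω f) (i : Fin m) : SOn Ω (pdx f i) := by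
  apply (SOn.fderiv_apply hΩ hf (Pi.single i 1, 0)).congr
  intro p hp
  have h2 : HasFDerivAt (fun y => f y p.2)
      ((fderiv ℝ (unc f) p).comp (ContinuousLinearMap.inl ℝ (Vec m) (Vec m))) p.1 :=
    by have := (SOn.diffAt hΩ hf hp).hasFDerivAt.comp (x := p.1) (hasFDerivAt_prodMk_left (𝕜 := ℝ) p.1 p.2); exact this
  show pdx f i p.1 p.2 = _
  rw [pdx, h2.fderiv]; rfl
section Smooth
variable {Ω : Set (Vec m × Vec m)} {L : Vec m → Vec m → ℝ}

lemma SOn.sum {ι : Type*} {s : Finset ι} {f : ι → Vec m → Vec m → ℝ}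
    (hf : ∀ i ∈ s, SOn Ω (f i)) : SOn Ω (fun x v => ∑ i ∈ s, f i x v) :=
  ContDiffOn.sum (fun i hi => hf i hi)

lemma SOn.mul {f g : Vec m → Vec m → ℝ} (hf : SOn Ω f) (hg : SOn Ω g) :
    SOn Ω (fun x v => f x v * g x v) := ContDiffOn.mul hf hg

lemma SOn.add {f g : Vec m → Vec m → ℝ} (hf : SOn Ω f) (hg : SOn Ω g) :
    SOn Ω (fun x v => f x v + g x v) := ContDiffOn.add hf hg

lemma SOn.sub {f g : Vec m → Vec m → ℝ} (hf : SOn Ω f) (hg : SOn Ω g) :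
    SOn Ω (fun x v => f x v - g x v) := ContDiffOn.sub hf hg

lemma SOn.const {c : ℝ} : SOn Ω (fun _ _ => c) := contDiffOn_const

lemma SOn.coordv (β : Fin m) : SOn (m := m) Ω (fun _ v => v β) := by
  have : ContDiffOn ℝ ∞ (fun p : Vec m × Vec m => p.2 β) Ω := by
    apply ContDiffOn.comp (g := fun w : Vec m => w β) (t := Set.univ)
    · exact (contDiff_pi.mp contDiff_id β).contDiffOn
    · exact contDiffOn_snd
    · exact fun _ _ => trivial
  exact this

lemma sgmet (hΩ : IsOpen Ω) (hL : SOn Ω L) (δ γ : Fin m) :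
    SOn Ω (fun x v => gmet L x v δ γ) :=
  SOn.pdv' hΩ (SOn.pdv' hΩ hL γ) δ

lemma sdet (hΩ : IsOpen Ω) (hL : SOn Ω L) :
    ContDiffOn ℝ ∞ (fun p : Vec m × Vec m => (gmet L p.1 p.2).det) Ω := by
  classical
  have h : ∀ p : Vec m × Vec m, (gmet L p.1 p.2).det
      = ∑ σ : Equiv.Perm (Fin m), (Equiv.Perm.sign σ : ℤ) • ∏ i, gmet L p.1 p.2 (σ i) i :=
    fun p => Matrix.det_apply _
  simp only [h]
  apply ContDiffOn.sum
  intro σ _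
  apply ContDiffOn.const_smul
  have : ∀ (s : Finset (Fin m)), ContDiffOn ℝ ∞
      (fun p : Vec m × Vec m => ∏ i ∈ s, gmet L p.1 p.2 (σ i) i) Ω := by
    intro s
    induction s using Finset.induction with
    | empty => simpa using contDiffOn_const
    | @insert a s h ih => simp only [Finset.prod_insert h]; exact ContDiffOn.mul (sgmet hΩ hL _ _) ih
  exact this Finset.univ

lemma sadj (hΩ : IsOpen Ω) (hL : SOn Ω L) (α δ : Fin m) :
    ContDiffOn ℝ ∞ (fun p : Vec m × Vec m => (gmet L p.1 p.2).adjugate α δ) Ω := by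
  classical
  simp only [Matrix.adjugate_apply]
  have h : ∀ p : Vec m × Vec m, ((gmet L p.1 p.2).updateRow δ (Pi.single α 1)).det
      = ∑ σ : Equiv.Perm (Fin m), (Equiv.Perm.sign σ : ℤ) •
        ∏ i, ((gmet L p.1 p.2).updateRow δ (Pi.single α 1)) (σ i) i :=
    fun p => Matrix.det_apply _
  simp only [h, Matrix.updateRow_apply]
  apply ContDiffOn.sum
  intro σ _
  apply ContDiffOn.const_smul
  have : ∀ (s : Finset (Fin m)), ContDiffOn ℝ ∞
      (fun p : Vec m × Vec m => ∏ i ∈ s,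
        (if σ i = δ then Pi.single α 1 i else gmet L p.1 p.2 (σ i) i)) Ω := by
    intro s
    induction s using Finset.induction with
    | empty => simpa using contDiffOn_const
    | @insert a s h ih =>
        simp only [Finset.prod_insert h]
        apply ContDiffOn.mul _ ih
        by_cases hc : σ a = δ
        · simp only [hc, if_true]; exact contDiffOn_const
        · simp only [hc, if_false]; exact sgmet hΩ hL _ _
  exact this Finset.univ

lemma sginv (hΩ : IsOpen Ω) (hL : SOn Ω L)
    (hdet : ∀ p ∈ Ω, (gmet L p.1 p.2).det ≠ 0) (α δ : Fin m) :
    SOn Ω (fun x v => ginv L x v α δ) := by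
  have h : ∀ p : Vec m × Vec m, ginv L p.1 p.2 α δ
      = ((gmet L p.1 p.2).det)⁻¹ * (gmet L p.1 p.2).adjugate α δ := by
    intro p
    rw [ginv, Matrix.inv_def, Matrix.smul_apply, Ring.inverse_eq_inv, smul_eq_mul]
  show ContDiffOn ℝ ∞ (fun p : Vec m × Vec m => ginv L p.1 p.2 α δ) Ω
  simp only [h]
  exact ((sdet hΩ hL).inv hdet).mul (sadj hΩ hL α δ)

lemma sspray (hΩ : IsOpen Ω) (hL : SOn Ω L)
    (hdet : ∀ p ∈ Ω, (gmet L p.1 p.2).det ≠ 0) (α : Fin m) :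
    SOn Ω (spray L α) := by
  unfold spray
  apply SOn.mul SOn.const
  apply SOn.sum; intro δ _
  apply SOn.mul (sginv hΩ hL hdet α δ)
  apply SOn.sum; intro β _
  apply SOn.sum; intro γ _
  apply SOn.mul
  apply SOn.mul
  · exact SOn.sub (SOn.add (SOn.pdx' hΩ (sgmet hΩ hL δ γ) β) (SOn.pdx' hΩ (sgmet hΩ hL δ β) γ))
      (SOn.pdx' hΩ (sgmet hΩ hL β γ) δ)
  · exact SOn.coordv β
  · exact SOn.coordv γ

lemma snConn (hΩ : IsOpen Ω) (hL : SOn Ω L)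
    (hdet : ∀ p ∈ Ω, (gmet L p.1 p.2).det ≠ 0) (α μ : Fin m) :
    SOn Ω (nConn L α μ) :=
  SOn.pdv' hΩ (sspray hΩ hL hdet α) μ

end Smooth

section Decomp

lemma vec_decomp (a : Vec m) : a = ∑ μ, a μ • (Pi.single μ 1 : Vec m) := by
  conv_lhs => rw [← Finset.univ_sum_single a]
  congr 1; funext μ
  rw [← Pi.single_smul, smul_eq_mul, mul_one]

lemma clm_decomp (ℓ : Vec m →L[ℝ] ℝ) (a : Vec m) :
    ℓ a = ∑ μ, a μ * ℓ (Pi.single μ 1) := by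
  conv_lhs => rw [vec_decomp a]
  rw [map_sum]
  simp [smul_eq_mul]

lemma pair_decomp (a b : Vec m) :
    ((a, b) : Vec m × Vec m)
      = (∑ μ, a μ • ((Pi.single μ 1 : Vec m), (0 : Vec m)))
        + ∑ μ, b μ • ((0 : Vec m), (Pi.single μ 1 : Vec m)) := by
  ext i
  · simp only [Prod.fst_add, Prod.fst_sum, Prod.smul_fst, smul_zero, Finset.sum_apply,
      Pi.add_apply, Pi.smul_apply, Pi.zero_apply, smul_eq_mul, mul_zero]
    have := congrFun (vec_decomp a) i
    simpa using this
  · simp only [Prod.snd_add, Prod.snd_sum, Prod.smul_snd, smul_zero, Finset.sum_apply,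
      Pi.add_apply, Pi.smul_apply, Pi.zero_apply, smul_eq_mul, mul_zero]
    have := congrFun (vec_decomp b) i
    simpa using this

lemma clm_decomp_pair (ℓ : (Vec m × Vec m) →L[ℝ] ℝ) (a b : Vec m) :
    ℓ (a, b) = (∑ μ, a μ * ℓ (Pi.single μ 1, 0)) + ∑ μ, b μ * ℓ (0, Pi.single μ 1) := by
  conv_lhs => rw [pair_decomp a b]
  rw [map_add, map_sum, map_sum]
  congr 1
  · refine Finset.sum_congr rfl fun μ _ => ?_
    rw [show (a μ • ((Pi.single μ 1 : Vec m), (0 : Vec m)))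
        = a μ • ((Pi.single μ 1 : Vec m), (0 : Vec m)) from rfl, map_smul, smul_eq_mul]
  · refine Finset.sum_congr rfl fun μ _ => ?_
    rw [map_smul, smul_eq_mul]

end Decomp

section Homog
variable {Ω : Set (Vec m × Vec m)}

/-- Differentiability of the v-slice. -/
lemma SOn.diff_snd (hΩ : IsOpen Ω) {f : Vec m → Vec m → ℝ} (hf : SOn Ω f)
    {x v : Vec m} (hp : (x, v) ∈ Ω) : DifferentiableAt ℝ (f x) v := by
  have h := (SOn.diffAt hΩ hf hp).hasFDerivAt.comp v (hasFDerivAt_prodMk_right x v)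
  exact h.differentiableAt

lemma SOn.diff_fst (hΩ : IsOpen Ω) {f : Vec m → Vec m → ℝ} (hf : SOn Ω f)
    {x v : Vec m} (hp : (x, v) ∈ Ω) : DifferentiableAt ℝ (fun y => f y v) x := by
  have h := (SOn.diffAt hΩ hf hp).hasFDerivAt.comp x (hasFDerivAt_prodMk_left (𝕜 := ℝ) x v)
  exact h.differentiableAt

/-- slice is open: the set of `v` with `(x,v) ∈ Ω`. -/
lemma slice_open (hΩ : IsOpen Ω) (x : Vec m) : IsOpen {v : Vec m | (x, v) ∈ Ω} :=
  hΩ.preimage (by fun_prop : Continuous (fun v : Vec m => (x, v)))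

lemma slice_open' (hΩ : IsOpen Ω) (v : Vec m) : IsOpen {x : Vec m | (x, v) ∈ Ω} :=
  hΩ.preimage (by fun_prop : Continuous (fun x : Vec m => (x, v)))

/-- Homogeneity descends through `pdv` (one step). -/
lemma homog_step (hΩ : IsOpen Ω)
    (hcone : ∀ p ∈ Ω, ∀ s : ℝ, 0 < s → (p.1, s • p.2) ∈ Ω)
    {f : Vec m → Vec m → ℝ} (hf : SOn Ω f) (d : ℕ)
    (hhom : ∀ p ∈ Ω, ∀ s : ℝ, 0 < s → f p.1 (s • p.2) = s ^ d * f p.1 p.2)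
    (i : Fin m) : ∀ p ∈ Ω, ∀ s : ℝ, 0 < s →
      s * pdv f i p.1 (s • p.2) = s ^ d * pdv f i p.1 p.2 := by
  rintro ⟨x, v⟩ hp s hs
  have hsv : (x, s • v) ∈ Ω := hcone (x, v) hp s hs
  -- the two functions agree near v
  have heq : (fun v' => f x (s • v')) =ᶠ[nhds v] (fun v' => s ^ d * f x v') := by
    filter_upwards [(slice_open hΩ x).mem_nhds hp] with v' hv'
    exact hhom (x, v') hv' s hs
  have h1 : HasFDerivAt (fun v' => f x (s • v'))
      ((fderiv ℝ (f x) (s • v)).comp (s • ContinuousLinearMap.id ℝ (Vec m))) v := by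
    have hsc : HasFDerivAt (fun v' : Vec m => s • v')
        (s • ContinuousLinearMap.id ℝ (Vec m)) v :=
      (ContinuousLinearMap.hasFDerivAt _ : HasFDerivAt
        ((s • ContinuousLinearMap.id ℝ (Vec m)) : Vec m →L[ℝ] Vec m) _ v)
    exact ((hf.diff_snd hΩ hsv).hasFDerivAt).comp v hsc
  have h2 : fderiv ℝ (fun v' => f x (s • v')) v = fderiv ℝ (fun v' => s ^ d * f x v') v :=
    heq.fderiv_eq
  have h3 : fderiv ℝ (fun v' => s ^ d * f x v') v = s ^ d • fderiv ℝ (f x) v :=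
    fderiv_const_mul (hf.diff_snd hΩ hp) _
  have := congrArg (fun ℓ : Vec m →L[ℝ] ℝ => ℓ (Pi.single i 1)) (h1.fderiv.symm.trans (h2.trans h3))
  simp only [ContinuousLinearMap.coe_comp', Function.comp_apply, ContinuousLinearMap.coe_smul',
    Pi.smul_apply, ContinuousLinearMap.coe_id', id_eq, smul_eq_mul] at this
  rw [pdv, pdv, mul_comm s]
  rw [map_smul, smul_eq_mul] at this
  simpa [mul_comm] using this

/-- Euler's identity for homogeneous functions. -/
lemma euler (hΩ : IsOpen Ω)
    {f : Vec m → Vec m → ℝ} (hf : SOn Ω f) (d : ℕ)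
    (hhom : ∀ p ∈ Ω, ∀ s : ℝ, 0 < s → f p.1 (s • p.2) = s ^ d * f p.1 p.2) :
    ∀ p ∈ Ω, ∑ μ, p.2 μ * pdv f μ p.1 p.2 = d * f p.1 p.2 := by
  rintro ⟨x, v⟩ hp
  have hdiff := hf.diff_snd hΩ hp
  have hsc : HasDerivAt (fun s : ℝ => s • v) v 1 := by
    simpa using (hasDerivAt_id (1:ℝ)).smul_const v
  have h1 : HasDerivAt (fun s : ℝ => f x (s • v)) (fderiv ℝ (f x) v v) 1 := by
    have h0 : HasFDerivAt (f x) (fderiv ℝ (f x) v) ((1:ℝ) • v) := by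
      rw [one_smul]; exact hdiff.hasFDerivAt
    have := h0.comp_hasDerivAt 1 hsc
    exact this
  have heq : (fun s : ℝ => f x (s • v)) =ᶠ[nhds 1] (fun s : ℝ => s ^ d * f x v) := by
    filter_upwards [isOpen_Ioi.mem_nhds (by norm_num : (1:ℝ) ∈ Set.Ioi 0)] with s hs
    exact hhom (x, v) hp s hs
  have h2 : HasDerivAt (fun s : ℝ => s ^ d * f x v) (d * f x v) 1 := by
    have := (hasDerivAt_pow d (1:ℝ)).mul_const (f x v)
    simpa using this
  have h3 : fderiv ℝ (f x) v v = d * f x v := by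
    have := heq.deriv_eq
    rw [h1.deriv, h2.deriv] at this
    exact this
  calc ∑ μ, v μ * pdv f μ x v = fderiv ℝ (f x) v v := (clm_decomp _ v).symm
  _ = d * f x v := h3

end Homog

section GeomHomog
variable {Ω : Set (Vec m × Vec m)} {L : Vec m → Vec m → ℝ}
variable (hΩ : IsOpen Ω)
variable (hcone : ∀ p ∈ Ω, ∀ s : ℝ, 0 < s → (p.1, s • p.2) ∈ Ω)
variable (hL : SOn Ω L)
variable (hhom : ∀ p ∈ Ω, ∀ s : ℝ, 0 < s → L p.1 (s • p.2) = s ^ 2 * L p.1 p.2)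
include hΩ hcone hL hhom

lemma hom_pdvL (β : Fin m) : ∀ p ∈ Ω, ∀ s : ℝ, 0 < s →
    pdv L β p.1 (s • p.2) = s ^ 1 * pdv L β p.1 p.2 := by
  intro p hp s hs
  have h := homog_step hΩ hcone hL 2 hhom β p hp s hs
  have hs0 : s ≠ 0 := ne_of_gt hs
  field_simp at h ⊢
  nlinarith [h]

lemma hom_gmet (δ γ : Fin m) : ∀ p ∈ Ω, ∀ s : ℝ, 0 < s →
    gmet L p.1 (s • p.2) δ γ = gmet L p.1 p.2 δ γ := by
  intro p hp s hs
  have h := homog_step hΩ hcone (SOn.pdv' hΩ hL γ) 1 (hom_pdvL hΩ hcone hL hhom γ) δ p hp s hs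
  have hs0 : s ≠ 0 := ne_of_gt hs
  have : gmet L p.1 (s • p.2) δ γ = pdv (pdv L γ) δ p.1 (s • p.2) := rfl
  rw [this, show gmet L p.1 p.2 δ γ = pdv (pdv L γ) δ p.1 p.2 from rfl]
  exact mul_left_cancel₀ hs0 (by rw [h, pow_one])

lemma hom_gmet_mat : ∀ p ∈ Ω, ∀ s : ℝ, 0 < s →
    gmet L p.1 (s • p.2) = gmet L p.1 p.2 := by
  intro p hp s hs
  ext δ γ
  exact hom_gmet hΩ hcone hL hhom δ γ p hp s hs

lemma hom_pdx_gmet (δ γ β : Fin m) : ∀ p ∈ Ω, ∀ s : ℝ, 0 < s →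
    pdx (fun y w => gmet L y w δ γ) β p.1 (s • p.2)
      = pdx (fun y w => gmet L y w δ γ) β p.1 p.2 := by
  rintro ⟨x, v⟩ hp s hs
  have heq : (fun y => gmet L y (s • v) δ γ) =ᶠ[nhds x] (fun y => gmet L y v δ γ) := by
    filter_upwards [(slice_open' hΩ v).mem_nhds hp] with y hy
    exact hom_gmet hΩ hcone hL hhom δ γ (y, v) hy s hs
  show fderiv ℝ (fun y => gmet L y (s • v) δ γ) x _ = fderiv ℝ (fun y => gmet L y v δ γ) x _
  rw [heq.fderiv_eq]

lemma hom_ginv (α δ : Fin m) : ∀ p ∈ Ω, ∀ s : ℝ, 0 < s →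
    ginv L p.1 (s • p.2) α δ = ginv L p.1 p.2 α δ := by
  intro p hp s hs
  unfold ginv
  rw [hom_gmet_mat hΩ hcone hL hhom p hp s hs]

lemma hom_spray (α : Fin m) : ∀ p ∈ Ω, ∀ s : ℝ, 0 < s →
    spray L α p.1 (s • p.2) = s ^ 2 * spray L α p.1 p.2 := by
  rintro ⟨x, v⟩ hp s hs
  show spray L α x (s • v) = s ^ 2 * spray L α x v
  unfold spray
  have key : ∀ δ : Fin m, ginv L x (s • v) α δ *
      (∑ β, ∑ γ,
        (pdx (fun y w => gmet L y w δ γ) β x (s • v)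
          + pdx (fun y w => gmet L y w δ β) γ x (s • v)
          - pdx (fun y w => gmet L y w β γ) δ x (s • v)) * (s • v) β * (s • v) γ)
      = s ^ 2 * (ginv L x v α δ *
      (∑ β, ∑ γ,
        (pdx (fun y w => gmet L y w δ γ) β x v
          + pdx (fun y w => gmet L y w δ β) γ x v
          - pdx (fun y w => gmet L y w β γ) δ x v) * v β * v γ)) := by
    intro δ
    rw [hom_ginv hΩ hcone hL hhom α δ (x, v) hp s hs]
    have inner : (∑ β, ∑ γ,
        (pdx (fun y w => gmet L y w δ γ) β x (s • v)
          + pdx (fun y w => gmet L y w δ β) γ x (s • v)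
          - pdx (fun y w => gmet L y w β γ) δ x (s • v)) * (s • v) β * (s • v) γ)
        = s ^ 2 * ∑ β, ∑ γ,
        (pdx (fun y w => gmet L y w δ γ) β x v
          + pdx (fun y w => gmet L y w δ β) γ x v
          - pdx (fun y w => gmet L y w β γ) δ x v) * v β * v γ := by
      rw [Finset.mul_sum]
      refine Finset.sum_congr rfl fun β _ => ?_
      rw [Finset.mul_sum]
      refine Finset.sum_congr rfl fun γ _ => ?_
      rw [hom_pdx_gmet hΩ hcone hL hhom δ γ β (x, v) hp s hs,
        hom_pdx_gmet hΩ hcone hL hhom δ β γ (x, v) hp s hs,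
        hom_pdx_gmet hΩ hcone hL hhom β γ δ (x, v) hp s hs]
      simp only [Pi.smul_apply, smul_eq_mul]
      ring
    rw [inner]; ring
  rw [Finset.sum_congr rfl (fun δ _ => key δ), ← Finset.mul_sum]
  ring

variable (hdet : ∀ p ∈ Ω, (gmet L p.1 p.2).det ≠ 0)
include hdet

lemma hom_nConn (α μ : Fin m) : ∀ p ∈ Ω, ∀ s : ℝ, 0 < s →
    nConn L α μ p.1 (s • p.2) = s ^ 1 * nConn L α μ p.1 p.2 := by
  intro p hp s hs
  have h := homog_step hΩ hcone (sspray hΩ hL hdet α) 2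
    (hom_spray hΩ hcone hL hhom α) μ p hp s hs
  have hs0 : s ≠ 0 := ne_of_gt hs
  show pdv (spray L α) μ p.1 (s • p.2) = s ^ 1 * pdv (spray L α) μ p.1 p.2
  have h2 : s * pdv (spray L α) μ p.1 (s • p.2) = s * (s ^ 1 * pdv (spray L α) μ p.1 p.2) := by
    rw [h]; ring
  exact mul_left_cancel₀ hs0 h2

lemma euler_spray (α : Fin m) : ∀ p ∈ Ω,
    ∑ μ, p.2 μ * nConn L α μ p.1 p.2 = 2 * spray L α p.1 p.2 := by
  intro p hp
  have := euler hΩ (sspray hΩ hL hdet α) 2 (hom_spray hΩ hcone hL hhom α) p hp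
  simpa [nConn] using this

lemma euler_nConn (α μ : Fin m) : ∀ p ∈ Ω,
    ∑ ρ, p.2 ρ * pdv (nConn L α μ) ρ p.1 p.2 = nConn L α μ p.1 p.2 := by
  intro p hp
  have := euler hΩ (snConn hΩ hL hdet α μ) 1 (hom_nConn hΩ hcone hL hhom hdet α μ) p hp
  simpa using this

/-- `∑_μ v^μ ∂_x^β N^α_μ = 2 ∂_x^β G^α` -/
lemma contract_pdx (α β : Fin m) : ∀ p ∈ Ω,
    ∑ μ, p.2 μ * pdx (nConn L α μ) β p.1 p.2 = 2 * pdx (spray L α) β p.1 p.2 := by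
  rintro ⟨x, v⟩ hp
  have heq : (fun y => ∑ μ, v μ * nConn L α μ y v) =ᶠ[nhds x]
      (fun y => 2 * spray L α y v) := by
    filter_upwards [(slice_open' hΩ v).mem_nhds hp] with y hy
    exact euler_spray hΩ hcone hL hhom hdet α (y, v) hy
  have hdiffN : ∀ μ : Fin m, DifferentiableAt ℝ (fun y => nConn L α μ y v) x :=
    fun μ => SOn.diff_fst hΩ (snConn hΩ hL hdet α μ) hp
  have h1 : fderiv ℝ (fun y => ∑ μ, v μ * nConn L α μ y v) x
      = fderiv ℝ (fun y => 2 * spray L α y v) x := heq.fderiv_eq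
  have h2 : fderiv ℝ (fun y => ∑ μ : Fin m, v μ * nConn L α μ y v) x (Pi.single β 1)
      = ∑ μ : Fin m, v μ * pdx (nConn L α μ) β x v := by
    have hd : HasFDerivAt (fun y => ∑ μ : Fin m, v μ * nConn L α μ y v)
        (∑ μ : Fin m, v μ • fderiv ℝ (fun y => nConn L α μ y v) x) x := by
      apply HasFDerivAt.fun_sum
      intro μ _
      exact ((hdiffN μ).hasFDerivAt).const_smul (v μ) |>.congr_fderiv rfl
    rw [hd.fderiv]
    simp only [ContinuousLinearMap.coe_sum', Finset.sum_apply, ContinuousLinearMap.coe_smul',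
      Pi.smul_apply, smul_eq_mul]
    rfl
  have h3 : fderiv ℝ (fun y => 2 * spray L α y v) x (Pi.single β 1)
      = 2 * pdx (spray L α) β x v := by
    rw [fderiv_const_mul (SOn.diff_fst hΩ (sspray hΩ hL hdet α) hp)]
    rfl
  show ∑ μ : Fin m, v μ * pdx (nConn L α μ) β x v = 2 * pdx (spray L α) β x v
  rw [← h2, h1, h3]

lemma SOn_contDiffAt_snd {f : Vec m → Vec m → ℝ} (hf : SOn Ω f) {x v : Vec m}
    (hp : (x, v) ∈ Ω) : ContDiffAt ℝ ∞ (f x) v := by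
  have h1 : ContDiffAt ℝ ∞ (fun w : Vec m => (x, w)) v :=
    (contDiff_const.prodMk contDiff_id).contDiffAt
  exact (SOn.contDiffAt' hΩ hf hp).comp v h1

lemma pdv_pdv_eq_snd_fderiv {f : Vec m → Vec m → ℝ} (hf : SOn Ω f) {x v : Vec m}
    (hp : (x, v) ∈ Ω) (μ ν : Fin m) :
    pdv (pdv f μ) ν x v
      = fderiv ℝ (fderiv ℝ (f x)) v (Pi.single ν 1) (Pi.single μ 1) := by
  have hg : ContDiffAt ℝ ∞ (f x) v := SOn_contDiffAt_snd hΩ hcone hL hhom hdet hf hp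
  have hd : DifferentiableAt ℝ (fderiv ℝ (f x)) v := by
    have := hg.fderiv_right (m := ∞) (by norm_num)
    exact this.differentiableAt (by norm_num)
  have hcomp : HasFDerivAt (fun v' => fderiv ℝ (f x) v' (Pi.single μ 1))
      ((ContinuousLinearMap.apply ℝ ℝ (Pi.single μ 1 : Vec m)).comp
        (fderiv ℝ (fderiv ℝ (f x)) v)) v :=
    ((ContinuousLinearMap.apply ℝ ℝ (Pi.single μ 1 : Vec m)).hasFDerivAt).comp v hd.hasFDerivAt
  show fderiv ℝ (fun v' => fderiv ℝ (f x) v' (Pi.single μ 1)) v (Pi.single ν 1) = _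
  rw [hcomp.fderiv]
  rfl

lemma pdv_nConn_symm (α μ ν : Fin m) : ∀ p ∈ Ω,
    pdv (nConn L α μ) ν p.1 p.2 = pdv (nConn L α ν) μ p.1 p.2 := by
  rintro ⟨x, v⟩ hp
  have hS : SOn Ω (spray L α) := sspray hΩ hL hdet α
  have hg : ContDiffAt ℝ ∞ (spray L α x) v := SOn_contDiffAt_snd hΩ hcone hL hhom hdet hS hp
  have hsymm : IsSymmSndFDerivAt ℝ (spray L α x) v :=
    hg.isSymmSndFDerivAt (by
      rw [minSmoothness_of_isRCLikeNormedField]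
      rw [show ((2 : WithTop ℕ∞)) = ((2 : ℕ∞) : WithTop ℕ∞) from rfl]
      exact WithTop.coe_le_coe.mpr le_top)
  show pdv (pdv (spray L α) μ) ν x v = pdv (pdv (spray L α) ν) μ x v
  rw [pdv_pdv_eq_snd_fderiv hΩ hcone hL hhom hdet hS hp,
    pdv_pdv_eq_snd_fderiv hΩ hcone hL hhom hdet hS hp]
  exact hsymm _ _

end GeomHomog
section CurvId
variable {Ω : Set (Vec m × Vec m)} {L : Vec m → Vec m → ℝ}
variable (hΩ : IsOpen Ω)
variable (hcone : ∀ p ∈ Ω, ∀ s : ℝ, 0 < s → (p.1, s • p.2) ∈ Ω)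
variable (hL : SOn Ω L)
variable (hhom : ∀ p ∈ Ω, ∀ s : ℝ, 0 < s → L p.1 (s • p.2) = s ^ 2 * L p.1 p.2)
variable (hdet : ∀ p ∈ Ω, (gmet L p.1 p.2).det ≠ 0)
include hΩ hcone hL hhom hdet

lemma curv_contract (α β : Fin m) : ∀ p ∈ Ω,
    ∑ μ, curv (nConn L) α β μ p.1 p.2 * p.2 μ
      = 2 * pdx (spray L α) β p.1 p.2
        - ∑ ν, nConn L ν β p.1 p.2 * nConn L α ν p.1 p.2
        - ∑ μ, p.2 μ * pdx (nConn L α β) μ p.1 p.2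
        + 2 * ∑ ν, spray L ν p.1 p.2 * pdv (nConn L α β) ν p.1 p.2 := by
  rintro ⟨x, v⟩ hp
  show ∑ μ, curv (nConn L) α β μ x v * v μ = _
  have expand : ∀ μ : Fin m, curv (nConn L) α β μ x v * v μ
      = v μ * pdx (nConn L α μ) β x v
        - (∑ ν, nConn L ν β x v * (pdv (nConn L α μ) ν x v * v μ))
        - v μ * pdx (nConn L α β) μ x v
        + (∑ ν, nConn L ν μ x v * v μ * pdv (nConn L α β) ν x v) := by
    intro μ
    unfold curv hderiv
    rw [sub_mul, sub_mul, sub_mul, Finset.sum_mul, Finset.sum_mul]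
    have e1 : ∑ ν, nConn L ν β x v * pdv (nConn L α μ) ν x v * v μ
        = ∑ ν, nConn L ν β x v * (pdv (nConn L α μ) ν x v * v μ) :=
      Finset.sum_congr rfl fun ν _ => by ring
    have e2 : ∑ ν, nConn L ν μ x v * pdv (nConn L α β) ν x v * v μ
        = ∑ ν, nConn L ν μ x v * v μ * pdv (nConn L α β) ν x v :=
      Finset.sum_congr rfl fun ν _ => by ring
    rw [e1, e2]
    ring
  rw [Finset.sum_congr rfl fun μ _ => expand μ]
  rw [Finset.sum_add_distrib, Finset.sum_sub_distrib, Finset.sum_sub_distrib]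
  have S1 : ∑ μ, v μ * pdx (nConn L α μ) β x v = 2 * pdx (spray L α) β x v :=
    contract_pdx hΩ hcone hL hhom hdet α β (x, v) hp
  have S2 : ∑ μ, (∑ ν, nConn L ν β x v * (pdv (nConn L α μ) ν x v * v μ))
      = ∑ ν, nConn L ν β x v * nConn L α ν x v := by
    rw [Finset.sum_comm]
    refine Finset.sum_congr rfl fun ν _ => ?_
    rw [← Finset.mul_sum]
    congr 1
    calc ∑ μ, pdv (nConn L α μ) ν x v * v μ
        = ∑ μ, v μ * pdv (nConn L α ν) μ x v := by
          refine Finset.sum_congr rfl fun μ _ => ?_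
          rw [pdv_nConn_symm hΩ hcone hL hhom hdet α μ ν (x, v) hp]
          ring
      _ = nConn L α ν x v := euler_nConn hΩ hcone hL hhom hdet α ν (x, v) hp
  have S4 : ∑ μ, (∑ ν, nConn L ν μ x v * v μ * pdv (nConn L α β) ν x v)
      = 2 * ∑ ν, spray L ν x v * pdv (nConn L α β) ν x v := by
    rw [Finset.sum_comm, Finset.mul_sum]
    refine Finset.sum_congr rfl fun ν _ => ?_
    rw [show ∑ μ, nConn L ν μ x v * v μ * pdv (nConn L α β) ν x v
      = (∑ μ, v μ * nConn L ν μ x v) * pdv (nConn L α β) ν x v from by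
        rw [Finset.sum_mul]; exact Finset.sum_congr rfl fun μ _ => by ring]
    rw [euler_spray hΩ hcone hL hhom hdet ν (x, v) hp]
    ring
  rw [S1, S2, S4]

end CurvId

section CurveCalc

/-- generic: directional fderiv of a smooth function is smooth on an open set -/
lemma fderiv_apply_contDiffOn {E : Type*} [NormedAddCommGroup E] [NormedSpace ℝ E]
    {U : Set E} (hU : IsOpen U) {g : E → ℝ} (hg : ContDiffOn ℝ ∞ g U) (w : E) :
    ContDiffOn ℝ ∞ (fun p => fderiv ℝ g p w) U := by
  have h := ((contDiffOn_infty_iff_fderiv_of_isOpen hU).1 hg).2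
  exact h.clm_apply contDiffOn_const

def D1 (g : ℝ × ℝ → ℝ) (p : ℝ × ℝ) : ℝ := fderiv ℝ g p (1, 0)
def D2 (g : ℝ × ℝ → ℝ) (p : ℝ × ℝ) : ℝ := fderiv ℝ g p (0, 1)

variable {U : Set (ℝ × ℝ)} (hU : IsOpen U)
include hU

lemma D1_contDiffOn {g : ℝ × ℝ → ℝ} (hg : ContDiffOn ℝ ∞ g U) :
    ContDiffOn ℝ ∞ (D1 g) U := fderiv_apply_contDiffOn hU hg _
lemma D2_contDiffOn {g : ℝ × ℝ → ℝ} (hg : ContDiffOn ℝ ∞ g U) :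
    ContDiffOn ℝ ∞ (D2 g) U := fderiv_apply_contDiffOn hU hg _

lemma diffAt_of_contDiffOn {g : ℝ × ℝ → ℝ} (hg : ContDiffOn ℝ ∞ g U) {p : ℝ × ℝ}
    (hp : p ∈ U) : DifferentiableAt ℝ g p :=
  ((hg.contDiffAt (hU.mem_nhds hp)).differentiableAt (by norm_num))

lemma hasDeriv1 {g : ℝ × ℝ → ℝ} (hg : ContDiffOn ℝ ∞ g U) {t s : ℝ}
    (hp : (t, s) ∈ U) : HasDerivAt (fun τ => g (τ, s)) (D1 g (t, s)) t := by
  have hc : HasDerivAt (fun τ : ℝ => (τ, s)) ((1 : ℝ), (0 : ℝ)) t :=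
    (hasDerivAt_id t).prodMk (hasDerivAt_const t s)
  exact (diffAt_of_contDiffOn hU hg hp).hasFDerivAt.comp_hasDerivAt t hc

lemma hasDeriv2 {g : ℝ × ℝ → ℝ} (hg : ContDiffOn ℝ ∞ g U) {t s : ℝ}
    (hp : (t, s) ∈ U) : HasDerivAt (fun σ => g (t, σ)) (D2 g (t, s)) s := by
  have hc : HasDerivAt (fun σ : ℝ => (t, σ)) ((0 : ℝ), (1 : ℝ)) s :=
    (hasDerivAt_const s t).prodMk (hasDerivAt_id s)
  exact (diffAt_of_contDiffOn hU hg hp).hasFDerivAt.comp_hasDerivAt s hc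

lemma D_swap {g : ℝ × ℝ → ℝ} (hg : ContDiffOn ℝ ∞ g U) {p : ℝ × ℝ} (hp : p ∈ U) :
    D1 (D2 g) p = D2 (D1 g) p := by
  have hgat : ContDiffAt ℝ ∞ g p := hg.contDiffAt (hU.mem_nhds hp)
  have hd : DifferentiableAt ℝ (fderiv ℝ g) p := by
    have := hgat.fderiv_right (m := ∞) (by norm_num)
    exact this.differentiableAt (by norm_num)
  have hsymm : IsSymmSndFDerivAt ℝ g p :=
    hgat.isSymmSndFDerivAt (by
      rw [minSmoothness_of_isRCLikeNormedField]
      rw [show ((2 : WithTop ℕ∞)) = ((2 : ℕ∞) : WithTop ℕ∞) from rfl]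
      exact WithTop.coe_le_coe.mpr le_top)
  have key : ∀ w u : ℝ × ℝ, fderiv ℝ (fun q => fderiv ℝ g q w) p u
      = fderiv ℝ (fderiv ℝ g) p u w := by
    intro w u
    have hcomp : HasFDerivAt (fun q => fderiv ℝ g q w)
        ((ContinuousLinearMap.apply ℝ ℝ w).comp (fderiv ℝ (fderiv ℝ g) p)) p :=
      ((ContinuousLinearMap.apply ℝ ℝ w).hasFDerivAt).comp p hd.hasFDerivAt
    rw [hcomp.fderiv]; rfl
  show fderiv ℝ (fun q => fderiv ℝ g q (0,1)) p (1,0)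
    = fderiv ℝ (fun q => fderiv ℝ g q (1,0)) p (0,1)
  rw [key, key]
  exact hsymm _ _

omit hU in
/-- chain rule along a curve through a smooth two-argument function -/
lemma CR {Ω : Set (Vec m × Vec m)} (hΩ : IsOpen Ω) {f : Vec m → Vec m → ℝ}
    (hf : SOn Ω f) {a b : ℝ → Vec m} {a' b' : Vec m} {t : ℝ}
    (ha : ∀ i, HasDerivAt (fun τ => a τ i) (a' i) t)
    (hb : ∀ i, HasDerivAt (fun τ => b τ i) (b' i) t)
    (hp : (a t, b t) ∈ Ω) :
    HasDerivAt (fun τ => f (a τ) (b τ))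
      ((∑ μ, pdx f μ (a t) (b t) * a' μ) + ∑ μ, pdv f μ (a t) (b t) * b' μ) t := by
  have hab : HasDerivAt (fun τ => ((a τ, b τ) : Vec m × Vec m)) (a', b') t :=
    (hasDerivAt_pi.2 ha).prodMk (hasDerivAt_pi.2 hb)
  have hF := (SOn.diffAt hΩ hf hp).hasFDerivAt
  have h := hF.comp_hasDerivAt t hab
  have hval : fderiv ℝ (unc f) (a t, b t) (a', b')
      = (∑ μ, pdx f μ (a t) (b t) * a' μ) + ∑ μ, pdv f μ (a t) (b t) * b' μ := by
    rw [clm_decomp_pair]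
    congr 1
    · exact Finset.sum_congr rfl fun μ _ => by
        rw [← pdx_eq_fderiv f μ (SOn.diffAt hΩ hf hp)]; ring
    · exact Finset.sum_congr rfl fun μ _ => by
        rw [← pdv_eq_fderiv f μ (SOn.diffAt hΩ hf hp)]; ring
  rw [← hval]
  exact h

end CurveCalc

section Assemble

lemma assemble {m : ℕ} (α : Fin m) (A : ℝ) (J J' vv G pG : Fin m → ℝ)
    (NN : Fin m → Fin m → ℝ) (pxN pvN : Fin m → Fin m → ℝ) (Cv : Fin m → ℝ)
    (hA : A + 2 * ((∑ μ, pG μ * J μ) + ∑ μ, NN α μ * J' μ) = 0)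
    (hC : ∀ β, Cv β = 2 * pG β - (∑ ν, NN ν β * NN α ν) - (∑ ρ, vv ρ * pxN β ρ)
      + 2 * ∑ ν, G ν * pvN β ν) :
    A + (∑ μ, (((∑ ρ, pxN μ ρ * vv ρ) + ∑ ρ, pvN μ ρ * (-(2 * G ρ))) * J μ
          + NN α μ * J' μ))
      + (∑ μ, NN α μ * (J' μ + ∑ ν, NN μ ν * J ν))
      + (∑ β, Cv β * J β) = 0 := by
  have e1 : ∑ μ, (((∑ ρ, pxN μ ρ * vv ρ) + ∑ ρ, pvN μ ρ * (-(2 * G ρ))) * J μ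
        + NN α μ * J' μ)
      = ((∑ μ, (∑ ρ, pxN μ ρ * vv ρ) * J μ)
        + (∑ μ, (∑ ρ, pvN μ ρ * (-(2 * G ρ))) * J μ))
        + ∑ μ, NN α μ * J' μ := by
    rw [← Finset.sum_add_distrib, ← Finset.sum_add_distrib]
    exact Finset.sum_congr rfl fun μ _ => by ring
  have e2 : ∑ μ, NN α μ * (J' μ + ∑ ν, NN μ ν * J ν)
      = (∑ μ, NN α μ * J' μ) + ∑ μ, NN α μ * ∑ ν, NN μ ν * J ν := by
    rw [← Finset.sum_add_distrib]
    exact Finset.sum_congr rfl fun μ _ => by ring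
  have e3 : ∑ β, Cv β * J β
      = ((2 * ∑ β, pG β * J β) - (∑ β, (∑ ν, NN ν β * NN α ν) * J β)
        - (∑ β, (∑ ρ, vv ρ * pxN β ρ) * J β))
        + 2 * ∑ β, (∑ ν, G ν * pvN β ν) * J β := by
    have h1 : ∑ β, Cv β * J β
        = ∑ β, ((2 * (pG β * J β) - (∑ ν, NN ν β * NN α ν) * J β
          - (∑ ρ, vv ρ * pxN β ρ) * J β) + 2 * ((∑ ν, G ν * pvN β ν) * J β)) :=
      Finset.sum_congr rfl fun β _ => by rw [hC β]; ring
    rw [h1, Finset.sum_add_distrib, Finset.sum_sub_distrib, Finset.sum_sub_distrib,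
      ← Finset.mul_sum, ← Finset.mul_sum]
  have d1 : ∑ μ, NN α μ * ∑ ν, NN μ ν * J ν = ∑ β, (∑ ν, NN ν β * NN α ν) * J β := by
    calc ∑ μ, NN α μ * ∑ ν, NN μ ν * J ν
        = ∑ μ, ∑ ν, NN α μ * (NN μ ν * J ν) :=
          Finset.sum_congr rfl fun μ _ => Finset.mul_sum _ _ _
      _ = ∑ ν, ∑ μ, NN α μ * (NN μ ν * J ν) := Finset.sum_comm
      _ = ∑ β, (∑ ν, NN ν β * NN α ν) * J β := by
          refine Finset.sum_congr rfl fun β _ => ?_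
          rw [Finset.sum_mul]
          exact Finset.sum_congr rfl fun ν _ => by ring
  have d2 : ∑ μ, (∑ ρ, pxN μ ρ * vv ρ) * J μ = ∑ β, (∑ ρ, vv ρ * pxN β ρ) * J β := by
    refine Finset.sum_congr rfl fun β _ => ?_
    congr 1
    exact Finset.sum_congr rfl fun ρ _ => by ring
  have d3 : ∑ μ, (∑ ρ, pvN μ ρ * (-(2 * G ρ))) * J μ
      = (-2) * ∑ β, (∑ ν, G ν * pvN β ν) * J β := by
    rw [Finset.mul_sum]
    refine Finset.sum_congr rfl fun β _ => ?_
    have : (∑ ρ, pvN β ρ * (-(2 * G ρ))) = (-2) * ∑ ν, G ν * pvN β ν := by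
      rw [Finset.mul_sum]
      exact Finset.sum_congr rfl fun ρ _ => by ring
    rw [this]; ring
  rw [e1, e2, e3, d1, d2, d3]
  linarith [hA]

end Assemble

set_option maxHeartbeats 2000000 in
/-- Proposition (Jacobi equation, Eq. (cmo)): for a geodesic variation `x(t,s)`,
the variation field `J = ∂x/∂s|_{s=0}` satisfies `D̃_γ̇ D̃_γ̇ J + R_γ̇(J) = 0`. -/
theorem statement3 {m : ℕ} (hm : 2 ≤ m)
    (Ω : Set (Vec m × Vec m)) (hΩopen : IsOpen Ω) (hΩne : Ω.Nonempty)
    (hΩslit : ∀ p ∈ Ω, p.2 ≠ 0)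
    (hΩcone : ∀ p ∈ Ω, ∀ s : ℝ, 0 < s → (p.1, s • p.2) ∈ Ω)
    (L : Vec m → Vec m → ℝ)
    (hLsmooth : ContDiffOn ℝ (⊤ : ℕ∞) (fun p : Vec m × Vec m => L p.1 p.2) Ω)
    (hLhom : ∀ p ∈ Ω, ∀ s : ℝ, 0 < s → L p.1 (s • p.2) = s ^ 2 * L p.1 p.2)
    (hLinv : ∀ p ∈ Ω, IsUnit (gmet L p.1 p.2).det)
    (I : Set ℝ) (hIopen : IsOpen I) (hIconn : I.OrdConnected)
    (ε : ℝ) (hε : 0 < ε)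
    (x : ℝ → ℝ → Vec m)
    (hxsmooth : ContDiffOn ℝ (⊤ : ℕ∞) (fun p : ℝ × ℝ => x p.1 p.2) (I ×ˢ Set.Ioo (-ε) ε))
    (hxΩ : ∀ t ∈ I, ∀ s ∈ Set.Ioo (-ε) ε,
      (x t s, fun α => deriv (fun τ => x τ s α) t) ∈ Ω)
    (hgeo : ∀ t ∈ I, ∀ s ∈ Set.Ioo (-ε) ε, ∀ α,
      deriv (fun τ => deriv (fun σ => x σ s α) τ) t
        + 2 * spray L α (x t s) (fun β => deriv (fun τ => x τ s β) t) = 0) :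
    ∀ t ∈ I, ∀ α,
      DtilC L (fun τ => x τ 0)
          (DtilC L (fun τ => x τ 0) (fun τ β => deriv (fun σ => x τ σ β) 0)) t α
        + ∑ β, ∑ μ, curv (nConn L) α β μ (x t 0) (velC (fun τ => x τ 0) t)
            * deriv (fun σ => x t σ β) 0 * velC (fun τ => x τ 0) t μ = 0 := by
  intro t ht α
  -- basic setup
  have hL : SOn Ω L := hLsmooth.of_le (by simp)
  have hdet : ∀ p ∈ Ω, (gmet L p.1 p.2).det ≠ 0 := fun p hp =>
    IsUnit.ne_zero (by simpa using hLinv p hp)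
  set U : Set (ℝ × ℝ) := I ×ˢ Set.Ioo (-ε) ε with hUdef
  have hU : IsOpen U := hIopen.prod isOpen_Ioo
  have hX : ContDiffOn ℝ ∞ (fun p : ℝ × ℝ => x p.1 p.2) U := hxsmooth.of_le (by simp)
  have hXc : ∀ β : Fin m, ContDiffOn ℝ ∞ (fun p : ℝ × ℝ => x p.1 p.2 β) U :=
    contDiffOn_pi.mp hX
  have h0ε : (0 : ℝ) ∈ Set.Ioo (-ε) ε := ⟨by linarith, hε⟩
  have hmem : ∀ {τ σ : ℝ}, τ ∈ I → σ ∈ Set.Ioo (-ε) ε → ((τ, σ) : ℝ × ℝ) ∈ U :=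
    fun hτ hσ => Set.mk_mem_prod hτ hσ
  -- velocity identification
  have hvel : ∀ {τ σ : ℝ}, ((τ, σ) : ℝ × ℝ) ∈ U → ∀ β,
      deriv (fun τ' => x τ' σ β) τ = D1 (fun p : ℝ × ℝ => x p.1 p.2 β) (τ, σ) :=
    fun hp β => (hasDeriv1 hU (hXc β) hp).deriv
  -- Ω membership in D1 form
  have hΩ' : ∀ {τ σ : ℝ}, ((τ, σ) : ℝ × ℝ) ∈ U →
      ((x τ σ, fun ρ => D1 (fun p : ℝ × ℝ => x p.1 p.2 ρ) (τ, σ)) : Vec m × Vec m) ∈ Ω := by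
    intro τ σ hp
    have h := hxΩ τ hp.1 σ hp.2
    have : (fun ρ => deriv (fun τ' => x τ' σ ρ) τ)
        = fun ρ => D1 (fun p : ℝ × ℝ => x p.1 p.2 ρ) (τ, σ) := funext fun ρ => hvel hp ρ
    rwa [this] at h
  -- geodesic equation in D1 form
  have hgeoD : ∀ {τ σ : ℝ}, ((τ, σ) : ℝ × ℝ) ∈ U → ∀ β,
      D1 (D1 (fun p : ℝ × ℝ => x p.1 p.2 β)) (τ, σ)
        + 2 * spray L β (x τ σ) (fun ρ => D1 (fun p : ℝ × ℝ => x p.1 p.2 ρ) (τ, σ)) = 0 := by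
    intro τ σ hp β
    have h := hgeo τ hp.1 σ hp.2 β
    have hv : (fun ρ => deriv (fun τ' => x τ' σ ρ) τ)
        = fun ρ => D1 (fun p : ℝ × ℝ => x p.1 p.2 ρ) (τ, σ) := funext fun ρ => hvel hp ρ
    have heq : (fun τ' => deriv (fun σ' => x σ' σ β) τ')
        =ᶠ[nhds τ] fun τ' => D1 (fun p : ℝ × ℝ => x p.1 p.2 β) (τ', σ) := by
      filter_upwards [hIopen.mem_nhds hp.1] with τ' hτ'
      exact hvel (hmem hτ' hp.2) β
    have hd2 : deriv (fun τ' => deriv (fun σ' => x σ' σ β) τ') τ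
        = D1 (D1 (fun p : ℝ × ℝ => x p.1 p.2 β)) (τ, σ) := by
      rw [heq.deriv_eq]
      exact (hasDeriv1 hU (D1_contDiffOn hU (hXc β)) hp).deriv
    rw [hd2, hv] at h
    exact h
  -- s-derivative identification
  have hJd : ∀ {τ : ℝ}, τ ∈ I → ∀ β,
      deriv (fun σ => x τ σ β) 0 = D2 (fun p : ℝ × ℝ => x p.1 p.2 β) (τ, 0) :=
    fun hτ β => (hasDeriv2 hU (hXc β) (hmem hτ h0ε)) |>.deriv
  have hp0c : ((t, 0) : ℝ × ℝ) ∈ U := hmem ht h0ε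
  have hp0 : ((x t 0, fun ρ => D1 (fun p : ℝ × ℝ => x p.1 p.2 ρ) (t, 0)) : Vec m × Vec m) ∈ Ω :=
    hΩ' hp0c
  -- differentiate the geodesic equation in s at (t,0)
  have hvar : D2 (D1 (D1 (fun p : ℝ × ℝ => x p.1 p.2 α))) (t, 0)
      + 2 * ((∑ μ, pdx (spray L α) μ (x t 0)
            (fun ρ => D1 (fun p : ℝ × ℝ => x p.1 p.2 ρ) (t, 0))
            * D2 (fun p : ℝ × ℝ => x p.1 p.2 μ) (t, 0))
        + ∑ μ, pdv (spray L α) μ (x t 0)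
            (fun ρ => D1 (fun p : ℝ × ℝ => x p.1 p.2 ρ) (t, 0))
            * D2 (D1 (fun p : ℝ × ℝ => x p.1 p.2 μ)) (t, 0)) = 0 := by
    have hF0 : (fun σ => D1 (D1 (fun p : ℝ × ℝ => x p.1 p.2 α)) (t, σ)
        + 2 * spray L α (x t σ) (fun ρ => D1 (fun p : ℝ × ℝ => x p.1 p.2 ρ) (t, σ)))
        =ᶠ[nhds 0] fun _ => (0 : ℝ) := by
      filter_upwards [isOpen_Ioo.mem_nhds h0ε] with σ hσ
      exact hgeoD (hmem ht hσ) α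
    have hder1 : HasDerivAt (fun σ => D1 (D1 (fun p : ℝ × ℝ => x p.1 p.2 α)) (t, σ))
        (D2 (D1 (D1 (fun p : ℝ × ℝ => x p.1 p.2 α))) (t, 0)) 0 :=
      hasDeriv2 hU (D1_contDiffOn hU (D1_contDiffOn hU (hXc α))) hp0c
    have hder2 : HasDerivAt
        (fun σ => spray L α (x t σ) (fun ρ => D1 (fun p : ℝ × ℝ => x p.1 p.2 ρ) (t, σ)))
        ((∑ μ, pdx (spray L α) μ (x t 0)
            (fun ρ => D1 (fun p : ℝ × ℝ => x p.1 p.2 ρ) (t, 0))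
            * D2 (fun p : ℝ × ℝ => x p.1 p.2 μ) (t, 0))
          + ∑ μ, pdv (spray L α) μ (x t 0)
            (fun ρ => D1 (fun p : ℝ × ℝ => x p.1 p.2 ρ) (t, 0))
            * D2 (D1 (fun p : ℝ × ℝ => x p.1 p.2 μ)) (t, 0)) 0 := by
      exact CR hΩopen (sspray hΩopen hL hdet α)
        (fun β => hasDeriv2 hU (hXc β) hp0c)
        (fun ρ => hasDeriv2 hU (D1_contDiffOn hU (hXc ρ)) hp0c)
        hp0
    have htot := hder1.fun_add (hder2.const_mul 2)
    have h0 : deriv (fun σ => D1 (D1 (fun p : ℝ × ℝ => x p.1 p.2 α)) (t, σ)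
        + 2 * spray L α (x t σ) (fun ρ => D1 (fun p : ℝ × ℝ => x p.1 p.2 ρ) (t, σ))) 0
        = 0 := by
      rw [hF0.deriv_eq, deriv_const]
    rw [htot.deriv] at h0
    exact h0
  -- swap identities
  have hswap2 : ∀ μ : Fin m, D2 (D1 (fun p : ℝ × ℝ => x p.1 p.2 μ)) (t, 0)
      = D1 (D2 (fun p : ℝ × ℝ => x p.1 p.2 μ)) (t, 0) :=
    fun μ => (D_swap hU (hXc μ) hp0c).symm
  have hswap3 : D2 (D1 (D1 (fun p : ℝ × ℝ => x p.1 p.2 α))) (t, 0)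
      = D1 (D1 (D2 (fun p : ℝ × ℝ => x p.1 p.2 α))) (t, 0) := by
    have h1 : D1 (D2 (D1 (fun p : ℝ × ℝ => x p.1 p.2 α))) (t, 0)
        = D2 (D1 (D1 (fun p : ℝ × ℝ => x p.1 p.2 α))) (t, 0) :=
      D_swap hU (D1_contDiffOn hU (hXc α)) hp0c
    have heq : (D2 (D1 (fun p : ℝ × ℝ => x p.1 p.2 α)))
        =ᶠ[nhds ((t, 0) : ℝ × ℝ)] (D1 (D2 (fun p : ℝ × ℝ => x p.1 p.2 α))) := by
      filter_upwards [hU.mem_nhds hp0c] with q hq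
      exact (D_swap hU (hXc α) hq).symm
    have h2 : D1 (D2 (D1 (fun p : ℝ × ℝ => x p.1 p.2 α))) (t, 0)
        = D1 (D1 (D2 (fun p : ℝ × ℝ => x p.1 p.2 α))) (t, 0) := by
      show fderiv ℝ _ _ ((1 : ℝ), (0 : ℝ)) = fderiv ℝ _ _ ((1 : ℝ), (0 : ℝ))
      rw [heq.symm.fderiv_eq]
    rw [← h1, h2]
  -- velocity of the central geodesic
  have hvelCI : ∀ τ ∈ I, velC (fun τ' => x τ' 0) τ
      = fun ρ => D1 (fun p : ℝ × ℝ => x p.1 p.2 ρ) (τ, 0) :=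
    fun τ hτ => funext fun ρ => hvel (hmem hτ h0ε) ρ
  -- first covariant derivative of J, explicitly
  have hW : ∀ τ ∈ I, ∀ β : Fin m,
      DtilC L (fun τ' => x τ' 0) (fun τ' β' => deriv (fun σ => x τ' σ β') 0) τ β
        = D1 (D2 (fun p : ℝ × ℝ => x p.1 p.2 β)) (τ, 0)
          + ∑ μ, nConn L β μ (x τ 0) (fun ρ => D1 (fun p : ℝ × ℝ => x p.1 p.2 ρ) (τ, 0))
            * D2 (fun p : ℝ × ℝ => x p.1 p.2 μ) (τ, 0) := by
    intro τ hτ β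
    show deriv (fun τ' => deriv (fun σ => x τ' σ β) 0) τ
        + ∑ μ, nConn L β μ (x τ 0) (velC (fun τ' => x τ' 0) τ)
          * deriv (fun σ => x τ σ μ) 0 = _
    have heq : (fun τ' => deriv (fun σ => x τ' σ β) 0)
        =ᶠ[nhds τ] fun τ' => D2 (fun p : ℝ × ℝ => x p.1 p.2 β) (τ', 0) := by
      filter_upwards [hIopen.mem_nhds hτ] with τ' hτ'
      exact hJd hτ' β
    have hd : deriv (fun τ' => deriv (fun σ => x τ' σ β) 0) τ
        = D1 (D2 (fun p : ℝ × ℝ => x p.1 p.2 β)) (τ, 0) := by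
      rw [heq.deriv_eq]
      exact (hasDeriv1 hU (D2_contDiffOn hU (hXc β)) (hmem hτ h0ε)).deriv
    rw [hd, hvelCI τ hτ]
    congr 1
    exact Finset.sum_congr rfl fun μ _ => by rw [hJd hτ μ]
  -- abbreviations (as plain terms)
  have hD1D1 : ∀ ρ : Fin m, D1 (D1 (fun p : ℝ × ℝ => x p.1 p.2 ρ)) (t, 0)
      = -(2 * spray L ρ (x t 0) (fun ρ' => D1 (fun p : ℝ × ℝ => x p.1 p.2 ρ') (t, 0))) :=
    fun ρ => by linarith [hgeoD hp0c ρ]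
  -- derivative of the first covariant derivative
  have dW : deriv (fun τ => DtilC L (fun τ' => x τ' 0)
        (fun τ' β' => deriv (fun σ => x τ' σ β') 0) τ α) t
      = D1 (D1 (D2 (fun p : ℝ × ℝ => x p.1 p.2 α))) (t, 0)
        + ∑ μ, (((∑ ρ, pdx (nConn L α μ) ρ (x t 0)
              (fun ρ' => D1 (fun p : ℝ × ℝ => x p.1 p.2 ρ') (t, 0))
              * D1 (fun p : ℝ × ℝ => x p.1 p.2 ρ) (t, 0))
            + ∑ ρ, pdv (nConn L α μ) ρ (x t 0)
              (fun ρ' => D1 (fun p : ℝ × ℝ => x p.1 p.2 ρ') (t, 0))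
              * D1 (D1 (fun p : ℝ × ℝ => x p.1 p.2 ρ)) (t, 0))
            * D2 (fun p : ℝ × ℝ => x p.1 p.2 μ) (t, 0)
          + nConn L α μ (x t 0) (fun ρ' => D1 (fun p : ℝ × ℝ => x p.1 p.2 ρ') (t, 0))
            * D1 (D2 (fun p : ℝ × ℝ => x p.1 p.2 μ)) (t, 0)) := by
    have heqW : (fun τ => DtilC L (fun τ' => x τ' 0)
          (fun τ' β' => deriv (fun σ => x τ' σ β') 0) τ α)
        =ᶠ[nhds t] fun τ => D1 (D2 (fun p : ℝ × ℝ => x p.1 p.2 α)) (τ, 0)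
          + ∑ μ, nConn L α μ (x τ 0) (fun ρ => D1 (fun p : ℝ × ℝ => x p.1 p.2 ρ) (τ, 0))
            * D2 (fun p : ℝ × ℝ => x p.1 p.2 μ) (τ, 0) := by
      filter_upwards [hIopen.mem_nhds ht] with τ hτ
      exact hW τ hτ α
    rw [heqW.deriv_eq]
    have T1 : HasDerivAt (fun τ => D1 (D2 (fun p : ℝ × ℝ => x p.1 p.2 α)) (τ, 0))
        (D1 (D1 (D2 (fun p : ℝ × ℝ => x p.1 p.2 α))) (t, 0)) t :=
      hasDeriv1 hU (D1_contDiffOn hU (D2_contDiffOn hU (hXc α))) hp0c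
    have T2 : ∀ μ : Fin m, HasDerivAt (fun τ =>
        nConn L α μ (x τ 0) (fun ρ => D1 (fun p : ℝ × ℝ => x p.1 p.2 ρ) (τ, 0))
          * D2 (fun p : ℝ × ℝ => x p.1 p.2 μ) (τ, 0))
        (((∑ ρ, pdx (nConn L α μ) ρ (x t 0)
              (fun ρ' => D1 (fun p : ℝ × ℝ => x p.1 p.2 ρ') (t, 0))
              * D1 (fun p : ℝ × ℝ => x p.1 p.2 ρ) (t, 0))
            + ∑ ρ, pdv (nConn L α μ) ρ (x t 0)
              (fun ρ' => D1 (fun p : ℝ × ℝ => x p.1 p.2 ρ') (t, 0))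
              * D1 (D1 (fun p : ℝ × ℝ => x p.1 p.2 ρ)) (t, 0))
            * D2 (fun p : ℝ × ℝ => x p.1 p.2 μ) (t, 0)
          + nConn L α μ (x t 0) (fun ρ' => D1 (fun p : ℝ × ℝ => x p.1 p.2 ρ') (t, 0))
            * D1 (D2 (fun p : ℝ × ℝ => x p.1 p.2 μ)) (t, 0)) t := by
      intro μ
      have hCRμ := CR hΩopen (snConn hΩopen hL hdet α μ)
        (fun i => hasDeriv1 hU (hXc i) hp0c)
        (fun ρ => hasDeriv1 hU (D1_contDiffOn hU (hXc ρ)) hp0c)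
        hp0
      exact hCRμ.mul (hasDeriv1 hU (D2_contDiffOn hU (hXc μ)) hp0c)
    exact (T1.fun_add (HasDerivAt.fun_sum fun μ _ => T2 μ)).deriv
  -- the differentiated geodesic equation, with derivatives swapped
  have hA : D1 (D1 (D2 (fun p : ℝ × ℝ => x p.1 p.2 α))) (t, 0)
      + 2 * ((∑ μ, pdx (spray L α) μ (x t 0)
            (fun ρ' => D1 (fun p : ℝ × ℝ => x p.1 p.2 ρ') (t, 0))
            * D2 (fun p : ℝ × ℝ => x p.1 p.2 μ) (t, 0))
        + ∑ μ, nConn L α μ (x t 0)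
            (fun ρ' => D1 (fun p : ℝ × ℝ => x p.1 p.2 ρ') (t, 0))
            * D1 (D2 (fun p : ℝ × ℝ => x p.1 p.2 μ)) (t, 0)) = 0 := by
    rw [hswap3] at hvar
    have hs : ∑ μ, pdv (spray L α) μ (x t 0)
          (fun ρ' => D1 (fun p : ℝ × ℝ => x p.1 p.2 ρ') (t, 0))
          * D2 (D1 (fun p : ℝ × ℝ => x p.1 p.2 μ)) (t, 0)
        = ∑ μ, pdv (spray L α) μ (x t 0)
          (fun ρ' => D1 (fun p : ℝ × ℝ => x p.1 p.2 ρ') (t, 0))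
          * D1 (D2 (fun p : ℝ × ℝ => x p.1 p.2 μ)) (t, 0) :=
      Finset.sum_congr rfl fun μ _ => by rw [hswap2 μ]
    rw [hs] at hvar
    exact hvar
  -- unfold the outer covariant derivative
  have hgoal : DtilC L (fun τ => x τ 0)
        (DtilC L (fun τ => x τ 0) (fun τ β => deriv (fun σ => x τ σ β) 0)) t α
      = deriv (fun τ => DtilC L (fun τ' => x τ' 0)
          (fun τ' β' => deriv (fun σ => x τ' σ β') 0) τ α) t
        + ∑ μ, nConn L α μ (x t 0) (velC (fun τ => x τ 0) t)
          * DtilC L (fun τ => x τ 0) (fun τ β => deriv (fun σ => x τ σ β) 0) t μ := rfl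
  rw [hgoal, dW, hvelCI t ht]
  have hsum2 : ∑ μ, nConn L α μ (x t 0)
        (fun ρ' => D1 (fun p : ℝ × ℝ => x p.1 p.2 ρ') (t, 0))
        * DtilC L (fun τ => x τ 0) (fun τ β => deriv (fun σ => x τ σ β) 0) t μ
      = ∑ μ, nConn L α μ (x t 0)
        (fun ρ' => D1 (fun p : ℝ × ℝ => x p.1 p.2 ρ') (t, 0))
        * (D1 (D2 (fun p : ℝ × ℝ => x p.1 p.2 μ)) (t, 0)
          + ∑ ν, nConn L μ ν (x t 0)
            (fun ρ' => D1 (fun p : ℝ × ℝ => x p.1 p.2 ρ') (t, 0))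
            * D2 (fun p : ℝ × ℝ => x p.1 p.2 ν) (t, 0)) :=
    Finset.sum_congr rfl fun μ _ => by rw [hW t ht μ]
  rw [hsum2]
  have hcurv : ∑ β, ∑ μ, curv (nConn L) α β μ (x t 0)
        (fun ρ' => D1 (fun p : ℝ × ℝ => x p.1 p.2 ρ') (t, 0))
        * deriv (fun σ => x t σ β) 0
        * D1 (fun p : ℝ × ℝ => x p.1 p.2 μ) (t, 0)
      = ∑ β, (∑ μ, curv (nConn L) α β μ (x t 0)
          (fun ρ' => D1 (fun p : ℝ × ℝ => x p.1 p.2 ρ') (t, 0))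
          * D1 (fun p : ℝ × ℝ => x p.1 p.2 μ) (t, 0))
        * D2 (fun p : ℝ × ℝ => x p.1 p.2 β) (t, 0) := by
    refine Finset.sum_congr rfl fun β _ => ?_
    rw [hJd ht β, Finset.sum_mul]
    exact Finset.sum_congr rfl fun μ _ => by ring
  rw [hcurv]
  have hDsub : ∑ μ, (((∑ ρ, pdx (nConn L α μ) ρ (x t 0)
            (fun ρ' => D1 (fun p : ℝ × ℝ => x p.1 p.2 ρ') (t, 0))
            * D1 (fun p : ℝ × ℝ => x p.1 p.2 ρ) (t, 0))
          + ∑ ρ, pdv (nConn L α μ) ρ (x t 0)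
            (fun ρ' => D1 (fun p : ℝ × ℝ => x p.1 p.2 ρ') (t, 0))
            * D1 (D1 (fun p : ℝ × ℝ => x p.1 p.2 ρ)) (t, 0))
          * D2 (fun p : ℝ × ℝ => x p.1 p.2 μ) (t, 0)
        + nConn L α μ (x t 0) (fun ρ' => D1 (fun p : ℝ × ℝ => x p.1 p.2 ρ') (t, 0))
          * D1 (D2 (fun p : ℝ × ℝ => x p.1 p.2 μ)) (t, 0))
      = ∑ μ, (((∑ ρ, pdx (nConn L α μ) ρ (x t 0)
            (fun ρ' => D1 (fun p : ℝ × ℝ => x p.1 p.2 ρ') (t, 0))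
            * D1 (fun p : ℝ × ℝ => x p.1 p.2 ρ) (t, 0))
          + ∑ ρ, pdv (nConn L α μ) ρ (x t 0)
            (fun ρ' => D1 (fun p : ℝ × ℝ => x p.1 p.2 ρ') (t, 0))
            * (-(2 * spray L ρ (x t 0)
              (fun ρ' => D1 (fun p : ℝ × ℝ => x p.1 p.2 ρ') (t, 0)))))
          * D2 (fun p : ℝ × ℝ => x p.1 p.2 μ) (t, 0)
        + nConn L α μ (x t 0) (fun ρ' => D1 (fun p : ℝ × ℝ => x p.1 p.2 ρ') (t, 0))
          * D1 (D2 (fun p : ℝ × ℝ => x p.1 p.2 μ)) (t, 0)) := by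
    refine Finset.sum_congr rfl fun μ _ => ?_
    have : ∑ ρ, pdv (nConn L α μ) ρ (x t 0)
          (fun ρ' => D1 (fun p : ℝ × ℝ => x p.1 p.2 ρ') (t, 0))
          * D1 (D1 (fun p : ℝ × ℝ => x p.1 p.2 ρ)) (t, 0)
        = ∑ ρ, pdv (nConn L α μ) ρ (x t 0)
          (fun ρ' => D1 (fun p : ℝ × ℝ => x p.1 p.2 ρ') (t, 0))
          * (-(2 * spray L ρ (x t 0)
            (fun ρ' => D1 (fun p : ℝ × ℝ => x p.1 p.2 ρ') (t, 0)))) :=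
      Finset.sum_congr rfl fun ρ _ => by rw [hD1D1 ρ]
    rw [this]
  rw [hDsub]
  exact assemble α
    (D1 (D1 (D2 (fun p : ℝ × ℝ => x p.1 p.2 α))) (t, 0))
    (fun μ => D2 (fun p : ℝ × ℝ => x p.1 p.2 μ) (t, 0))
    (fun μ => D1 (D2 (fun p : ℝ × ℝ => x p.1 p.2 μ)) (t, 0))
    (fun ρ => D1 (fun p : ℝ × ℝ => x p.1 p.2 ρ) (t, 0))
    (fun ρ => spray L ρ (x t 0) (fun ρ' => D1 (fun p : ℝ × ℝ => x p.1 p.2 ρ') (t, 0)))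
    (fun β => pdx (spray L α) β (x t 0)
      (fun ρ' => D1 (fun p : ℝ × ℝ => x p.1 p.2 ρ') (t, 0)))
    (fun a b => nConn L a b (x t 0)
      (fun ρ' => D1 (fun p : ℝ × ℝ => x p.1 p.2 ρ') (t, 0)))
    (fun β ρ => pdx (nConn L α β) ρ (x t 0)
      (fun ρ' => D1 (fun p : ℝ × ℝ => x p.1 p.2 ρ') (t, 0)))
    (fun β ρ => pdv (nConn L α β) ρ (x t 0)
      (fun ρ' => D1 (fun p : ℝ × ℝ => x p.1 p.2 ρ') (t, 0)))
    (fun β => ∑ μ, curv (nConn L) α β μ (x t 0)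
      (fun ρ' => D1 (fun p : ℝ × ℝ => x p.1 p.2 ρ') (t, 0))
      * D1 (fun p : ℝ × ℝ => x p.1 p.2 μ) (t, 0))
    hA
    (fun β => curv_contract hΩopen hΩcone hL hLhom hdet α β _ hp0)
end
end

section
/- Let L be a pseudo-Finsler Lagrangian on Ω with spray nonlinear connection N and nonlinear curvature R^μ{}_{αβ}. Then the nonlinear curvature annihilates the support vector in its first (value) slot after lowering with the metric: g_{σμ}(x,v) v^σ R^μ{}_{αβ}(x,v) = 0 for all α, β and all (x,v) ∈ Ω. -/
open scoped BigOperators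

noncomputable section

variable {m : ℕ}

namespace Aux

def U2 (f : Vec m → Vec m → ℝ) : Vec m × Vec m → ℝ := fun q => f q.1 q.2

theorem hasFDerivAt_slice_v {f : Vec m → Vec m → ℝ} {q : Vec m × Vec m}
    (h : DifferentiableAt ℝ (U2 f) q) :
    HasFDerivAt (f q.1) ((fderiv ℝ (U2 f) q).comp (ContinuousLinearMap.inr ℝ (Vec m) (Vec m)))
      q.2 := by
  have := h.hasFDerivAt.comp q.2 (hasFDerivAt_prodMk_right (𝕜 := ℝ) q.1 q.2)
  exact this

theorem hasFDerivAt_slice_x {f : Vec m → Vec m → ℝ} {q : Vec m × Vec m}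
    (h : DifferentiableAt ℝ (U2 f) q) :
    HasFDerivAt (fun y => f y q.2)
      ((fderiv ℝ (U2 f) q).comp (ContinuousLinearMap.inl ℝ (Vec m) (Vec m))) q.1 := by
  have := h.hasFDerivAt.comp q.1 (hasFDerivAt_prodMk_left (𝕜 := ℝ) q.1 q.2)
  exact this

theorem diffAt_slice_v {f : Vec m → Vec m → ℝ} {q : Vec m × Vec m}
    (h : DifferentiableAt ℝ (U2 f) q) : DifferentiableAt ℝ (f q.1) q.2 :=
  (hasFDerivAt_slice_v h).differentiableAt

theorem diffAt_slice_x {f : Vec m → Vec m → ℝ} {q : Vec m × Vec m}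
    (h : DifferentiableAt ℝ (U2 f) q) : DifferentiableAt ℝ (fun y => f y q.2) q.1 :=
  (hasFDerivAt_slice_x h).differentiableAt

theorem pdv_eq {f : Vec m → Vec m → ℝ} {q : Vec m × Vec m}
    (h : DifferentiableAt ℝ (U2 f) q) (i : Fin m) :
    pdv f i q.1 q.2 = fderiv ℝ (U2 f) q (0, Pi.single i 1) := by
  rw [pdv, (hasFDerivAt_slice_v h).fderiv]; rfl

theorem pdx_eq {f : Vec m → Vec m → ℝ} {q : Vec m × Vec m}
    (h : DifferentiableAt ℝ (U2 f) q) (i : Fin m) :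
    pdx f i q.1 q.2 = fderiv ℝ (U2 f) q (Pi.single i 1, 0) := by
  rw [pdx, (hasFDerivAt_slice_x h).fderiv]; rfl

/-- `SA f q`: the two-variable version of `f` is smooth at `q`. -/
def SA (f : Vec m → Vec m → ℝ) (q : Vec m × Vec m) : Prop := ContDiffAt ℝ (⊤ : ℕ∞) (U2 f) q

theorem SA.diffAt {f : Vec m → Vec m → ℝ} {q} (h : SA f q) : DifferentiableAt ℝ (U2 f) q :=
  h.differentiableAt (by simp)

theorem SA.ev_diff {f : Vec m → Vec m → ℝ} {q} (h : SA f q) :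
    ∀ᶠ q' in nhds q, DifferentiableAt ℝ (U2 f) q' := by
  filter_upwards [(ContDiffAt.of_le h (show ((1 : ℕ∞) : WithTop ℕ∞) ≤ ((⊤ : ℕ∞) : WithTop ℕ∞) from by exact_mod_cast (le_top : (1 : ℕ∞) ≤ ⊤))).eventually (by simp)] with y hy
  exact hy.differentiableAt (by simp)

theorem SA.pdv {f : Vec m → Vec m → ℝ} {q} (h : SA f q) (i : Fin m) : SA (pdv f i) q := by
  have h1 : ContDiffAt ℝ (⊤ : ℕ∞) (fderiv ℝ (U2 f)) q := h.fderiv_right (by simp)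
  have h2 : ContDiffAt ℝ (⊤ : ℕ∞) (fun q' => fderiv ℝ (U2 f) q' (0, Pi.single i 1)) q :=
    (ContinuousLinearMap.apply ℝ ℝ ((0, Pi.single i 1) : Vec m × Vec m)).contDiff.contDiffAt.comp
      q h1
  exact h2.congr_of_eventuallyEq <| by
    filter_upwards [h.ev_diff] with q' hq' using pdv_eq hq' i

theorem SA.pdx {f : Vec m → Vec m → ℝ} {q} (h : SA f q) (i : Fin m) : SA (pdx f i) q := by
  have h1 : ContDiffAt ℝ (⊤ : ℕ∞) (fderiv ℝ (U2 f)) q := h.fderiv_right (by simp)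
  have h2 : ContDiffAt ℝ (⊤ : ℕ∞) (fun q' => fderiv ℝ (U2 f) q' (Pi.single i 1, 0)) q :=
    (ContinuousLinearMap.apply ℝ ℝ ((Pi.single i 1, 0) : Vec m × Vec m)).contDiff.contDiffAt.comp
      q h1
  exact h2.congr_of_eventuallyEq <| by
    filter_upwards [h.ev_diff] with q' hq' using pdx_eq hq' i

end Aux

namespace Aux

theorem SA.mul {f g : Vec m → Vec m → ℝ} {q} (hf : SA f q) (hg : SA g q) :
    SA (fun x v => f x v * g x v) q := ContDiffAt.mul hf hg

theorem SA.add {f g : Vec m → Vec m → ℝ} {q} (hf : SA f q) (hg : SA g q) :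
    SA (fun x v => f x v + g x v) q := ContDiffAt.add hf hg

theorem SA.sub {f g : Vec m → Vec m → ℝ} {q} (hf : SA f q) (hg : SA g q) :
    SA (fun x v => f x v - g x v) q := ContDiffAt.sub hf hg

theorem SA.const {q : Vec m × Vec m} (c : ℝ) : SA (fun _ _ => c) q := contDiffAt_const

theorem SA.constMul {f : Vec m → Vec m → ℝ} {q} (c : ℝ) (hf : SA f q) :
    SA (fun x v => c * f x v) q := (SA.const c).mul hf

theorem SA.sum {ι : Type*} {s : Finset ι} {f : ι → Vec m → Vec m → ℝ} {q}
    (hf : ∀ i ∈ s, SA (f i) q) : SA (fun x v => ∑ i ∈ s, f i x v) q :=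
  ContDiffAt.sum hf

theorem SA.coordV {q : Vec m × Vec m} (β : Fin m) : SA (fun _ v => v β) q := by
  have : U2 (fun (_ v : Vec m) => v β) = (fun w : Vec m => w β) ∘ Prod.snd := rfl
  rw [SA, this]
  exact ((ContinuousLinearMap.proj β : Vec m →L[ℝ] ℝ).contDiff.comp contDiff_snd).contDiffAt

theorem SA.inv {f : Vec m → Vec m → ℝ} {q} (hf : SA f q) (h0 : f q.1 q.2 ≠ 0) :
    SA (fun x v => (f x v)⁻¹) q := ContDiffAt.inv hf h0

theorem SA.det {M : Fin m → Fin m → Vec m → Vec m → ℝ} {q}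
    (h : ∀ i j, SA (M i j) q) :
    SA (fun x v => Matrix.det (Matrix.of fun i j => M i j x v)) q := by
  have : (fun x v => Matrix.det (Matrix.of fun i j => M i j x v)) =
      fun x v => ∑ σ : Equiv.Perm (Fin m),
        ((Equiv.Perm.sign σ : ℤ) : ℝ) * ∏ i, M (σ i) i x v := by
    funext x v
    rw [Matrix.det_apply]
    simp [Units.smul_def, zsmul_eq_mul]
  rw [this]
  refine SA.sum fun σ _ => SA.constMul _ ?_
  have : U2 (fun x v => ∏ i, M (σ i) i x v) = fun q' => ∏ i, M (σ i) i q'.1 q'.2 := rfl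
  rw [SA, this]
  exact contDiffAt_prod fun i _ => h (σ i) i

/-! pointwise calculus rules -/

theorem pdv_congr {f g : Vec m → Vec m → ℝ} {q : Vec m × Vec m} {Ω : Set (Vec m × Vec m)}
    (hΩ : IsOpen Ω) (hq : q ∈ Ω) (he : ∀ q' ∈ Ω, f q'.1 q'.2 = g q'.1 q'.2) (i : Fin m) :
    pdv f i q.1 q.2 = pdv g i q.1 q.2 := by
  unfold pdv
  have : (f q.1) =ᶠ[nhds q.2] (g q.1) := by
    have hcont : ContinuousAt (fun w => (q.1, w)) q.2 := by fun_prop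
    have : ∀ᶠ w in nhds q.2, (q.1, w) ∈ Ω := hcont (hΩ.mem_nhds (by simpa using hq))
    filter_upwards [this] with w hw using he (q.1, w) hw
  rw [this.fderiv_eq]

theorem pdx_congr {f g : Vec m → Vec m → ℝ} {q : Vec m × Vec m} {Ω : Set (Vec m × Vec m)}
    (hΩ : IsOpen Ω) (hq : q ∈ Ω) (he : ∀ q' ∈ Ω, f q'.1 q'.2 = g q'.1 q'.2) (i : Fin m) :
    pdx f i q.1 q.2 = pdx g i q.1 q.2 := by
  unfold pdx
  have : (fun y => f y q.2) =ᶠ[nhds q.1] (fun y => g y q.2) := by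
    have hcont : ContinuousAt (fun y => (y, q.2)) q.1 := by fun_prop
    have : ∀ᶠ y in nhds q.1, (y, q.2) ∈ Ω := hcont (hΩ.mem_nhds (by simpa using hq))
    filter_upwards [this] with y hy using he (y, q.2) hy
  rw [this.fderiv_eq]

theorem pdv_mul {f g : Vec m → Vec m → ℝ} {q : Vec m × Vec m}
    (hf : DifferentiableAt ℝ (U2 f) q) (hg : DifferentiableAt ℝ (U2 g) q) (i : Fin m) :
    pdv (fun x v => f x v * g x v) i q.1 q.2 =
      pdv f i q.1 q.2 * g q.1 q.2 + f q.1 q.2 * pdv g i q.1 q.2 := by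
  unfold pdv
  rw [fderiv_fun_mul (diffAt_slice_v hf) (diffAt_slice_v hg)]
  simp only [ContinuousLinearMap.add_apply, ContinuousLinearMap.smul_apply, smul_eq_mul]
  ring

theorem pdx_mul {f g : Vec m → Vec m → ℝ} {q : Vec m × Vec m}
    (hf : DifferentiableAt ℝ (U2 f) q) (hg : DifferentiableAt ℝ (U2 g) q) (i : Fin m) :
    pdx (fun x v => f x v * g x v) i q.1 q.2 =
      pdx f i q.1 q.2 * g q.1 q.2 + f q.1 q.2 * pdx g i q.1 q.2 := by
  unfold pdx
  rw [fderiv_fun_mul (diffAt_slice_x hf) (diffAt_slice_x hg)]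
  simp only [ContinuousLinearMap.add_apply, ContinuousLinearMap.smul_apply, smul_eq_mul]
  ring

theorem pdv_sum {ι : Type*} {s : Finset ι} {f : ι → Vec m → Vec m → ℝ} {q : Vec m × Vec m}
    (hf : ∀ j ∈ s, DifferentiableAt ℝ (U2 (f j)) q) (i : Fin m) :
    pdv (fun x v => ∑ j ∈ s, f j x v) i q.1 q.2 = ∑ j ∈ s, pdv (f j) i q.1 q.2 := by
  unfold pdv
  rw [fderiv_fun_sum (fun j hj => diffAt_slice_v (hf j hj))]
  simp

theorem pdx_sum {ι : Type*} {s : Finset ι} {f : ι → Vec m → Vec m → ℝ} {q : Vec m × Vec m}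
    (hf : ∀ j ∈ s, DifferentiableAt ℝ (U2 (f j)) q) (i : Fin m) :
    pdx (fun x v => ∑ j ∈ s, f j x v) i q.1 q.2 = ∑ j ∈ s, pdx (f j) i q.1 q.2 := by
  unfold pdx
  rw [fderiv_fun_sum (fun j hj => diffAt_slice_x (hf j hj))]
  simp

theorem pdv_sub {f g : Vec m → Vec m → ℝ} {q : Vec m × Vec m}
    (hf : DifferentiableAt ℝ (U2 f) q) (hg : DifferentiableAt ℝ (U2 g) q) (i : Fin m) :
    pdv (fun x v => f x v - g x v) i q.1 q.2 = pdv f i q.1 q.2 - pdv g i q.1 q.2 := by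
  unfold pdv
  rw [fderiv_fun_sub (diffAt_slice_v hf) (diffAt_slice_v hg)]
  simp

theorem pdx_sub {f g : Vec m → Vec m → ℝ} {q : Vec m × Vec m}
    (hf : DifferentiableAt ℝ (U2 f) q) (hg : DifferentiableAt ℝ (U2 g) q) (i : Fin m) :
    pdx (fun x v => f x v - g x v) i q.1 q.2 = pdx f i q.1 q.2 - pdx g i q.1 q.2 := by
  unfold pdx
  rw [fderiv_fun_sub (diffAt_slice_x hf) (diffAt_slice_x hg)]
  simp

theorem pdv_constMul {f : Vec m → Vec m → ℝ} {q : Vec m × Vec m} (c : ℝ)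
    (hf : DifferentiableAt ℝ (U2 f) q) (i : Fin m) :
    pdv (fun x v => c * f x v) i q.1 q.2 = c * pdv f i q.1 q.2 := by
  unfold pdv
  rw [fderiv_const_mul (diffAt_slice_v hf)]
  simp

theorem pdv_coord {q : Vec m × Vec m} (β i : Fin m) :
    pdv (fun _ v => v β) i q.1 q.2 = if β = i then 1 else 0 := by
  unfold pdv
  have : ((fun (_ v : Vec m) => v β) q.1) = (ContinuousLinearMap.proj β : Vec m →L[ℝ] ℝ) := rfl
  rw [this, (ContinuousLinearMap.proj β : Vec m →L[ℝ] ℝ).fderiv]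
  simp [Pi.single_apply]

theorem pdx_coordV {q : Vec m × Vec m} (β i : Fin m) :
    pdx (fun _ v => v β) i q.1 q.2 = 0 := by
  unfold pdx
  rw [fderiv_fun_const]
  simp

end Aux

namespace Aux

theorem ev_slice_x {f : Vec m → Vec m → ℝ} {q : Vec m × Vec m} (h : SA f q) :
    ∀ᶠ y in nhds q.1, DifferentiableAt ℝ (U2 f) (y, q.2) := by
  have hcont : ContinuousAt (fun y : Vec m => (y, q.2)) q.1 := by fun_prop
  have := hcont.tendsto
  rw [show (q.1, q.2) = q from rfl] at this
  exact this.eventually h.ev_diff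

theorem ev_slice_v {f : Vec m → Vec m → ℝ} {q : Vec m × Vec m} (h : SA f q) :
    ∀ᶠ w in nhds q.2, DifferentiableAt ℝ (U2 f) (q.1, w) := by
  have hcont : ContinuousAt (fun w : Vec m => (q.1, w)) q.2 := by fun_prop
  have := hcont.tendsto
  rw [show (q.1, q.2) = q from rfl] at this
  exact this.eventually h.ev_diff

/-- second derivative of `U2 f` -/
def D2 (f : Vec m → Vec m → ℝ) (q : Vec m × Vec m) :
    (Vec m × Vec m) →L[ℝ] (Vec m × Vec m) →L[ℝ] ℝ :=
  fderiv ℝ (fderiv ℝ (U2 f)) q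

theorem hasFDerivAt_D2 {f : Vec m → Vec m → ℝ} {q : Vec m × Vec m} (h : SA f q) :
    HasFDerivAt (fderiv ℝ (U2 f)) (D2 f q) q :=
  ((h.fderiv_right (m := (⊤ : ℕ∞)) (by simp)).differentiableAt (by simp)).hasFDerivAt

theorem pdx_of_rep {f g : Vec m → Vec m → ℝ} {q : Vec m × Vec m} (h : SA f q)
    (w : Vec m × Vec m)
    (ev : ∀ q', DifferentiableAt ℝ (U2 f) q' → g q'.1 q'.2 = fderiv ℝ (U2 f) q' w)
    (j : Fin m) :
    pdx g j q.1 q.2 = D2 f q (Pi.single j 1, 0) w := by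
  have h1 : (fun y => g y q.2) =ᶠ[nhds q.1] (fun y => fderiv ℝ (U2 f) (y, q.2) w) := by
    filter_upwards [ev_slice_x h] with y hy using ev (y, q.2) hy
  rw [pdx, h1.fderiv_eq]
  have hinc : HasFDerivAt (fun y : Vec m => (y, q.2))
      (ContinuousLinearMap.inl ℝ (Vec m) (Vec m)) q.1 := hasFDerivAt_prodMk_left q.1 q.2
  have hcomp : HasFDerivAt (fun y : Vec m => fderiv ℝ (U2 f) (y, q.2))
      ((D2 f q).comp (ContinuousLinearMap.inl ℝ (Vec m) (Vec m))) q.1 := by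
    have := (hasFDerivAt_D2 h).comp q.1 hinc
    exact this
  have happ := hcomp.clm_apply (hasFDerivAt_const w q.1)
  rw [happ.fderiv]
  simp

theorem pdv_of_rep {f g : Vec m → Vec m → ℝ} {q : Vec m × Vec m} (h : SA f q)
    (w : Vec m × Vec m)
    (ev : ∀ q', DifferentiableAt ℝ (U2 f) q' → g q'.1 q'.2 = fderiv ℝ (U2 f) q' w)
    (i : Fin m) :
    pdv g i q.1 q.2 = D2 f q (0, Pi.single i 1) w := by
  have h1 : (g q.1) =ᶠ[nhds q.2] (fun u => fderiv ℝ (U2 f) (q.1, u) w) := by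
    filter_upwards [ev_slice_v h] with u hu using ev (q.1, u) hu
  rw [pdv, h1.fderiv_eq]
  have hinc : HasFDerivAt (fun u : Vec m => (q.1, u))
      (ContinuousLinearMap.inr ℝ (Vec m) (Vec m)) q.2 := hasFDerivAt_prodMk_right q.1 q.2
  have hcomp : HasFDerivAt (fun u : Vec m => fderiv ℝ (U2 f) (q.1, u))
      ((D2 f q).comp (ContinuousLinearMap.inr ℝ (Vec m) (Vec m))) q.2 := by
    have := (hasFDerivAt_D2 h).comp q.2 hinc
    exact this
  have happ := hcomp.clm_apply (hasFDerivAt_const w q.2)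
  rw [happ.fderiv]
  simp

theorem D2_symm {f : Vec m → Vec m → ℝ} {q : Vec m × Vec m} (h : SA f q)
    (a b : Vec m × Vec m) : D2 f q a b = D2 f q b a :=
  (ContDiffAt.isSymmSndFDerivAt h (by norm_num; exact WithTop.coe_le_coe.mpr (le_top : (2 : ℕ∞) ≤ ⊤))) a b

theorem pdx_pdv_symm {f : Vec m → Vec m → ℝ} {q : Vec m × Vec m} (h : SA f q) (i j : Fin m) :
    pdx (pdv f i) j q.1 q.2 = pdv (pdx f j) i q.1 q.2 := by
  rw [pdx_of_rep h (0, Pi.single i 1) (fun q' hq' => pdv_eq hq' i) j,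
    pdv_of_rep h (Pi.single j 1, 0) (fun q' hq' => pdx_eq hq' j) i]
  exact D2_symm h _ _

theorem pdx_pdx_symm {f : Vec m → Vec m → ℝ} {q : Vec m × Vec m} (h : SA f q) (i j : Fin m) :
    pdx (pdx f i) j q.1 q.2 = pdx (pdx f j) i q.1 q.2 := by
  rw [pdx_of_rep h (Pi.single i 1, 0) (fun q' hq' => pdx_eq hq' i) j,
    pdx_of_rep h (Pi.single j 1, 0) (fun q' hq' => pdx_eq hq' j) i]
  exact D2_symm h _ _

theorem pdv_pdv_symm {f : Vec m → Vec m → ℝ} {q : Vec m × Vec m} (h : SA f q) (i j : Fin m) :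
    pdv (pdv f i) j q.1 q.2 = pdv (pdv f j) i q.1 q.2 := by
  rw [pdv_of_rep h (0, Pi.single i 1) (fun q' hq' => pdv_eq hq' i) j,
    pdv_of_rep h (0, Pi.single j 1) (fun q' hq' => pdv_eq hq' j) i]
  exact D2_symm h _ _

end Aux

namespace Aux

theorem fderiv_apply_self {f : Vec m → Vec m → ℝ} {q : Vec m × Vec m}
    (hdiff : DifferentiableAt ℝ (f q.1) q.2) :
    fderiv ℝ (f q.1) q.2 q.2 = ∑ ν, pdv f ν q.1 q.2 * q.2 ν := by
  have hq2 : q.2 = ∑ ν, q.2 ν • (Pi.single ν (1 : ℝ) : Vec m) := by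
    have := (Finset.univ_sum_single q.2).symm
    convert this using 2 with ν
    ext j
    simp [Pi.single_apply, mul_comm]
  have h2 := congrArg (fderiv ℝ (f q.1) q.2) hq2
  rw [map_sum] at h2
  rw [h2]
  refine Finset.sum_congr rfl fun ν _ => ?_
  rw [map_smul]
  simp [pdv, mul_comm]

/-- Euler's theorem at a point of a conic set. -/
theorem euler {f : Vec m → Vec m → ℝ} {q : Vec m × Vec m} (k : ℕ)
    (hdiff : DifferentiableAt ℝ (f q.1) q.2)
    (hom : ∀ s : ℝ, 0 < s → f q.1 (s • q.2) = s ^ k * f q.1 q.2) :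
    ∑ ν, pdv f ν q.1 q.2 * q.2 ν = k * f q.1 q.2 := by
  set c := f q.1 q.2 with hc
  have h1 : (fun s : ℝ => f q.1 (s • q.2)) =ᶠ[nhds (1 : ℝ)] (fun s => s ^ k * c) := by
    filter_upwards [isOpen_Ioi.mem_nhds (by norm_num : (1 : ℝ) ∈ Set.Ioi (0 : ℝ))] with s hs
    exact hom s hs
  have h2 : HasDerivAt (fun s : ℝ => s ^ k * c) (k * c) 1 := by
    simpa using (hasDerivAt_pow k (1 : ℝ)).mul_const c
  have h3 : HasDerivAt (fun s : ℝ => f q.1 (s • q.2)) (k * c) 1 := h2.congr_of_eventuallyEq h1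
  have hin : HasDerivAt (fun s : ℝ => s • q.2) q.2 1 := by
    simpa using (hasDerivAt_id (1 : ℝ)).smul_const q.2
  have hout : HasFDerivAt (f q.1) (fderiv ℝ (f q.1) q.2) ((1 : ℝ) • q.2) := by
    rw [one_smul]; exact hdiff.hasFDerivAt
  have h4 : HasDerivAt (fun s : ℝ => f q.1 (s • q.2)) (fderiv ℝ (f q.1) q.2 q.2) 1 :=
    hout.comp_hasDerivAt 1 hin
  have := h4.unique h3
  rw [fderiv_apply_self hdiff] at this
  rw [this]

theorem hom_pdv {Ω : Set (Vec m × Vec m)} (hΩopen : IsOpen Ω)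
    (hΩcone : ∀ p ∈ Ω, ∀ s : ℝ, 0 < s → (p.1, s • p.2) ∈ Ω)
    {f : Vec m → Vec m → ℝ}
    (hSA : ∀ q ∈ Ω, SA f q)
    (hom : ∀ p ∈ Ω, ∀ s : ℝ, 0 < s → f p.1 (s • p.2) = s ^ 2 * f p.1 p.2)
    {q : Vec m × Vec m} (hq : q ∈ Ω) (s : ℝ) (hs : 0 < s) (ν : Fin m) :
    pdv f ν q.1 (s • q.2) = s * pdv f ν q.1 q.2 := by
  have hA : IsOpen {w : Vec m | (q.1, w) ∈ Ω} :=
    hΩopen.preimage (by fun_prop : Continuous fun w : Vec m => (q.1, w))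
  have hmem : q.2 ∈ {w : Vec m | (q.1, w) ∈ Ω} := by simpa using hq
  have hEv : (fun w => f q.1 (s • w)) =ᶠ[nhds q.2] (fun w => s ^ 2 * f q.1 w) := by
    filter_upwards [hA.mem_nhds hmem] with w hw
    exact hom (q.1, w) hw s hs
  have hdiff2 : DifferentiableAt ℝ (f q.1) (s • q.2) := by
    have := diffAt_slice_v (SA.diffAt (hSA (q.1, s • q.2) (hΩcone q hq s hs)))
    exact this
  have hin : HasFDerivAt (fun w : Vec m => s • w) (s • ContinuousLinearMap.id ℝ (Vec m)) q.2 :=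
    (hasFDerivAt_id q.2).const_smul s
  have hcomp : HasFDerivAt (fun w : Vec m => f q.1 (s • w))
      ((fderiv ℝ (f q.1) (s • q.2)).comp (s • ContinuousLinearMap.id ℝ (Vec m))) q.2 :=
    hdiff2.hasFDerivAt.comp q.2 hin
  have hdiff1 : DifferentiableAt ℝ (f q.1) q.2 := diffAt_slice_v (SA.diffAt (hSA q hq))
  have hr : HasFDerivAt (fun w : Vec m => s ^ 2 * f q.1 w)
      (s ^ 2 • fderiv ℝ (f q.1) q.2) q.2 := by
    exact (hdiff1.hasFDerivAt.const_smul (s ^ 2))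
  have hl : HasFDerivAt (fun w : Vec m => f q.1 (s • w))
      (s ^ 2 • fderiv ℝ (f q.1) q.2) q.2 := hr.congr_of_eventuallyEq hEv
  have hun := hl.unique hcomp
  have heval := congrArg (fun T : Vec m →L[ℝ] ℝ => T (Pi.single ν 1)) hun
  simp only [ContinuousLinearMap.smul_apply, ContinuousLinearMap.coe_comp',
    Function.comp_apply, ContinuousLinearMap.id_apply, smul_eq_mul] at heval
  have hmap : fderiv ℝ (f q.1) (s • q.2) (s • (Pi.single ν 1 : Vec m)) =
      s * fderiv ℝ (f q.1) (s • q.2) (Pi.single ν 1) := by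
    rw [map_smul, smul_eq_mul]
  rw [hmap] at heval
  have hs0 : s ≠ 0 := ne_of_gt hs
  show fderiv ℝ (f q.1) (s • q.2) (Pi.single ν 1) = s * fderiv ℝ (f q.1) q.2 (Pi.single ν 1)
  have h2 : s * (s * fderiv ℝ (f q.1) q.2 (Pi.single ν 1)) =
      s * fderiv ℝ (f q.1) (s • q.2) (Pi.single ν 1) := by
    rw [← heval]; ring
  have := mul_left_cancel₀ hs0 h2
  linarith [this]

end Aux

namespace Aux

theorem pdv_const {q : Vec m × Vec m} (c : ℝ) (i : Fin m) :
    pdv (fun _ _ => c) i q.1 q.2 = 0 := by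
  unfold pdv; rw [fderiv_fun_const]; simp

theorem pdx_const {q : Vec m × Vec m} (c : ℝ) (i : Fin m) :
    pdx (fun _ _ => c) i q.1 q.2 = 0 := by
  unfold pdx; rw [fderiv_fun_const]; simp

theorem pdx_constMul {f : Vec m → Vec m → ℝ} {q : Vec m × Vec m} (c : ℝ)
    (hf : DifferentiableAt ℝ (U2 f) q) (i : Fin m) :
    pdx (fun x v => c * f x v) i q.1 q.2 = c * pdx f i q.1 q.2 := by
  unfold pdx
  rw [fderiv_const_mul (diffAt_slice_x hf)]
  simp

structure Setup (Ω : Set (Vec m × Vec m)) (L : Vec m → Vec m → ℝ) : Prop where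
  isOpen : IsOpen Ω
  cone : ∀ p ∈ Ω, ∀ s : ℝ, 0 < s → (p.1, s • p.2) ∈ Ω
  smooth : ∀ q ∈ Ω, SA L q
  hom : ∀ p ∈ Ω, ∀ s : ℝ, 0 < s → L p.1 (s • p.2) = s ^ 2 * L p.1 p.2
  inv : ∀ p ∈ Ω, IsUnit (gmet L p.1 p.2).det

variable {Ω : Set (Vec m × Vec m)} {L : Vec m → Vec m → ℝ} {q : Vec m × Vec m}

theorem Setup.sa_ell (S : Setup Ω L) (hq : q ∈ Ω) (ν : Fin m) : SA (pdv L ν) q :=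
  (S.smooth q hq).pdv ν

theorem Setup.sa_g (S : Setup Ω L) (hq : q ∈ Ω) (α β : Fin m) :
    SA (pdv (pdv L β) α) q := ((S.smooth q hq).pdv β).pdv α

theorem Setup.sa_pdxL (S : Setup Ω L) (hq : q ∈ Ω) (β : Fin m) : SA (pdx L β) q :=
  (S.smooth q hq).pdx β

theorem Setup.sa_pdxg (S : Setup Ω L) (hq : q ∈ Ω) (δ γ β : Fin m) :
    SA (pdx (pdv (pdv L γ) δ) β) q := (S.sa_g hq δ γ).pdx β

theorem Setup.sa_detg (S : Setup Ω L) (hq : q ∈ Ω) :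
    SA (fun x v => (gmet L x v).det) q :=
  SA.det (fun i j => S.sa_g hq i j)

theorem Setup.sa_adj (S : Setup Ω L) (hq : q ∈ Ω) (α β : Fin m) :
    SA (fun x v => (gmet L x v).adjugate α β) q := by
  have hrw : (fun x v => (gmet L x v).adjugate α β) =
      fun x v => Matrix.det (Matrix.of fun i j =>
        if i = β then (Pi.single α (1 : ℝ) : Vec m) j else pdv (pdv L j) i x v) := by
    funext x v
    rw [Matrix.adjugate_apply]
    congr 1
    ext i j
    rw [Matrix.updateRow_apply]
    by_cases h : i = β <;> simp [h, gmet]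
  rw [hrw]
  refine SA.det fun i j => ?_
  by_cases h : i = β
  · simpa [h] using SA.const (q := q) ((Pi.single α (1 : ℝ) : Vec m) j)
  · simpa [h] using S.sa_g hq i j

theorem Setup.det_ne (S : Setup Ω L) (hq : q ∈ Ω) : (gmet L q.1 q.2).det ≠ 0 :=
  (S.inv q hq).ne_zero

theorem Setup.sa_ginv (S : Setup Ω L) (hq : q ∈ Ω) (α β : Fin m) :
    SA (fun x v => ginv L x v α β) q := by
  have hrw : (fun x v => ginv L x v α β) =
      fun x v => ((gmet L x v).det)⁻¹ * (gmet L x v).adjugate α β := by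
    funext x v
    rw [ginv, Matrix.inv_def, Matrix.smul_apply, Ring.inverse_eq_inv', smul_eq_mul]
  rw [hrw]
  exact ((S.sa_detg hq).inv (S.det_ne hq)).mul (S.sa_adj hq α β)

theorem Setup.sa_spray (S : Setup Ω L) (hq : q ∈ Ω) (α : Fin m) :
    SA (spray L α) q := by
  show SA (fun x v => (1/4 : ℝ) * ∑ δ, ginv L x v α δ *
    (∑ β, ∑ γ,
      (pdx (pdv (pdv L γ) δ) β x v
        + pdx (pdv (pdv L β) δ) γ x v
        - pdx (pdv (pdv L γ) β) δ x v) * v β * v γ)) q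
  refine SA.constMul _ (SA.sum fun δ _ => (S.sa_ginv hq α δ).mul
    (SA.sum fun β _ => SA.sum fun γ _ => ?_))
  exact ((((S.sa_pdxg hq δ γ β).add (S.sa_pdxg hq δ β γ)).sub
    (S.sa_pdxg hq β γ δ)).mul (SA.coordV β)).mul (SA.coordV γ)

theorem Setup.sa_N (S : Setup Ω L) (hq : q ∈ Ω) (ν μ : Fin m) :
    SA (pdv (spray L ν) μ) q := (S.sa_spray hq ν).pdv μ

end Aux

namespace Aux
variable {Ω : Set (Vec m × Vec m)} {L : Vec m → Vec m → ℝ} {q : Vec m × Vec m}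

/-- Euler, degree 2: `∑ ℓ_ν v^ν = 2 L`. -/
theorem Setup.eulerL (S : Setup Ω L) (hq : q ∈ Ω) :
    ∑ ν, pdv L ν q.1 q.2 * q.2 ν = 2 * L q.1 q.2 := by
  have := euler (f := L) 2 (diffAt_slice_v (S.smooth q hq).diffAt)
    (fun s hs => S.hom q hq s hs)
  simpa using this

/-- Euler, degree 1 for `ℓ_μ`: `∑ g_{σμ} v^σ = ℓ_μ`. -/
theorem Setup.euler1 (S : Setup Ω L) (hq : q ∈ Ω) (μ : Fin m) :
    ∑ σ, pdv (pdv L μ) σ q.1 q.2 * q.2 σ = pdv L μ q.1 q.2 := by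
  have := euler (f := pdv L μ) 1 (diffAt_slice_v (S.sa_ell hq μ).diffAt)
    (fun s hs => by
      simpa using hom_pdv S.isOpen S.cone S.smooth S.hom hq s hs μ)
  simpa using this

theorem Setup.gsym (S : Setup Ω L) (hq : q ∈ Ω) (α β : Fin m) :
    pdv (pdv L β) α q.1 q.2 = pdv (pdv L α) β q.1 q.2 :=
  pdv_pdv_symm (S.smooth q hq) β α

theorem Setup.sym_xv (S : Setup Ω L) (hq : q ∈ Ω) (ν α : Fin m) :
    pdx (pdv L ν) α q.1 q.2 = pdv (pdx L α) ν q.1 q.2 :=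
  pdx_pdv_symm (S.smooth q hq) ν α

theorem Setup.sym_xx (S : Setup Ω L) (hq : q ∈ Ω) (α β : Fin m) :
    pdx (pdx L β) α q.1 q.2 = pdx (pdx L α) β q.1 q.2 :=
  pdx_pdx_symm (S.smooth q hq) β α

/-- x-derivative of gmet symmetry. -/
theorem Setup.gsym_x (S : Setup Ω L) (hq : q ∈ Ω) (α β γ : Fin m) :
    pdx (pdv (pdv L β) α) γ q.1 q.2 = pdx (pdv (pdv L α) β) γ q.1 q.2 :=
  pdx_congr S.isOpen hq (fun q' hq' => S.gsym hq' α β) γ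

/-- (I4): `∑_σ ∂_β g_{σμ} v^σ = ∂_β ℓ_μ`. -/
theorem Setup.I4 (S : Setup Ω L) (hq : q ∈ Ω) (μ β : Fin m) :
    ∑ σ, pdx (pdv (pdv L μ) σ) β q.1 q.2 * q.2 σ = pdx (pdv L μ) β q.1 q.2 := by
  have h0 : pdx (fun x v => ∑ σ, pdv (pdv L μ) σ x v * v σ) β q.1 q.2
      = pdx (pdv L μ) β q.1 q.2 :=
    pdx_congr S.isOpen hq (fun q' hq' => S.euler1 hq' μ) β
  rw [← h0]
  rw [pdx_sum (fun σ _ => ((S.sa_g hq σ μ).mul (SA.coordV σ)).diffAt) β]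
  refine Finset.sum_congr rfl fun σ _ => ?_
  rw [pdx_mul (S.sa_g hq σ μ).diffAt (SA.coordV σ).diffAt β, pdx_coordV]
  ring

/-- (I9): `∑_ν ∂_β ℓ_ν v^ν = 2 ∂_β L`. -/
theorem Setup.I9 (S : Setup Ω L) (hq : q ∈ Ω) (β : Fin m) :
    ∑ ν, pdx (pdv L ν) β q.1 q.2 * q.2 ν = 2 * pdx L β q.1 q.2 := by
  have h0 : pdx (fun x v => ∑ ν, pdv L ν x v * v ν) β q.1 q.2
      = pdx (fun x v => 2 * L x v) β q.1 q.2 :=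
    pdx_congr S.isOpen hq (fun q' hq' => S.eulerL hq') β
  rw [pdx_constMul 2 (S.smooth q hq).diffAt β] at h0
  rw [← h0]
  rw [pdx_sum (fun ν _ => ((S.sa_ell hq ν).mul (SA.coordV ν)).diffAt) β]
  refine Finset.sum_congr rfl fun ν _ => ?_
  rw [pdx_mul (S.sa_ell hq ν).diffAt (SA.coordV ν).diffAt β, pdx_coordV]
  ring

/-- (I7): `∑_ν ℓ_ν g^{νδ} = v^δ`. -/
theorem Setup.I7 (S : Setup Ω L) (hq : q ∈ Ω) (δ : Fin m) :
    ∑ ν, pdv L ν q.1 q.2 * ginv L q.1 q.2 ν δ = q.2 δ := by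
  have h1 : ∀ ν, pdv L ν q.1 q.2 = ∑ σ, pdv (pdv L ν) σ q.1 q.2 * q.2 σ :=
    fun ν => (S.euler1 hq ν).symm
  have key : ∀ σ, ∑ ν, pdv (pdv L ν) σ q.1 q.2 * ginv L q.1 q.2 ν δ
      = if σ = δ then 1 else 0 := by
    intro σ
    have h2 := congrFun (congrFun (Matrix.mul_nonsing_inv (gmet L q.1 q.2) (S.inv q hq)) σ) δ
    rw [Matrix.mul_apply, Matrix.one_apply] at h2
    exact h2
  calc ∑ ν, pdv L ν q.1 q.2 * ginv L q.1 q.2 ν δ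
      = ∑ ν, ∑ σ, (pdv (pdv L ν) σ q.1 q.2 * ginv L q.1 q.2 ν δ) * q.2 σ := by
        refine Finset.sum_congr rfl fun ν _ => ?_
        rw [h1 ν, Finset.sum_mul]
        exact Finset.sum_congr rfl fun σ _ => by ring
    _ = ∑ σ, (∑ ν, pdv (pdv L ν) σ q.1 q.2 * ginv L q.1 q.2 ν δ) * q.2 σ := by
        rw [Finset.sum_comm]
        exact Finset.sum_congr rfl fun σ _ => (Finset.sum_mul _ _ _).symm
    _ = ∑ σ, (if σ = δ then 1 else 0) * q.2 σ := by
        exact Finset.sum_congr rfl fun σ _ => by rw [key σ]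
    _ = q.2 δ := by simp

/-- (I6'): `∑_ν g_{νμ} g^{νδ} = δ_μ^δ`. -/
theorem Setup.I6 (S : Setup Ω L) (hq : q ∈ Ω) (μ δ : Fin m) :
    ∑ ν, pdv (pdv L μ) ν q.1 q.2 * ginv L q.1 q.2 ν δ = if μ = δ then 1 else 0 := by
  have h2 := congrFun (congrFun (Matrix.mul_nonsing_inv (gmet L q.1 q.2) (S.inv q hq)) μ) δ
  rw [Matrix.mul_apply, Matrix.one_apply] at h2
  calc ∑ ν, pdv (pdv L μ) ν q.1 q.2 * ginv L q.1 q.2 ν δ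
      = ∑ ν, pdv (pdv L ν) μ q.1 q.2 * ginv L q.1 q.2 ν δ :=
        Finset.sum_congr rfl fun ν _ => by rw [S.gsym hq ν μ]
    _ = if μ = δ then 1 else 0 := h2

end Aux

namespace Aux
variable {Ω : Set (Vec m × Vec m)} {L : Vec m → Vec m → ℝ} {q : Vec m × Vec m}

theorem sum_rotate {f : Fin m → Fin m → Fin m → ℝ} :
    ∑ δ, ∑ β, ∑ γ, f δ β γ = ∑ β, ∑ γ, ∑ δ, f δ β γ := by
  rw [Finset.sum_comm]
  exact Finset.sum_congr rfl fun β _ => Finset.sum_comm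

/-- contraction of the Christoffel-type symbol `S δ` with a covector `c`. -/
theorem Setup.Scontract (S : Setup Ω L) (hq : q ∈ Ω) (c : Fin m → ℝ)
    (hc : ∀ δ, c δ = q.2 δ) :
    ∑ δ, c δ * (∑ β, ∑ γ,
        (pdx (pdv (pdv L γ) δ) β q.1 q.2 + pdx (pdv (pdv L β) δ) γ q.1 q.2
          - pdx (pdv (pdv L γ) β) δ q.1 q.2) * q.2 β * q.2 γ)
      = 2 * ∑ β, q.2 β * pdx L β q.1 q.2 := by
  have hsplit : ∀ δ, c δ * (∑ β, ∑ γ,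
      (pdx (pdv (pdv L γ) δ) β q.1 q.2 + pdx (pdv (pdv L β) δ) γ q.1 q.2
        - pdx (pdv (pdv L γ) β) δ q.1 q.2) * q.2 β * q.2 γ)
      = (∑ β, ∑ γ, pdx (pdv (pdv L γ) δ) β q.1 q.2 * q.2 β * q.2 γ * q.2 δ)
        + (∑ β, ∑ γ, pdx (pdv (pdv L β) δ) γ q.1 q.2 * q.2 β * q.2 γ * q.2 δ)
        - (∑ β, ∑ γ, pdx (pdv (pdv L γ) β) δ q.1 q.2 * q.2 β * q.2 γ * q.2 δ) := by
    intro δ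
    rw [hc δ, Finset.mul_sum]
    rw [show (∑ β, q.2 δ * ∑ γ,
        (pdx (pdv (pdv L γ) δ) β q.1 q.2 + pdx (pdv (pdv L β) δ) γ q.1 q.2
          - pdx (pdv (pdv L γ) β) δ q.1 q.2) * q.2 β * q.2 γ)
        = ∑ β, ∑ γ, (pdx (pdv (pdv L γ) δ) β q.1 q.2 * q.2 β * q.2 γ * q.2 δ
          + pdx (pdv (pdv L β) δ) γ q.1 q.2 * q.2 β * q.2 γ * q.2 δ
          - pdx (pdv (pdv L γ) β) δ q.1 q.2 * q.2 β * q.2 γ * q.2 δ) from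
      Finset.sum_congr rfl fun β _ => by
        rw [Finset.mul_sum]
        exact Finset.sum_congr rfl fun γ _ => by ring]
    simp [Finset.sum_add_distrib, Finset.sum_sub_distrib]
  rw [Finset.sum_congr rfl fun δ _ => hsplit δ]
  rw [Finset.sum_sub_distrib, Finset.sum_add_distrib]
  have Ta : (∑ δ, ∑ β, ∑ γ, pdx (pdv (pdv L γ) δ) β q.1 q.2 * q.2 β * q.2 γ * q.2 δ)
      = 2 * ∑ β, q.2 β * pdx L β q.1 q.2 := by
    rw [sum_rotate]
    have : ∀ β, ∑ γ, ∑ δ, pdx (pdv (pdv L γ) δ) β q.1 q.2 * q.2 β * q.2 γ * q.2 δ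
        = q.2 β * (2 * pdx L β q.1 q.2) := by
      intro β
      have hγ : ∀ γ, ∑ δ, pdx (pdv (pdv L γ) δ) β q.1 q.2 * q.2 β * q.2 γ * q.2 δ
          = q.2 β * q.2 γ * pdx (pdv L γ) β q.1 q.2 := by
        intro γ
        rw [← S.I4 hq γ β, Finset.mul_sum]
        exact Finset.sum_congr rfl fun δ _ => by ring
      rw [Finset.sum_congr rfl fun γ _ => hγ γ]
      rw [← S.I9 hq β, Finset.mul_sum]
      exact Finset.sum_congr rfl fun γ _ => by ring
    rw [Finset.sum_congr rfl fun β _ => this β]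
    rw [Finset.mul_sum]
    exact Finset.sum_congr rfl fun β _ => by ring
  have Tb : (∑ δ, ∑ β, ∑ γ, pdx (pdv (pdv L β) δ) γ q.1 q.2 * q.2 β * q.2 γ * q.2 δ)
      = 2 * ∑ β, q.2 β * pdx L β q.1 q.2 := by
    have hswap : ∀ δ, ∑ β, ∑ γ, pdx (pdv (pdv L β) δ) γ q.1 q.2 * q.2 β * q.2 γ * q.2 δ
        = ∑ β, ∑ γ, pdx (pdv (pdv L γ) δ) β q.1 q.2 * q.2 β * q.2 γ * q.2 δ := by
      intro δ
      rw [Finset.sum_comm]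
      exact Finset.sum_congr rfl fun β _ => Finset.sum_congr rfl fun γ _ => by ring
    rw [Finset.sum_congr rfl fun δ _ => hswap δ]
    exact Ta
  have Tc : (∑ δ, ∑ β, ∑ γ, pdx (pdv (pdv L γ) β) δ q.1 q.2 * q.2 β * q.2 γ * q.2 δ)
      = 2 * ∑ β, q.2 β * pdx L β q.1 q.2 := by
    have hδ : ∀ δ, ∑ β, ∑ γ, pdx (pdv (pdv L γ) β) δ q.1 q.2 * q.2 β * q.2 γ * q.2 δ
        = q.2 δ * (2 * pdx L δ q.1 q.2) := by
      intro δ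
      rw [Finset.sum_comm]
      have hγ : ∀ γ, ∑ β, pdx (pdv (pdv L γ) β) δ q.1 q.2 * q.2 β * q.2 γ * q.2 δ
          = q.2 γ * q.2 δ * pdx (pdv L γ) δ q.1 q.2 := by
        intro γ
        rw [← S.I4 hq γ δ, Finset.mul_sum]
        exact Finset.sum_congr rfl fun β _ => by ring
      rw [Finset.sum_congr rfl fun γ _ => hγ γ]
      rw [← S.I9 hq δ, Finset.mul_sum]
      exact Finset.sum_congr rfl fun γ _ => by ring
    rw [Finset.sum_congr rfl fun δ _ => hδ δ, Finset.mul_sum]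
    exact Finset.sum_congr rfl fun δ _ => by ring
  linarith [Ta, Tb, Tc]

/-- (I8): `G^ν ℓ_ν = (1/2) v^β ∂_β L`. -/
theorem Setup.I8 (S : Setup Ω L) (hq : q ∈ Ω) :
    ∑ ν, spray L ν q.1 q.2 * pdv L ν q.1 q.2
      = (1/2) * ∑ β, q.2 β * pdx L β q.1 q.2 := by
  have hs : ∀ ν, spray L ν q.1 q.2 = (1/4 : ℝ) * ∑ δ, ginv L q.1 q.2 ν δ *
      (∑ β, ∑ γ,
        (pdx (pdv (pdv L γ) δ) β q.1 q.2 + pdx (pdv (pdv L β) δ) γ q.1 q.2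
          - pdx (pdv (pdv L γ) β) δ q.1 q.2) * q.2 β * q.2 γ) := fun ν => rfl
  calc ∑ ν, spray L ν q.1 q.2 * pdv L ν q.1 q.2
      = ∑ ν, ∑ δ, (1/4 : ℝ) * ((pdv L ν q.1 q.2 * ginv L q.1 q.2 ν δ) *
          (∑ β, ∑ γ,
            (pdx (pdv (pdv L γ) δ) β q.1 q.2 + pdx (pdv (pdv L β) δ) γ q.1 q.2
              - pdx (pdv (pdv L γ) β) δ q.1 q.2) * q.2 β * q.2 γ)) := by
        refine Finset.sum_congr rfl fun ν _ => ?_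
        rw [hs ν, Finset.mul_sum, Finset.sum_mul]
        exact Finset.sum_congr rfl fun δ _ => by ring
    _ = ∑ δ, (1/4 : ℝ) * ((∑ ν, pdv L ν q.1 q.2 * ginv L q.1 q.2 ν δ) *
          (∑ β, ∑ γ,
            (pdx (pdv (pdv L γ) δ) β q.1 q.2 + pdx (pdv (pdv L β) δ) γ q.1 q.2
              - pdx (pdv (pdv L γ) β) δ q.1 q.2) * q.2 β * q.2 γ)) := by
        rw [Finset.sum_comm]
        refine Finset.sum_congr rfl fun δ _ => ?_
        rw [Finset.sum_mul, Finset.mul_sum]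
        try exact Finset.sum_congr rfl fun ν _ => by ring
    _ = (1/4 : ℝ) * ∑ δ, q.2 δ *
          (∑ β, ∑ γ,
            (pdx (pdv (pdv L γ) δ) β q.1 q.2 + pdx (pdv (pdv L β) δ) γ q.1 q.2
              - pdx (pdv (pdv L γ) β) δ q.1 q.2) * q.2 β * q.2 γ) := by
        rw [Finset.mul_sum]
        refine Finset.sum_congr rfl fun δ _ => ?_
        rw [S.I7 hq δ]
    _ = (1/4 : ℝ) * (2 * ∑ β, q.2 β * pdx L β q.1 q.2) := by
        rw [S.Scontract hq q.2 (fun _ => rfl)]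
    _ = (1/2) * ∑ β, q.2 β * pdx L β q.1 q.2 := by ring

end Aux

namespace Aux
variable {Ω : Set (Vec m × Vec m)} {L : Vec m → Vec m → ℝ} {q : Vec m × Vec m}

/-- (I10): `G^ν g_{νμ} = (1/2) v^β ∂_β ℓ_μ − (1/2) ∂_μ L`. -/
theorem Setup.I10 (S : Setup Ω L) (hq : q ∈ Ω) (μ : Fin m) :
    ∑ ν, spray L ν q.1 q.2 * pdv (pdv L μ) ν q.1 q.2
      = (1/2) * (∑ β, q.2 β * pdx (pdv L μ) β q.1 q.2) - (1/2) * pdx L μ q.1 q.2 := by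
  have hs : ∀ ν, spray L ν q.1 q.2 = (1/4 : ℝ) * ∑ δ, ginv L q.1 q.2 ν δ *
      (∑ β, ∑ γ,
        (pdx (pdv (pdv L γ) δ) β q.1 q.2 + pdx (pdv (pdv L β) δ) γ q.1 q.2
          - pdx (pdv (pdv L γ) β) δ q.1 q.2) * q.2 β * q.2 γ) := fun ν => rfl
  have hcon : ∑ ν, spray L ν q.1 q.2 * pdv (pdv L μ) ν q.1 q.2
      = (1/4 : ℝ) * (∑ β, ∑ γ,
        (pdx (pdv (pdv L γ) μ) β q.1 q.2 + pdx (pdv (pdv L β) μ) γ q.1 q.2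
          - pdx (pdv (pdv L γ) β) μ q.1 q.2) * q.2 β * q.2 γ) := by
    calc ∑ ν, spray L ν q.1 q.2 * pdv (pdv L μ) ν q.1 q.2
        = ∑ ν, ∑ δ, (1/4 : ℝ) * ((pdv (pdv L μ) ν q.1 q.2 * ginv L q.1 q.2 ν δ) *
            (∑ β, ∑ γ,
              (pdx (pdv (pdv L γ) δ) β q.1 q.2 + pdx (pdv (pdv L β) δ) γ q.1 q.2
                - pdx (pdv (pdv L γ) β) δ q.1 q.2) * q.2 β * q.2 γ)) := by
          refine Finset.sum_congr rfl fun ν _ => ?_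
          rw [hs ν, Finset.mul_sum, Finset.sum_mul]
          exact Finset.sum_congr rfl fun δ _ => by ring
      _ = ∑ δ, (1/4 : ℝ) * ((∑ ν, pdv (pdv L μ) ν q.1 q.2 * ginv L q.1 q.2 ν δ) *
            (∑ β, ∑ γ,
              (pdx (pdv (pdv L γ) δ) β q.1 q.2 + pdx (pdv (pdv L β) δ) γ q.1 q.2
                - pdx (pdv (pdv L γ) β) δ q.1 q.2) * q.2 β * q.2 γ)) := by
          rw [Finset.sum_comm]
          refine Finset.sum_congr rfl fun δ _ => ?_
          rw [Finset.sum_mul, Finset.mul_sum]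
          try exact Finset.sum_congr rfl fun ν _ => by ring
      _ = ∑ δ, (if μ = δ then ((1/4 : ℝ) * (∑ β, ∑ γ,
              (pdx (pdv (pdv L γ) δ) β q.1 q.2 + pdx (pdv (pdv L β) δ) γ q.1 q.2
                - pdx (pdv (pdv L γ) β) δ q.1 q.2) * q.2 β * q.2 γ)) else 0) := by
          refine Finset.sum_congr rfl fun δ _ => ?_
          rw [S.I6 hq μ δ]
          by_cases h : μ = δ <;> simp [h]
      _ = (1/4 : ℝ) * (∑ β, ∑ γ,
            (pdx (pdv (pdv L γ) μ) β q.1 q.2 + pdx (pdv (pdv L β) μ) γ q.1 q.2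
              - pdx (pdv (pdv L γ) β) μ q.1 q.2) * q.2 β * q.2 γ) := by
          rw [Finset.sum_ite_eq]
          simp
  rw [hcon]
  -- now compute S_μ
  have hsplit : (∑ β, ∑ γ,
      (pdx (pdv (pdv L γ) μ) β q.1 q.2 + pdx (pdv (pdv L β) μ) γ q.1 q.2
        - pdx (pdv (pdv L γ) β) μ q.1 q.2) * q.2 β * q.2 γ)
      = (∑ β, ∑ γ, pdx (pdv (pdv L γ) μ) β q.1 q.2 * q.2 β * q.2 γ)
        + (∑ β, ∑ γ, pdx (pdv (pdv L β) μ) γ q.1 q.2 * q.2 β * q.2 γ)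
        - (∑ β, ∑ γ, pdx (pdv (pdv L γ) β) μ q.1 q.2 * q.2 β * q.2 γ) := by
    rw [show (∑ β, ∑ γ,
        (pdx (pdv (pdv L γ) μ) β q.1 q.2 + pdx (pdv (pdv L β) μ) γ q.1 q.2
          - pdx (pdv (pdv L γ) β) μ q.1 q.2) * q.2 β * q.2 γ)
        = ∑ β, ∑ γ, (pdx (pdv (pdv L γ) μ) β q.1 q.2 * q.2 β * q.2 γ
          + pdx (pdv (pdv L β) μ) γ q.1 q.2 * q.2 β * q.2 γ
          - pdx (pdv (pdv L γ) β) μ q.1 q.2 * q.2 β * q.2 γ) from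
      Finset.sum_congr rfl fun β _ => Finset.sum_congr rfl fun γ _ => by ring]
    simp [Finset.sum_add_distrib, Finset.sum_sub_distrib]
  rw [hsplit]
  have T1 : (∑ β, ∑ γ, pdx (pdv (pdv L γ) μ) β q.1 q.2 * q.2 β * q.2 γ)
      = ∑ β, q.2 β * pdx (pdv L μ) β q.1 q.2 := by
    refine Finset.sum_congr rfl fun β _ => ?_
    rw [← S.I4 hq μ β, Finset.mul_sum]
    refine Finset.sum_congr rfl fun γ _ => ?_
    rw [S.gsym_x hq μ γ β]
    ring
  have T2 : (∑ β, ∑ γ, pdx (pdv (pdv L β) μ) γ q.1 q.2 * q.2 β * q.2 γ)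
      = ∑ β, q.2 β * pdx (pdv L μ) β q.1 q.2 := by
    rw [Finset.sum_comm]
    refine Finset.sum_congr rfl fun γ _ => ?_
    rw [← S.I4 hq μ γ, Finset.mul_sum]
    refine Finset.sum_congr rfl fun β _ => ?_
    rw [S.gsym_x hq μ β γ]
    ring
  have T3 : (∑ β, ∑ γ, pdx (pdv (pdv L γ) β) μ q.1 q.2 * q.2 β * q.2 γ)
      = 2 * pdx L μ q.1 q.2 := by
    rw [Finset.sum_comm]
    have hγ : ∀ γ, ∑ β, pdx (pdv (pdv L γ) β) μ q.1 q.2 * q.2 β * q.2 γ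
        = pdx (pdv L γ) μ q.1 q.2 * q.2 γ := by
      intro γ
      rw [← S.I4 hq γ μ, Finset.sum_mul]
      try exact Finset.sum_congr rfl fun β _ => by ring
    rw [Finset.sum_congr rfl fun γ _ => hγ γ]
    exact S.I9 hq μ
  rw [T1, T2, T3]
  ring
end Aux

namespace Aux
variable {Ω : Set (Vec m × Vec m)} {L : Vec m → Vec m → ℝ} {q : Vec m × Vec m}

/-- (I12): `N^ν_μ ℓ_ν = ∂_μ L` (the horizontal derivative of `L` vanishes). -/
theorem Setup.I12 (S : Setup Ω L) (hq : q ∈ Ω) (μ : Fin m) :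
    ∑ ν, pdv (spray L ν) μ q.1 q.2 * pdv L ν q.1 q.2 = pdx L μ q.1 q.2 := by
  have hL0 : pdv (fun x v => ∑ ν, spray L ν x v * pdv L ν x v) μ q.1 q.2
      = pdv (fun x v => (1/2 : ℝ) * ∑ β, v β * pdx L β x v) μ q.1 q.2 :=
    pdv_congr S.isOpen hq (fun q' hq' => S.I8 hq') μ
  have hlhs : pdv (fun x v => ∑ ν, spray L ν x v * pdv L ν x v) μ q.1 q.2
      = ∑ ν, (pdv (spray L ν) μ q.1 q.2 * pdv L ν q.1 q.2
          + spray L ν q.1 q.2 * pdv (pdv L ν) μ q.1 q.2) := by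
    rw [pdv_sum (fun ν _ => ((S.sa_spray hq ν).mul (S.sa_ell hq ν)).diffAt) μ]
    exact Finset.sum_congr rfl fun ν _ =>
      pdv_mul (S.sa_spray hq ν).diffAt (S.sa_ell hq ν).diffAt μ
  have hrhs : pdv (fun x v => (1/2 : ℝ) * ∑ β, v β * pdx L β x v) μ q.1 q.2
      = (1/2 : ℝ) * (pdx L μ q.1 q.2 + ∑ β, q.2 β * pdv (pdx L β) μ q.1 q.2) := by
    rw [pdv_constMul (1/2 : ℝ)
      (SA.sum fun β _ => (SA.coordV β).mul (S.sa_pdxL hq β)).diffAt μ]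
    congr 1
    rw [pdv_sum (fun β _ => ((SA.coordV β).mul (S.sa_pdxL hq β)).diffAt) μ]
    have hterm : ∀ β, pdv (fun x v => v β * pdx L β x v) μ q.1 q.2
        = (if β = μ then 1 else 0) * pdx L β q.1 q.2
          + q.2 β * pdv (pdx L β) μ q.1 q.2 := by
      intro β
      rw [pdv_mul (SA.coordV β).diffAt (S.sa_pdxL hq β).diffAt μ, pdv_coord]
    rw [Finset.sum_congr rfl fun β _ => hterm β, Finset.sum_add_distrib]
    congr 1
    rw [Finset.sum_congr rfl (g := fun β =>
        if β = μ then pdx L β q.1 q.2 else 0) (fun β _ => by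
      by_cases h : β = μ <;> simp [h])]
    simp
  have hI10 := S.I10 hq μ
  have hgs : ∀ ν, pdv (pdv L ν) μ q.1 q.2 = pdv (pdv L μ) ν q.1 q.2 :=
    fun ν => S.gsym hq μ ν
  have hxv : ∀ β, pdv (pdx L β) μ q.1 q.2 = pdx (pdv L μ) β q.1 q.2 :=
    fun β => (S.sym_xv hq μ β).symm
  rw [hlhs, hrhs] at hL0
  rw [Finset.sum_add_distrib] at hL0
  rw [Finset.sum_congr rfl (fun ν _ => by rw [hgs ν] :
    ∀ ν ∈ Finset.univ, spray L ν q.1 q.2 * pdv (pdv L ν) μ q.1 q.2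
      = spray L ν q.1 q.2 * pdv (pdv L μ) ν q.1 q.2)] at hL0
  rw [Finset.sum_congr rfl (fun β _ => by rw [hxv β] :
    ∀ β ∈ Finset.univ, q.2 β * pdv (pdx L β) μ q.1 q.2
      = q.2 β * pdx (pdv L μ) β q.1 q.2)] at hL0
  linarith [hL0, hI10]

end Aux

namespace Aux
variable {Ω : Set (Vec m × Vec m)} {L : Vec m → Vec m → ℝ} {q : Vec m × Vec m}

theorem Setup.hX (S : Setup Ω L) (hq : q ∈ Ω) (α' β' : Fin m) :
    ∑ ν, pdv L ν q.1 q.2 * pdx (pdv (spray L ν) β') α' q.1 q.2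
      = pdx (pdx L β') α' q.1 q.2
        - ∑ ν, pdv (spray L ν) β' q.1 q.2 * pdx (pdv L ν) α' q.1 q.2 := by
  have h0 : pdx (fun x v => pdx L β' x v
      - ∑ ν, pdv (spray L ν) β' x v * pdv L ν x v) α' q.1 q.2 = 0 := by
    rw [pdx_congr (g := fun _ _ => (0 : ℝ)) S.isOpen hq
      (fun q' hq' => sub_eq_zero.mpr (S.I12 hq' β').symm) α']
    exact pdx_const 0 α'
  rw [pdx_sub (S.sa_pdxL hq β').diffAt
    (SA.sum fun ν _ => (S.sa_N hq ν β').mul (S.sa_ell hq ν)).diffAt α'] at h0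
  rw [pdx_sum (fun ν _ => ((S.sa_N hq ν β').mul (S.sa_ell hq ν)).diffAt) α'] at h0
  rw [Finset.sum_congr rfl (fun ν _ =>
    pdx_mul (S.sa_N hq ν β').diffAt (S.sa_ell hq ν).diffAt α')] at h0
  rw [Finset.sum_add_distrib] at h0
  have h1 : ∑ ν, pdx (pdv (spray L ν) β') α' q.1 q.2 * pdv L ν q.1 q.2
      = ∑ ν, pdv L ν q.1 q.2 * pdx (pdv (spray L ν) β') α' q.1 q.2 :=
    Finset.sum_congr rfl fun ν _ => by ring
  have h2 : ∑ ν, pdv (spray L ν) β' q.1 q.2 * pdx (pdv L ν) α' q.1 q.2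
      = ∑ ν, pdv (spray L ν) β' q.1 q.2 * pdx (pdv L ν) α' q.1 q.2 := rfl
  linarith [h0, h1.symm ▸ h0]

theorem Setup.hV (S : Setup Ω L) (hq : q ∈ Ω) (β' ν' : Fin m) :
    ∑ μ, pdv L μ q.1 q.2 * pdv (pdv (spray L μ) β') ν' q.1 q.2
      = pdv (pdx L β') ν' q.1 q.2
        - ∑ μ, pdv (spray L μ) β' q.1 q.2 * pdv (pdv L μ) ν' q.1 q.2 := by
  have h0 : pdv (fun x v => pdx L β' x v
      - ∑ μ, pdv (spray L μ) β' x v * pdv L μ x v) ν' q.1 q.2 = 0 := by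
    rw [pdv_congr (g := fun _ _ => (0 : ℝ)) S.isOpen hq
      (fun q' hq' => sub_eq_zero.mpr (S.I12 hq' β').symm) ν']
    exact pdv_const 0 ν'
  rw [pdv_sub (S.sa_pdxL hq β').diffAt
    (SA.sum fun μ _ => (S.sa_N hq μ β').mul (S.sa_ell hq μ)).diffAt ν'] at h0
  rw [pdv_sum (fun μ _ => ((S.sa_N hq μ β').mul (S.sa_ell hq μ)).diffAt) ν'] at h0
  rw [Finset.sum_congr rfl (fun μ _ =>
    pdv_mul (S.sa_N hq μ β').diffAt (S.sa_ell hq μ).diffAt ν')] at h0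
  rw [Finset.sum_add_distrib] at h0
  have h1 : ∑ μ, pdv (pdv (spray L μ) β') ν' q.1 q.2 * pdv L μ q.1 q.2
      = ∑ μ, pdv L μ q.1 q.2 * pdv (pdv (spray L μ) β') ν' q.1 q.2 :=
    Finset.sum_congr rfl fun μ _ => by ring
  linarith [h0, h1.symm ▸ h0]

/-- Contraction of `ℓ` with half of the curvature (one horizontal derivative). -/
theorem Setup.hDelta (S : Setup Ω L) (hq : q ∈ Ω) (α' β' : Fin m) :
    ∑ μ, pdv L μ q.1 q.2 *
        (pdx (pdv (spray L μ) β') α' q.1 q.2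
          - ∑ ν, pdv (spray L ν) α' q.1 q.2 * pdv (pdv (spray L μ) β') ν q.1 q.2)
      = (pdx (pdx L β') α' q.1 q.2
          - ∑ ν, pdv (spray L ν) β' q.1 q.2 * pdx (pdv L ν) α' q.1 q.2)
        - ∑ ν, pdv (spray L ν) α' q.1 q.2 *
            (pdv (pdx L β') ν q.1 q.2
              - ∑ μ, pdv (spray L μ) β' q.1 q.2 * pdv (pdv L μ) ν q.1 q.2) := by
  have hsplit : ∑ μ, pdv L μ q.1 q.2 *
      (pdx (pdv (spray L μ) β') α' q.1 q.2
        - ∑ ν, pdv (spray L ν) α' q.1 q.2 * pdv (pdv (spray L μ) β') ν q.1 q.2)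
      = (∑ μ, pdv L μ q.1 q.2 * pdx (pdv (spray L μ) β') α' q.1 q.2)
        - ∑ μ, ∑ ν, pdv (spray L ν) α' q.1 q.2 *
            (pdv L μ q.1 q.2 * pdv (pdv (spray L μ) β') ν q.1 q.2) := by
    rw [← Finset.sum_sub_distrib]
    refine Finset.sum_congr rfl fun μ _ => ?_
    rw [mul_sub, Finset.mul_sum]
    congr 1
    exact Finset.sum_congr rfl fun ν _ => by ring
  rw [hsplit, S.hX hq α' β', Finset.sum_comm]
  congr 1
  refine Finset.sum_congr rfl fun ν _ => ?_
  rw [← Finset.mul_sum]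
  congr 1
  exact S.hV hq β' ν

end Aux


open Aux in
set_option maxHeartbeats 1600000 in
/-- Eq. (llop): the nonlinear curvature annihilates the support vector after lowering
with the metric: `g_{σμ}(x,v) v^σ R^μ{}_{αβ}(x,v) = 0`. -/
theorem statement5 {m : ℕ} (hm : 2 ≤ m)
    (Ω : Set (Vec m × Vec m)) (hΩopen : IsOpen Ω) (hΩne : Ω.Nonempty)
    (hΩslit : ∀ p ∈ Ω, p.2 ≠ 0)
    (hΩcone : ∀ p ∈ Ω, ∀ s : ℝ, 0 < s → (p.1, s • p.2) ∈ Ω)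
    (L : Vec m → Vec m → ℝ)
    (hLsmooth : ContDiffOn ℝ (⊤ : ℕ∞) (fun p : Vec m × Vec m => L p.1 p.2) Ω)
    (hLhom : ∀ p ∈ Ω, ∀ s : ℝ, 0 < s → L p.1 (s • p.2) = s ^ 2 * L p.1 p.2)
    (hLinv : ∀ p ∈ Ω, IsUnit (gmet L p.1 p.2).det)
    : ∀ p ∈ Ω, ∀ α β,
      ∑ σ, ∑ μ, gmet L p.1 p.2 σ μ * p.2 σ * curv (nConn L) μ α β p.1 p.2 = 0 := by
  intro p hp α β
  have S : Setup Ω L :=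
    ⟨hΩopen, hΩcone, fun q hq => (hLsmooth q hq).contDiffAt (hΩopen.mem_nhds hq),
      hLhom, hLinv⟩
  have hcurv : ∀ μ (α' β' : Fin m), curv (nConn L) μ α' β' p.1 p.2
      = (pdx (pdv (spray L μ) β') α' p.1 p.2
          - ∑ ν, pdv (spray L ν) α' p.1 p.2 * pdv (pdv (spray L μ) β') ν p.1 p.2)
        - (pdx (pdv (spray L μ) α') β' p.1 p.2
          - ∑ ν, pdv (spray L ν) β' p.1 p.2 * pdv (pdv (spray L μ) α') ν p.1 p.2) :=
    fun _ _ _ => rfl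
  have hA : ∑ σ, ∑ μ, gmet L p.1 p.2 σ μ * p.2 σ * curv (nConn L) μ α β p.1 p.2
      = ∑ μ, pdv L μ p.1 p.2 * curv (nConn L) μ α β p.1 p.2 := by
    rw [Finset.sum_comm]
    refine Finset.sum_congr rfl fun μ _ => ?_
    have h1 : ∑ σ, gmet L p.1 p.2 σ μ * p.2 σ * curv (nConn L) μ α β p.1 p.2
        = (∑ σ, pdv (pdv L μ) σ p.1 p.2 * p.2 σ) * curv (nConn L) μ α β p.1 p.2 :=
      (Finset.sum_mul _ _ _).symm
    rw [h1, S.euler1 hp μ]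
  rw [hA]
  have hsplit : ∑ μ, pdv L μ p.1 p.2 * curv (nConn L) μ α β p.1 p.2
      = (∑ μ, pdv L μ p.1 p.2 *
          (pdx (pdv (spray L μ) β) α p.1 p.2
            - ∑ ν, pdv (spray L ν) α p.1 p.2 * pdv (pdv (spray L μ) β) ν p.1 p.2))
        - (∑ μ, pdv L μ p.1 p.2 *
          (pdx (pdv (spray L μ) α) β p.1 p.2
            - ∑ ν, pdv (spray L ν) β p.1 p.2 * pdv (pdv (spray L μ) α) ν p.1 p.2)) := by
    rw [← Finset.sum_sub_distrib]
    refine Finset.sum_congr rfl fun μ _ => ?_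
    rw [hcurv μ α β]
    ring
  rw [hsplit, S.hDelta hp α β, S.hDelta hp β α]
  -- cancellation
  have e1 : pdx (pdx L β) α p.1 p.2 = pdx (pdx L α) β p.1 p.2 := S.sym_xx hp α β
  have e2 : ∑ ν, pdv (spray L ν) β p.1 p.2 * pdx (pdv L ν) α p.1 p.2
      = ∑ ν, pdv (spray L ν) β p.1 p.2 * pdv (pdx L α) ν p.1 p.2 :=
    Finset.sum_congr rfl fun ν _ => by rw [S.sym_xv hp ν α]
  have e3 : ∑ ν, pdv (spray L ν) α p.1 p.2 * pdx (pdv L ν) β p.1 p.2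
      = ∑ ν, pdv (spray L ν) α p.1 p.2 * pdv (pdx L β) ν p.1 p.2 :=
    Finset.sum_congr rfl fun ν _ => by rw [S.sym_xv hp ν β]
  have e4 : ∑ ν, pdv (spray L ν) α p.1 p.2 *
        (pdv (pdx L β) ν p.1 p.2
          - ∑ μ, pdv (spray L μ) β p.1 p.2 * pdv (pdv L μ) ν p.1 p.2)
      = (∑ ν, pdv (spray L ν) α p.1 p.2 * pdv (pdx L β) ν p.1 p.2)
        - ∑ ν, ∑ μ, pdv (spray L ν) α p.1 p.2 * pdv (spray L μ) β p.1 p.2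
            * pdv (pdv L μ) ν p.1 p.2 := by
    rw [← Finset.sum_sub_distrib]
    refine Finset.sum_congr rfl fun ν _ => ?_
    rw [mul_sub, Finset.mul_sum]
    congr 1
    exact Finset.sum_congr rfl fun μ _ => by ring
  have e5 : ∑ ν, pdv (spray L ν) β p.1 p.2 *
        (pdv (pdx L α) ν p.1 p.2
          - ∑ μ, pdv (spray L μ) α p.1 p.2 * pdv (pdv L μ) ν p.1 p.2)
      = (∑ ν, pdv (spray L ν) β p.1 p.2 * pdv (pdx L α) ν p.1 p.2)
        - ∑ ν, ∑ μ, pdv (spray L ν) β p.1 p.2 * pdv (spray L μ) α p.1 p.2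
            * pdv (pdv L μ) ν p.1 p.2 := by
    rw [← Finset.sum_sub_distrib]
    refine Finset.sum_congr rfl fun ν _ => ?_
    rw [mul_sub, Finset.mul_sum]
    congr 1
    exact Finset.sum_congr rfl fun μ _ => by ring
  have e6 : ∑ ν, ∑ μ, pdv (spray L ν) α p.1 p.2 * pdv (spray L μ) β p.1 p.2
        * pdv (pdv L μ) ν p.1 p.2
      = ∑ ν, ∑ μ, pdv (spray L ν) β p.1 p.2 * pdv (spray L μ) α p.1 p.2
        * pdv (pdv L μ) ν p.1 p.2 := by
    rw [Finset.sum_comm]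
    refine Finset.sum_congr rfl fun a _ => Finset.sum_congr rfl fun b _ => ?_
    rw [S.gsym hp b a]
    ring
  linarith [e1, e2, e3, e4, e5, e6]
end
end

section
/- Let L be a pseudo-Finsler Lagrangian on Ω with spray nonlinear connection N. Let U ⊆ ℝ^m be open and let s : U → ℝ^m be smooth with (x,s(x)) ∈ Ω for all x ∈ U. Then at every x ∈ U, (D_s s)^α = (∇^{g_s}_s s)^α, i.e. (∂s^α/∂x^μ + N^α_μ(x,s(x)))s^μ(x) = s^μ(x)∂s^α/∂x^μ + γ^α_{νμ}(x)s^ν(x)s^μ(x), where γ are the Christoffel symbols of the pullback metric g_s. In particular, s satisfies the Finslerian geodesic (resp. pregeodesic) equation if and only if it satisfies the geodesic (resp. pregeodesic) equation for the Levi-Civita connection of the pullback metric g_s. -/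
open scoped BigOperators

noncomputable section

variable {m : ℕ}

/-- Derivative `∂(g_s)_{αβ}/∂x^μ` of an `x`-dependent metric. -/
def pdm (gs : Vec m → Matrix (Fin m) (Fin m) ℝ) (α β μ : Fin m) (x : Vec m) : ℝ :=
  fderiv ℝ (fun y => gs y α β) x (Pi.single μ 1)

/-- Christoffel symbols `γ^λ_{μν}` of the metric `gs`. -/
def christ (gs : Vec m → Matrix (Fin m) (Fin m) ℝ) (lam μ ν : Fin m) (x : Vec m) : ℝ :=
  (1/2) * ∑ σ, (gs x)⁻¹ lam σ * (pdm gs σ ν μ x + pdm gs σ μ ν x - pdm gs μ ν σ x)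

/-- Levi-Civita covariant derivative `(∇_X Y)^λ = X^μ ∂Y^λ/∂x^μ + γ^λ_{νμ} Y^ν X^μ`. -/
def lcCov (gs : Vec m → Matrix (Fin m) (Fin m) ℝ) (X Y : Vec m → Vec m) (x : Vec m) : Vec m :=
  fun lam => (∑ μ, X x μ * pde Y lam μ x) + ∑ μ, ∑ ν, christ gs lam ν μ x * Y x ν * X x μ

/-- Riemann curvature `R^λ{}_{νμρ}` of the metric `gs`. -/
def riem (gs : Vec m → Matrix (Fin m) (Fin m) ℝ) (lam ν μ ρ : Fin m) (x : Vec m) : ℝ :=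
  fderiv ℝ (fun y => christ gs lam ν ρ y) x (Pi.single μ 1)
  - fderiv ℝ (fun y => christ gs lam ν μ y) x (Pi.single ρ 1)
  + (∑ σ, christ gs lam σ μ x * christ gs σ ν ρ x)
  - ∑ σ, christ gs lam σ ρ x * christ gs σ ν μ x

/-- Ricci tensor of the metric `gs`. -/
def ricciPull (gs : Vec m → Matrix (Fin m) (Fin m) ℝ) (ν ρ : Fin m) (x : Vec m) : ℝ :=
  ∑ lam, riem gs lam ν lam ρ x

theorem fderiv_right_sec {G : Vec m × Vec m → ℝ} {x v : Vec m}
    (hG : DifferentiableAt ℝ G (x, v)) (u : Vec m) :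
    fderiv ℝ (fun w => G (x, w)) v u = fderiv ℝ G (x, v) (0, u) := by
  have h : HasFDerivAt (fun w => G (x, w))
      ((fderiv ℝ G (x, v)).comp (ContinuousLinearMap.inr ℝ (Vec m) (Vec m))) v :=
    hG.hasFDerivAt.comp v (hasFDerivAt_prodMk_right x v)
  rw [h.fderiv]; rfl

theorem fderiv_left_sec {G : Vec m × Vec m → ℝ} {x v : Vec m}
    (hG : DifferentiableAt ℝ G (x, v)) (u : Vec m) :
    fderiv ℝ (fun y => G (y, v)) x u = fderiv ℝ G (x, v) (u, 0) := by
  have h : HasFDerivAt (fun y => G (y, v))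
      ((fderiv ℝ G (x, v)).comp (ContinuousLinearMap.inl ℝ (Vec m) (Vec m))) x :=
    hG.hasFDerivAt.comp x (hasFDerivAt_prodMk_left x v)
  rw [h.fderiv]; rfl

theorem dd_contDiffAt {E : Type*} [NormedAddCommGroup E] [NormedSpace ℝ E]
    {f : E → ℝ} {q : E} (hf : ContDiffAt ℝ (⊤ : ℕ∞) f q) (u : E) :
    ContDiffAt ℝ (⊤ : ℕ∞) (fun p => fderiv ℝ f p u) q :=
  (hf.fderiv_right (by simp)).clm_apply contDiffAt_const

theorem dd_symm {E : Type*} [NormedAddCommGroup E] [NormedSpace ℝ E]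
    {f : E → ℝ} {q : E} (hf : ContDiffAt ℝ (⊤ : ℕ∞) f q) (u w : E) :
    fderiv ℝ (fun p => fderiv ℝ f p u) q w = fderiv ℝ (fun p => fderiv ℝ f p w) q u := by
  have hsym := hf.isSymmSndFDerivAt (by rw [minSmoothness_of_isRCLikeNormedField]; exact WithTop.coe_le_coe.mpr (le_top : (2 : ℕ∞) ≤ ⊤))
  have hd : DifferentiableAt ℝ (fderiv ℝ f) q :=
    (hf.fderiv_right (by simp) : ContDiffAt ℝ (⊤ : ℕ∞) (fderiv ℝ f) q).differentiableAt (by simp)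
  have e1 : ∀ z : E, fderiv ℝ (fun p => fderiv ℝ f p z) q
      = (fderiv ℝ (fderiv ℝ f) q).flip z := by
    intro z
    rw [fderiv_clm_apply hd (differentiableAt_const z)]
    simp
  rw [e1 u, e1 w]
  exact hsym.eq w u

-- Euler's lemma along a ray
theorem euler_dir {ψ : Vec m → ℝ} {v : Vec m} (hψ : DifferentiableAt ℝ ψ v) (k : ℕ)
    (hhom : ∀ t : ℝ, 0 < t → ψ (t • v) = t ^ k * ψ v) :
    fderiv ℝ ψ v v = k * ψ v := by
  have hscale : HasDerivAt (fun t : ℝ => t • v) v 1 := by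
    simpa using (hasDerivAt_id (1:ℝ)).smul_const v
  have h1 : HasDerivAt (fun t : ℝ => ψ (t • v)) (fderiv ℝ ψ v v) 1 := by
    have hψ' : HasFDerivAt ψ (fderiv ℝ ψ v) ((1:ℝ) • v) := by simpa using hψ.hasFDerivAt
    have := hψ'.comp_hasDerivAt 1 hscale
    exact this
  have h2 : HasDerivAt (fun t : ℝ => t ^ k * ψ v) ((k : ℝ) * ψ v) 1 := by
    simpa using (hasDerivAt_pow k (1:ℝ)).mul_const (ψ v)
  have hev : (fun t : ℝ => ψ (t • v)) =ᶠ[nhds (1:ℝ)] fun t => t ^ k * ψ v := by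
    filter_upwards [eventually_gt_nhds (by norm_num : (0:ℝ) < 1)] with t ht
    exact hhom t ht
  have h1' : HasDerivAt (fun t : ℝ => t ^ k * ψ v) (fderiv ℝ ψ v v) 1 :=
    HasDerivAt.congr_of_eventuallyEq h1 hev.symm
  exact h1'.unique h2

-- fderiv equality from agreement on an open set
theorem fderiv_congr_open {E : Type*} [NormedAddCommGroup E] [NormedSpace ℝ E]
    {f g : E → ℝ} {s : Set E} (hs : IsOpen s) {x : E} (hx : x ∈ s)
    (h : ∀ y ∈ s, f y = g y) : fderiv ℝ f x = fderiv ℝ g x :=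
  Filter.EventuallyEq.fderiv_eq (Filter.eventuallyEq_of_mem (hs.mem_nhds hx) h)

theorem differentiableAt_congr_open {E : Type*} [NormedAddCommGroup E] [NormedSpace ℝ E]
    {f g : E → ℝ} {s : Set E} (hs : IsOpen s) {x : E} (hx : x ∈ s)
    (h : ∀ y ∈ s, f y = g y) (hg : DifferentiableAt ℝ g x) : DifferentiableAt ℝ f x :=
  hg.congr_of_eventuallyEq (Filter.eventuallyEq_of_mem (hs.mem_nhds hx) h)

-- determinant of a matrix of differentiable functions
theorem differentiableAt_det {E : Type*} [NormedAddCommGroup E] [NormedSpace ℝ E]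
    {A : E → Matrix (Fin m) (Fin m) ℝ} {x : E}
    (hA : ∀ i j, DifferentiableAt ℝ (fun y => A y i j) x) :
    DifferentiableAt ℝ (fun y => (A y).det) x := by
  simp only [Matrix.det_apply, Units.smul_def, zsmul_eq_mul]
  apply DifferentiableAt.fun_sum
  intro σ _
  exact (differentiableAt_const _).mul (by
      have := HasFDerivAt.finset_prod (u := Finset.univ)
        (fun (i : Fin m) _ => (hA (σ i) i).hasFDerivAt)
      exact this.differentiableAt)

theorem differentiableAt_inv_entry {E : Type*} [NormedAddCommGroup E] [NormedSpace ℝ E]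
    {A : E → Matrix (Fin m) (Fin m) ℝ} {x : E}
    (hA : ∀ i j, DifferentiableAt ℝ (fun y => A y i j) x)
    (hdet : (A x).det ≠ 0) (i j : Fin m) :
    DifferentiableAt ℝ (fun y => (A y)⁻¹ i j) x := by
  have key : ∀ y, (A y)⁻¹ i j = ((A y).det)⁻¹ * (A y).adjugate i j := by
    intro y
    rw [Matrix.inv_def]
    simp [Ring.inverse_eq_inv', Matrix.smul_apply, smul_eq_mul]
  simp only [key]
  apply DifferentiableAt.mul
  · exact (differentiableAt_det hA).inv hdet
  · simp only [Matrix.adjugate_apply]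
    apply differentiableAt_det
    intro a b
    by_cases hab : a = j
    · subst hab; simp [Matrix.updateRow_apply]
    · simp only [Matrix.updateRow_apply, if_neg hab]
      exact hA a b


-- ===== core development =====
def FL (L : Vec m → Vec m → ℝ) : Vec m × Vec m → ℝ := fun p => L p.1 p.2
def DD (f : Vec m × Vec m → ℝ) (u : Vec m × Vec m) : Vec m × Vec m → ℝ :=
  fun p => fderiv ℝ f p u
def Vd (i : Fin m) : Vec m × Vec m := (0, Pi.single i 1)
def Xd (i : Fin m) : Vec m × Vec m := (Pi.single i 1, 0)

section Core
variable {Ω : Set (Vec m × Vec m)} {L : Vec m → Vec m → ℝ}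

theorem FL_cda (hΩopen : IsOpen Ω) (hLsmooth : ContDiffOn ℝ (⊤ : ℕ∞) (FL L) Ω)
    {q : Vec m × Vec m} (hq : q ∈ Ω) : ContDiffAt ℝ (⊤ : ℕ∞) (FL L) q :=
  hLsmooth.contDiffAt (hΩopen.mem_nhds hq)

theorem slice_right_open (hΩopen : IsOpen Ω) (x : Vec m) :
    IsOpen {w : Vec m | (x, w) ∈ Ω} :=
  hΩopen.preimage (Continuous.prodMk_right x)

theorem slice_left_open (hΩopen : IsOpen Ω) (w : Vec m) :
    IsOpen {y : Vec m | (y, w) ∈ Ω} :=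
  hΩopen.preimage (continuous_id.prodMk continuous_const)

-- (GF): gmet as second vertical derivative of FL
theorem gmet_eq (hΩopen : IsOpen Ω) (hLsmooth : ContDiffOn ℝ (⊤ : ℕ∞) (FL L) Ω)
    {y w : Vec m} (hq : (y, w) ∈ Ω) (a b : Fin m) :
    gmet L y w a b = DD (DD (FL L) (Vd b)) (Vd a) (y, w) := by
  have step1 : ∀ w' ∈ {w' : Vec m | (y, w') ∈ Ω},
      pdv L b y w' = DD (FL L) (Vd b) (y, w') := by
    intro w' hw'
    have hd := (FL_cda hΩopen hLsmooth hw').differentiableAt (by simp)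
    exact fderiv_right_sec hd (Pi.single b 1)
  show fderiv ℝ (pdv L b y) w (Pi.single a 1) = _
  rw [fderiv_congr_open (slice_right_open hΩopen y) hq step1]
  have hd2 : DifferentiableAt ℝ (DD (FL L) (Vd b)) (y, w) :=
    (dd_contDiffAt (FL_cda hΩopen hLsmooth hq) (Vd b)).differentiableAt (by simp)
  exact fderiv_right_sec hd2 (Pi.single a 1)

-- (TF): pdx of gmet as x-derivative of F2
theorem pdx_gmet_eq (hΩopen : IsOpen Ω) (hLsmooth : ContDiffOn ℝ (⊤ : ℕ∞) (FL L) Ω)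
    {y w : Vec m} (hq : (y, w) ∈ Ω) (a b c : Fin m) :
    pdx (fun y' w' => gmet L y' w' a b) c y w
      = DD (DD (DD (FL L) (Vd b)) (Vd a)) (Xd c) (y, w) := by
  have step1 : ∀ y' ∈ {y' : Vec m | (y', w) ∈ Ω},
      gmet L y' w a b = DD (DD (FL L) (Vd b)) (Vd a) (y', w) :=
    fun y' hy' => gmet_eq hΩopen hLsmooth hy' a b
  show fderiv ℝ (fun y' => gmet L y' w a b) y (Pi.single c 1) = _
  rw [fderiv_congr_open (slice_left_open hΩopen w) hq step1]
  have hd2 : DifferentiableAt ℝ (DD (DD (FL L) (Vd b)) (Vd a)) (y, w) :=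
    (dd_contDiffAt (dd_contDiffAt (FL_cda hΩopen hLsmooth hq) (Vd b)) (Vd a)).differentiableAt
      (by simp)
  exact fderiv_left_sec hd2 (Pi.single c 1)


theorem fderiv_scale {g : Vec m → ℝ} {w : Vec m} {t : ℝ}
    (hg : DifferentiableAt ℝ g (t • w)) (u : Vec m) :
    fderiv ℝ (fun w' => g (t • w')) w u = t * fderiv ℝ g (t • w) u := by
  have hs : HasFDerivAt (fun w' : Vec m => t • w')
      (t • ContinuousLinearMap.id ℝ (Vec m)) w := (hasFDerivAt_id w).const_smul t
  have h : HasFDerivAt (fun w' : Vec m => g (t • w'))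
      ((fderiv ℝ g (t • w)).comp (t • ContinuousLinearMap.id ℝ (Vec m))) w :=
    hg.hasFDerivAt.comp w hs
  rw [h.fderiv]
  simp [smul_eq_mul, (fderiv ℝ g (t • w)).map_smul]

theorem fderiv_cmul {g : Vec m → ℝ} {w : Vec m} {c : ℝ}
    (hg : DifferentiableAt ℝ g w) (u : Vec m) :
    fderiv ℝ (fun w' => c * g w') w u = c * fderiv ℝ g w u := by
  rw [fderiv_const_mul hg c]; rfl

-- vertical derivative of a fiberwise k-homogeneous function
theorem hom_step {G : Vec m × Vec m → ℝ} (hΩopen : IsOpen Ω)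
    (hΩcone : ∀ p ∈ Ω, ∀ s : ℝ, 0 < s → (p.1, s • p.2) ∈ Ω)
    (hG : ∀ q ∈ Ω, DifferentiableAt ℝ G q) (k : ℕ)
    (hhom : ∀ q ∈ Ω, ∀ t : ℝ, 0 < t → G (q.1, t • q.2) = t ^ k * G q)
    {y w : Vec m} (hq : (y, w) ∈ Ω) {t : ℝ} (ht : 0 < t) (b : Fin m) :
    t * DD G (Vd b) (y, t • w) = t ^ k * DD G (Vd b) (y, w) := by
  have hc : (y, t • w) ∈ Ω := hΩcone (y, w) hq t ht
  have hgy : ∀ w', (y, w') ∈ Ω → DifferentiableAt ℝ (fun w'' => G (y, w'')) w' := by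
    intro w' hw'
    exact (hG _ hw').comp w' ((hasFDerivAt_prodMk_right y w').differentiableAt)
  have heq : ∀ w' ∈ {w' : Vec m | (y, w') ∈ Ω},
      G (y, t • w') = t ^ k * G (y, w') := fun w' hw' => hhom (y, w') hw' t ht
  have hkey := fderiv_congr_open (slice_right_open hΩopen y) hq heq
  have lhs : fderiv ℝ (fun w' => G (y, t • w')) w (Pi.single b 1)
      = t * DD G (Vd b) (y, t • w) := by
    rw [fderiv_scale (hgy _ hc) (Pi.single b 1)]
    rw [fderiv_right_sec (hG _ hc) (Pi.single b 1)]; rfl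
  have rhs : fderiv ℝ (fun w' => t ^ k * G (y, w')) w (Pi.single b 1)
      = t ^ k * DD G (Vd b) (y, w) := by
    rw [fderiv_cmul (hgy _ hq) (Pi.single b 1)]
    rw [fderiv_right_sec (hG _ hq) (Pi.single b 1)]; rfl
  rw [← lhs, ← rhs]
  exact congrFun (congrArg _ hkey) _

-- horizontal derivative of a fiberwise k-homogeneous function
theorem hom_stepx {G : Vec m × Vec m → ℝ} (hΩopen : IsOpen Ω)
    (hΩcone : ∀ p ∈ Ω, ∀ s : ℝ, 0 < s → (p.1, s • p.2) ∈ Ω)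
    (hG : ∀ q ∈ Ω, DifferentiableAt ℝ G q) (k : ℕ)
    (hhom : ∀ q ∈ Ω, ∀ t : ℝ, 0 < t → G (q.1, t • q.2) = t ^ k * G q)
    {y w : Vec m} (hq : (y, w) ∈ Ω) {t : ℝ} (ht : 0 < t) (c : Fin m) :
    DD G (Xd c) (y, t • w) = t ^ k * DD G (Xd c) (y, w) := by
  have hc : (y, t • w) ∈ Ω := hΩcone (y, w) hq t ht
  have heq : ∀ y' ∈ {y' : Vec m | (y', w) ∈ Ω},
      G (y', t • w) = t ^ k * G (y', w) := fun y' hy' => hhom (y', w) hy' t ht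
  have hkey := fderiv_congr_open (slice_left_open hΩopen w) hq heq
  have lhs : fderiv ℝ (fun y' => G (y', t • w)) y (Pi.single c 1)
      = DD G (Xd c) (y, t • w) := by
    rw [fderiv_left_sec (hG _ hc) (Pi.single c 1)]; rfl
  have hgv : DifferentiableAt ℝ (fun y' => G (y', w)) y :=
    (hG _ hq).comp y ((hasFDerivAt_prodMk_left y w).differentiableAt)
  have rhs : fderiv ℝ (fun y' => t ^ k * G (y', w)) y (Pi.single c 1)
      = t ^ k * DD G (Xd c) (y, w) := by
    rw [fderiv_cmul hgv (Pi.single c 1)]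
    rw [fderiv_left_sec (hG _ hq) (Pi.single c 1)]; rfl
  rw [← lhs, ← rhs]
  exact congrFun (congrArg _ hkey) _

variable (L) in
theorem homF1 (hΩopen : IsOpen Ω)
    (hΩcone : ∀ p ∈ Ω, ∀ s : ℝ, 0 < s → (p.1, s • p.2) ∈ Ω)
    (hLsmooth : ContDiffOn ℝ (⊤ : ℕ∞) (FL L) Ω)
    (hLhom : ∀ p ∈ Ω, ∀ s : ℝ, 0 < s → L p.1 (s • p.2) = s ^ 2 * L p.1 p.2)
    (b : Fin m) :
    ∀ q ∈ Ω, ∀ t : ℝ, 0 < t →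
      DD (FL L) (Vd b) (q.1, t • q.2) = t ^ 1 * DD (FL L) (Vd b) q := by
  rintro ⟨y, w⟩ hq t ht
  have h := hom_step hΩopen hΩcone
    (fun q hq => (FL_cda hΩopen hLsmooth hq).differentiableAt (by simp)) 2 hLhom hq ht b
  have htne : t ≠ 0 := ne_of_gt ht
  show DD (FL L) (Vd b) (y, t • w) = t ^ 1 * DD (FL L) (Vd b) (y, w)
  exact mul_left_cancel₀ htne (h.trans (by ring))

variable (L) in
theorem homF2 (hΩopen : IsOpen Ω)
    (hΩcone : ∀ p ∈ Ω, ∀ s : ℝ, 0 < s → (p.1, s • p.2) ∈ Ω)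
    (hLsmooth : ContDiffOn ℝ (⊤ : ℕ∞) (FL L) Ω)
    (hLhom : ∀ p ∈ Ω, ∀ s : ℝ, 0 < s → L p.1 (s • p.2) = s ^ 2 * L p.1 p.2)
    (a b : Fin m) :
    ∀ q ∈ Ω, ∀ t : ℝ, 0 < t →
      DD (DD (FL L) (Vd b)) (Vd a) (q.1, t • q.2)
        = t ^ 0 * DD (DD (FL L) (Vd b)) (Vd a) q := by
  rintro ⟨y, w⟩ hq t ht
  have h := hom_step hΩopen hΩcone
    (fun q hq => (dd_contDiffAt (FL_cda hΩopen hLsmooth hq) (Vd b)).differentiableAt (by simp))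
    1 (homF1 L hΩopen hΩcone hLsmooth hLhom b) hq ht a
  have htne : t ≠ 0 := ne_of_gt ht
  have h' : t * DD (DD (FL L) (Vd b)) (Vd a) (y, t • w)
      = t ^ 1 * DD (DD (FL L) (Vd b)) (Vd a) (y, w) := h
  show DD (DD (FL L) (Vd b)) (Vd a) (y, t • w)
      = t ^ 0 * DD (DD (FL L) (Vd b)) (Vd a) (y, w)
  exact mul_left_cancel₀ htne (h'.trans (by ring))

variable (L) in
theorem homF3x (hΩopen : IsOpen Ω)
    (hΩcone : ∀ p ∈ Ω, ∀ s : ℝ, 0 < s → (p.1, s • p.2) ∈ Ω)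
    (hLsmooth : ContDiffOn ℝ (⊤ : ℕ∞) (FL L) Ω)
    (hLhom : ∀ p ∈ Ω, ∀ s : ℝ, 0 < s → L p.1 (s • p.2) = s ^ 2 * L p.1 p.2)
    (a b c : Fin m) :
    ∀ q ∈ Ω, ∀ t : ℝ, 0 < t →
      DD (DD (DD (FL L) (Vd b)) (Vd a)) (Xd c) (q.1, t • q.2)
        = DD (DD (DD (FL L) (Vd b)) (Vd a)) (Xd c) q := by
  rintro ⟨y, w⟩ hq t ht
  have h := hom_stepx hΩopen hΩcone
    (fun q hq => (dd_contDiffAt (dd_contDiffAt (FL_cda hΩopen hLsmooth hq) (Vd b))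
      (Vd a)).differentiableAt (by simp))
    0 (homF2 L hΩopen hΩcone hLsmooth hLhom a b) hq ht c
  have h' : DD (DD (DD (FL L) (Vd b)) (Vd a)) (Xd c) (y, t • w)
      = t ^ 0 * DD (DD (DD (FL L) (Vd b)) (Vd a)) (Xd c) (y, w) := h
  show DD (DD (DD (FL L) (Vd b)) (Vd a)) (Xd c) (y, t • w)
      = DD (DD (DD (FL L) (Vd b)) (Vd a)) (Xd c) (y, w)
  simpa using h'

theorem clm_sum_single (T : Vec m →L[ℝ] ℝ) (v : Vec m) :
    T v = ∑ ρ, T (Pi.single ρ 1) * v ρ := by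
  conv_lhs => rw [← Finset.univ_sum_single v]
  rw [map_sum]
  refine Finset.sum_congr rfl fun ρ _ => ?_
  have h1 : Pi.single ρ (v ρ) = (v ρ) • (Pi.single ρ (1:ℝ) : Vec m) := by
    ext j
    simp [Pi.single_apply, Pi.smul_apply, mul_ite]
  rw [h1, map_smul, smul_eq_mul, mul_comm]

-- Euler contraction for the vertical third derivative (outermost slot)
variable (L) in
theorem eulerC (hΩopen : IsOpen Ω)
    (hΩcone : ∀ p ∈ Ω, ∀ s : ℝ, 0 < s → (p.1, s • p.2) ∈ Ω)
    (hLsmooth : ContDiffOn ℝ (⊤ : ℕ∞) (FL L) Ω)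
    (hLhom : ∀ p ∈ Ω, ∀ s : ℝ, 0 < s → L p.1 (s • p.2) = s ^ 2 * L p.1 p.2)
    {x v : Vec m} (hq : (x, v) ∈ Ω) (a b : Fin m) :
    ∑ ρ, DD (DD (DD (FL L) (Vd b)) (Vd a)) (Vd ρ) (x, v) * v ρ = 0 := by
  set G := DD (DD (FL L) (Vd b)) (Vd a) with hG
  have hcd : ContDiffAt ℝ (⊤ : ℕ∞) G (x, v) :=
    dd_contDiffAt (dd_contDiffAt (FL_cda hΩopen hLsmooth hq) (Vd b)) (Vd a)
  have hgy : DifferentiableAt ℝ (fun w => G (x, w)) v :=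
    (hcd.differentiableAt (by simp)).comp v ((hasFDerivAt_prodMk_right x v).differentiableAt)
  have hψhom : ∀ t : ℝ, 0 < t → (fun w => G (x, w)) (t • v) = t ^ 0 * (fun w => G (x, w)) v :=
    fun t ht => homF2 L hΩopen hΩcone hLsmooth hLhom a b (x, v) hq t ht
  have heuler := euler_dir hgy 0 hψhom
  simp only [Nat.cast_zero, zero_mul] at heuler
  have hexp := clm_sum_single (fderiv ℝ (fun w => G (x, w)) v) v
  rw [heuler] at hexp
  have : ∀ ρ, fderiv ℝ (fun w => G (x, w)) v (Pi.single ρ 1)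
      = DD G (Vd ρ) (x, v) := by
    intro ρ
    rw [fderiv_right_sec (hcd.differentiableAt (by simp)) (Pi.single ρ 1)]; rfl
  rw [Finset.sum_congr rfl (fun ρ _ => by rw [this ρ])] at hexp
  exact hexp.symm

-- inner swap of the two middle vertical derivatives, any outer direction
variable (L) in
theorem sym23 (hΩopen : IsOpen Ω) (hLsmooth : ContDiffOn ℝ (⊤ : ℕ∞) (FL L) Ω)
    {q : Vec m × Vec m} (hq : q ∈ Ω) (a b : Fin m) (u : Vec m × Vec m) :
    DD (DD (DD (FL L) (Vd b)) (Vd a)) u q = DD (DD (DD (FL L) (Vd a)) (Vd b)) u q := by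
  have heq : ∀ p ∈ Ω, DD (DD (FL L) (Vd b)) (Vd a) p = DD (DD (FL L) (Vd a)) (Vd b) p :=
    fun p hp => dd_symm (FL_cda hΩopen hLsmooth hp) (Vd b) (Vd a)
  show fderiv ℝ (DD (DD (FL L) (Vd b)) (Vd a)) q u = _
  rw [fderiv_congr_open hΩopen hq heq]; rfl

-- outer swap of the two outermost derivative directions
variable (L) in
theorem sym12 (hΩopen : IsOpen Ω) (hLsmooth : ContDiffOn ℝ (⊤ : ℕ∞) (FL L) Ω)
    {q : Vec m × Vec m} (hq : q ∈ Ω) (b : Fin m) (u w : Vec m × Vec m) :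
    DD (DD (DD (FL L) (Vd b)) u) w q = DD (DD (DD (FL L) (Vd b)) w) u q :=
  dd_symm (dd_contDiffAt (FL_cda hΩopen hLsmooth hq) (Vd b)) u w

variable (L) in
theorem zMid (hΩopen : IsOpen Ω)
    (hΩcone : ∀ p ∈ Ω, ∀ s : ℝ, 0 < s → (p.1, s • p.2) ∈ Ω)
    (hLsmooth : ContDiffOn ℝ (⊤ : ℕ∞) (FL L) Ω)
    (hLhom : ∀ p ∈ Ω, ∀ s : ℝ, 0 < s → L p.1 (s • p.2) = s ^ 2 * L p.1 p.2)
    {x v : Vec m} (hq : (x, v) ∈ Ω) (b ρ : Fin m) :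
    ∑ ν, DD (DD (DD (FL L) (Vd b)) (Vd ν)) (Vd ρ) (x, v) * v ν = 0 := by
  have h : ∀ ν, DD (DD (DD (FL L) (Vd b)) (Vd ν)) (Vd ρ) (x, v)
      = DD (DD (DD (FL L) (Vd b)) (Vd ρ)) (Vd ν) (x, v) :=
    fun ν => sym12 L hΩopen hLsmooth hq b (Vd ν) (Vd ρ)
  calc ∑ ν, DD (DD (DD (FL L) (Vd b)) (Vd ν)) (Vd ρ) (x, v) * v ν
      = ∑ ν, DD (DD (DD (FL L) (Vd b)) (Vd ρ)) (Vd ν) (x, v) * v ν :=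
        Finset.sum_congr rfl fun ν _ => by rw [h ν]
    _ = 0 := eulerC L hΩopen hΩcone hLsmooth hLhom hq ρ b

variable (L) in
theorem zInner (hΩopen : IsOpen Ω)
    (hΩcone : ∀ p ∈ Ω, ∀ s : ℝ, 0 < s → (p.1, s • p.2) ∈ Ω)
    (hLsmooth : ContDiffOn ℝ (⊤ : ℕ∞) (FL L) Ω)
    (hLhom : ∀ p ∈ Ω, ∀ s : ℝ, 0 < s → L p.1 (s • p.2) = s ^ 2 * L p.1 p.2)
    {x v : Vec m} (hq : (x, v) ∈ Ω) (a ρ : Fin m) :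
    ∑ c, DD (DD (DD (FL L) (Vd c)) (Vd a)) (Vd ρ) (x, v) * v c = 0 := by
  calc ∑ c, DD (DD (DD (FL L) (Vd c)) (Vd a)) (Vd ρ) (x, v) * v c
      = ∑ c, DD (DD (DD (FL L) (Vd a)) (Vd c)) (Vd ρ) (x, v) * v c :=
        Finset.sum_congr rfl fun c _ => by
          rw [sym23 L hΩopen hLsmooth hq a c (Vd ρ)]
    _ = 0 := zMid L hΩopen hΩcone hLsmooth hLhom hq a ρ

theorem vert_expand {G : Vec m × Vec m → ℝ} {q : Vec m × Vec m} (u : Vec m) :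
    fderiv ℝ G q (0, u) = ∑ ρ, DD G (Vd ρ) q * u ρ := by
  have := clm_sum_single ((fderiv ℝ G q).comp (ContinuousLinearMap.inr ℝ (Vec m) (Vec m))) u
  simpa [DD, Vd] using this

variable (L) in
theorem pdm_eq (hΩopen : IsOpen Ω) (hLsmooth : ContDiffOn ℝ (⊤ : ℕ∞) (FL L) Ω)
    {U : Set (Vec m)} (hUopen : IsOpen U) {s : Vec m → Vec m}
    (hssmooth : ContDiffOn ℝ (⊤ : ℕ∞) s U) (hsΩ : ∀ x ∈ U, (x, s x) ∈ Ω)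
    {x : Vec m} (hx : x ∈ U) (a b c : Fin m) :
    pdm (fun y => gmet L y (s y)) a b c x
      = DD (DD (DD (FL L) (Vd b)) (Vd a)) (Xd c) (x, s x)
        + ∑ ρ, DD (DD (DD (FL L) (Vd b)) (Vd a)) (Vd ρ) (x, s x) * pde s ρ c x := by
  have hq : (x, s x) ∈ Ω := hsΩ x hx
  have hsdiff : DifferentiableAt ℝ s x :=
    (hssmooth.differentiableOn (by simp)).differentiableAt (hUopen.mem_nhds hx)
  have hd2 : DifferentiableAt ℝ (DD (DD (FL L) (Vd b)) (Vd a)) (x, s x) :=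
    (dd_contDiffAt (dd_contDiffAt (FL_cda hΩopen hLsmooth hq) (Vd b)) (Vd a)).differentiableAt
      (by simp)
  have heq : ∀ y ∈ U, gmet L y (s y) a b = DD (DD (FL L) (Vd b)) (Vd a) (y, s y) :=
    fun y hy => gmet_eq hΩopen hLsmooth (hsΩ y hy) a b
  have h1 : pdm (fun y => gmet L y (s y)) a b c x
      = fderiv ℝ (fun y => DD (DD (FL L) (Vd b)) (Vd a) (y, s y)) x (Pi.single c 1) := by
    show fderiv ℝ (fun y => gmet L y (s y) a b) x (Pi.single c 1) = _
    rw [fderiv_congr_open hUopen hx heq]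
  have hh : HasFDerivAt (fun y : Vec m => (y, s y))
      ((ContinuousLinearMap.id ℝ (Vec m)).prod (fderiv ℝ s x)) x :=
    (hasFDerivAt_id x).prodMk hsdiff.hasFDerivAt
  have h2 : HasFDerivAt (fun y => DD (DD (FL L) (Vd b)) (Vd a) (y, s y))
      ((fderiv ℝ (DD (DD (FL L) (Vd b)) (Vd a)) (x, s x)).comp
        ((ContinuousLinearMap.id ℝ (Vec m)).prod (fderiv ℝ s x))) x :=
    by have := hd2.hasFDerivAt.comp x hh; exact this
  rw [h1, h2.fderiv]
  have h3 : ((fderiv ℝ (DD (DD (FL L) (Vd b)) (Vd a)) (x, s x)).comp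
        ((ContinuousLinearMap.id ℝ (Vec m)).prod (fderiv ℝ s x))) (Pi.single c 1)
      = fderiv ℝ (DD (DD (FL L) (Vd b)) (Vd a)) (x, s x)
          (Pi.single c 1, fderiv ℝ s x (Pi.single c 1)) := rfl
  rw [h3]
  have h4 : ((Pi.single c 1 : Vec m), fderiv ℝ s x (Pi.single c 1))
      = Xd c + ((0 : Vec m), fderiv ℝ s x (Pi.single c 1)) := by
    simp [Xd, Prod.ext_iff]
  rw [h4, map_add, vert_expand]
  congr 1
  refine Finset.sum_congr rfl fun ρ _ => ?_
  congr 1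
  show fderiv ℝ s x (Pi.single c 1) ρ = pde s ρ c x
  have hp : HasFDerivAt (fun y => s y ρ)
      ((ContinuousLinearMap.proj ρ).comp (fderiv ℝ s x)) x :=
    HasFDerivAt.comp x (ContinuousLinearMap.hasFDerivAt
      (ContinuousLinearMap.proj (R := ℝ) (φ := fun _ : Fin m => ℝ) ρ)) hsdiff.hasFDerivAt
  show _ = fderiv ℝ (fun y => s y ρ) x (Pi.single c 1)
  rw [hp.fderiv]; rfl

variable (L) in
theorem gmet_diff (hΩopen : IsOpen Ω) (hLsmooth : ContDiffOn ℝ (⊤ : ℕ∞) (FL L) Ω)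
    {x v : Vec m} (hq : (x, v) ∈ Ω) (a b : Fin m) :
    DifferentiableAt ℝ (fun w => gmet L x w a b) v := by
  apply differentiableAt_congr_open (slice_right_open hΩopen x) hq
    (fun w' hw' => gmet_eq hΩopen hLsmooth hw' a b)
  exact ((dd_contDiffAt (dd_contDiffAt (FL_cda hΩopen hLsmooth hq) (Vd b))
    (Vd a)).differentiableAt (by simp)).comp v
    ((hasFDerivAt_prodMk_right x v).differentiableAt)

variable (L) in
theorem pdx_gmet_diff (hΩopen : IsOpen Ω) (hLsmooth : ContDiffOn ℝ (⊤ : ℕ∞) (FL L) Ω)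
    {x v : Vec m} (hq : (x, v) ∈ Ω) (a b c : Fin m) :
    DifferentiableAt ℝ (fun w => pdx (fun y' w' => gmet L y' w' a b) c x w) v := by
  apply differentiableAt_congr_open (slice_right_open hΩopen x) hq
    (fun w' hw' => pdx_gmet_eq hΩopen hLsmooth hw' a b c)
  exact ((dd_contDiffAt (dd_contDiffAt (dd_contDiffAt (FL_cda hΩopen hLsmooth hq) (Vd b))
    (Vd a)) (Xd c)).differentiableAt (by simp)).comp v
    ((hasFDerivAt_prodMk_right x v).differentiableAt)

variable (L) in
theorem spray_diff (hΩopen : IsOpen Ω) (hLsmooth : ContDiffOn ℝ (⊤ : ℕ∞) (FL L) Ω)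
    (hLinv : ∀ p ∈ Ω, IsUnit (gmet L p.1 p.2).det)
    {x v : Vec m} (hq : (x, v) ∈ Ω) (α : Fin m) :
    DifferentiableAt ℝ (fun w => spray L α x w) v := by
  have hdet : (gmet L x v).det ≠ 0 := (isUnit_iff_ne_zero.mp (hLinv (x, v) hq))
  have hginv : ∀ a b, DifferentiableAt ℝ (fun w => ginv L x w a b) v := by
    intro a b
    exact differentiableAt_inv_entry (fun i j => gmet_diff L hΩopen hLsmooth hq i j) hdet a b
  have hproj : ∀ b : Fin m, DifferentiableAt ℝ (fun w : Vec m => w b) v := by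
    intro b
    exact (ContinuousLinearMap.proj (R := ℝ) (φ := fun _ : Fin m => ℝ) b).differentiableAt
  simp only [spray]
  apply DifferentiableAt.const_mul
  apply DifferentiableAt.fun_sum
  intro δ _
  apply DifferentiableAt.mul (hginv α δ)
  apply DifferentiableAt.fun_sum
  intro β _
  apply DifferentiableAt.fun_sum
  intro γ _
  exact ((((pdx_gmet_diff L hΩopen hLsmooth hq δ γ β).add
    (pdx_gmet_diff L hΩopen hLsmooth hq δ β γ)).sub
    (pdx_gmet_diff L hΩopen hLsmooth hq β γ δ)).mul (hproj β)).mul (hproj γ)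

variable (L) in
theorem gmet_hom (hΩopen : IsOpen Ω)
    (hΩcone : ∀ p ∈ Ω, ∀ s : ℝ, 0 < s → (p.1, s • p.2) ∈ Ω)
    (hLsmooth : ContDiffOn ℝ (⊤ : ℕ∞) (FL L) Ω)
    (hLhom : ∀ p ∈ Ω, ∀ s : ℝ, 0 < s → L p.1 (s • p.2) = s ^ 2 * L p.1 p.2)
    {x v : Vec m} (hq : (x, v) ∈ Ω) {t : ℝ} (ht : 0 < t) (a b : Fin m) :
    gmet L x (t • v) a b = gmet L x v a b := by
  have hc : (x, t • v) ∈ Ω := hΩcone (x, v) hq t ht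
  rw [gmet_eq hΩopen hLsmooth hc a b, gmet_eq hΩopen hLsmooth hq a b]
  have := homF2 L hΩopen hΩcone hLsmooth hLhom a b (x, v) hq t ht
  simpa using this

variable (L) in
theorem pdx_gmet_hom (hΩopen : IsOpen Ω)
    (hΩcone : ∀ p ∈ Ω, ∀ s : ℝ, 0 < s → (p.1, s • p.2) ∈ Ω)
    (hLsmooth : ContDiffOn ℝ (⊤ : ℕ∞) (FL L) Ω)
    (hLhom : ∀ p ∈ Ω, ∀ s : ℝ, 0 < s → L p.1 (s • p.2) = s ^ 2 * L p.1 p.2)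
    {x v : Vec m} (hq : (x, v) ∈ Ω) {t : ℝ} (ht : 0 < t) (a b c : Fin m) :
    pdx (fun y' w' => gmet L y' w' a b) c x (t • v)
      = pdx (fun y' w' => gmet L y' w' a b) c x v := by
  have hc : (x, t • v) ∈ Ω := hΩcone (x, v) hq t ht
  rw [pdx_gmet_eq hΩopen hLsmooth hc a b c, pdx_gmet_eq hΩopen hLsmooth hq a b c]
  exact homF3x L hΩopen hΩcone hLsmooth hLhom a b c (x, v) hq t ht

variable (L) in
theorem spray_hom (hΩopen : IsOpen Ω)
    (hΩcone : ∀ p ∈ Ω, ∀ s : ℝ, 0 < s → (p.1, s • p.2) ∈ Ω)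
    (hLsmooth : ContDiffOn ℝ (⊤ : ℕ∞) (FL L) Ω)
    (hLhom : ∀ p ∈ Ω, ∀ s : ℝ, 0 < s → L p.1 (s • p.2) = s ^ 2 * L p.1 p.2)
    {x v : Vec m} (hq : (x, v) ∈ Ω) (α : Fin m) {t : ℝ} (ht : 0 < t) :
    spray L α x (t • v) = t ^ 2 * spray L α x v := by
  have hgeq : gmet L x (t • v) = gmet L x v :=
    Matrix.ext fun a b => gmet_hom L hΩopen hΩcone hLsmooth hLhom hq ht a b
  have hginv : ∀ a b, ginv L x (t • v) a b = ginv L x v a b := by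
    intro a b
    show (gmet L x (t • v))⁻¹ a b = (gmet L x v)⁻¹ a b
    rw [hgeq]
  simp only [spray, hginv, pdx_gmet_hom L hΩopen hΩcone hLsmooth hLhom hq ht,
    Pi.smul_apply, smul_eq_mul]
  have inner : ∀ δ : Fin m, (∑ β, ∑ γ,
      (pdx (fun y w => gmet L y w δ γ) β x v + pdx (fun y w => gmet L y w δ β) γ x v
        - pdx (fun y w => gmet L y w β γ) δ x v) * (t * v β) * (t * v γ))
      = t ^ 2 * ∑ β, ∑ γ,
      (pdx (fun y w => gmet L y w δ γ) β x v + pdx (fun y w => gmet L y w δ β) γ x v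
        - pdx (fun y w => gmet L y w β γ) δ x v) * v β * v γ := by
    intro δ
    rw [Finset.mul_sum]
    refine Finset.sum_congr rfl fun β _ => ?_
    rw [Finset.mul_sum]
    refine Finset.sum_congr rfl fun γ _ => ?_
    ring
  simp only [inner]
  have h1 : ∀ (c : ℝ) (g X : Fin m → ℝ),
      ∑ δ, g δ * (c * X δ) = c * ∑ δ, g δ * X δ := by
    intro c g X
    rw [Finset.mul_sum]
    exact Finset.sum_congr rfl fun δ _ => by ring
  rw [h1]
  ring

variable (L) in
theorem nconn_contract (hΩopen : IsOpen Ω)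
    (hΩcone : ∀ p ∈ Ω, ∀ s : ℝ, 0 < s → (p.1, s • p.2) ∈ Ω)
    (hLsmooth : ContDiffOn ℝ (⊤ : ℕ∞) (FL L) Ω)
    (hLhom : ∀ p ∈ Ω, ∀ s : ℝ, 0 < s → L p.1 (s • p.2) = s ^ 2 * L p.1 p.2)
    (hLinv : ∀ p ∈ Ω, IsUnit (gmet L p.1 p.2).det)
    {x v : Vec m} (hq : (x, v) ∈ Ω) (α : Fin m) :
    ∑ μ, nConn L α μ x v * v μ = 2 * spray L α x v := by
  have hdiff := spray_diff L hΩopen hLsmooth hLinv hq α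
  have hhom : ∀ t : ℝ, 0 < t → (fun w => spray L α x w) (t • v)
      = t ^ 2 * (fun w => spray L α x w) v :=
    fun t ht => spray_hom L hΩopen hΩcone hLsmooth hLhom hq α ht
  have heuler := euler_dir hdiff 2 hhom
  have hexp := clm_sum_single (fderiv ℝ (fun w => spray L α x w) v) v
  rw [heuler] at hexp
  have hn : ∀ μ, nConn L α μ x v = fderiv ℝ (fun w => spray L α x w) v (Pi.single μ 1) :=
    fun μ => rfl
  calc ∑ μ, nConn L α μ x v * v μ
      = ∑ μ, fderiv ℝ (fun w => spray L α x w) v (Pi.single μ 1) * v μ :=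
        Finset.sum_congr rfl fun μ _ => by rw [hn μ]
    _ = 2 * spray L α x v := by rw [← hexp]; norm_num

theorem triple_zero (g : Fin m → Fin m → Fin m → ℝ)
    (hz : ∀ ρ ν, (∑ μ, g ρ μ ν) = 0) :
    ∑ μ, ∑ ν, ∑ ρ, g ρ μ ν = 0 := by
  rw [Finset.sum_comm]
  apply Finset.sum_eq_zero; intro ν _
  rw [Finset.sum_comm]
  apply Finset.sum_eq_zero; intro ρ _
  exact hz ρ ν

theorem triple_zero' (g : Fin m → Fin m → Fin m → ℝ)
    (hz : ∀ ρ μ, (∑ ν, g ρ μ ν) = 0) :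
    ∑ μ, ∑ ν, ∑ ρ, g ρ μ ν = 0 := by
  apply Finset.sum_eq_zero; intro μ _
  rw [Finset.sum_comm]
  apply Finset.sum_eq_zero; intro ρ _
  exact hz ρ μ

theorem rearr (c : ℝ) (A : Fin m → ℝ) (E : Fin m → Fin m → Fin m → ℝ) (v : Vec m) :
    ∑ μ, ∑ ν, (c * ∑ σ, A σ * E σ ν μ) * v ν * v μ
      = c * ∑ σ, A σ * (∑ μ, ∑ ν, E σ ν μ * v ν * v μ) := by
  have step1 : ∀ μ ν : Fin m, (c * ∑ σ, A σ * E σ ν μ) * v ν * v μ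
      = ∑ σ, c * (A σ * (E σ ν μ * v ν * v μ)) := by
    intro μ ν
    rw [Finset.mul_sum, Finset.sum_mul, Finset.sum_mul]
    exact Finset.sum_congr rfl fun σ _ => by ring
  simp only [step1]
  have step2 : ∀ μ : Fin m, ∑ ν, ∑ σ, c * (A σ * (E σ ν μ * v ν * v μ))
      = ∑ σ, ∑ ν, c * (A σ * (E σ ν μ * v ν * v μ)) := fun μ => Finset.sum_comm ..
  simp only [step2]
  rw [Finset.sum_comm]
  rw [Finset.mul_sum]
  refine Finset.sum_congr rfl fun σ _ => ?_
  have pull : ∀ (a : ℝ) (f : Fin m → ℝ), ∑ μ, c * (a * f μ) = c * (a * ∑ μ, f μ) := by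
    intro a f
    simp only [Finset.mul_sum]
  calc ∑ μ, ∑ ν, c * (A σ * (E σ ν μ * v ν * v μ))
      = ∑ μ, c * (A σ * ∑ ν, E σ ν μ * v ν * v μ) :=
        Finset.sum_congr rfl fun μ _ => pull _ _
    _ = c * (A σ * ∑ μ, ∑ ν, E σ ν μ * v ν * v μ) := pull _ _

variable (L) in
theorem core_identity {Uu : Set (Vec m)} (hΩopen : IsOpen Ω)
    (hΩcone : ∀ p ∈ Ω, ∀ s : ℝ, 0 < s → (p.1, s • p.2) ∈ Ω)
    (hLsmooth : ContDiffOn ℝ (⊤ : ℕ∞) (FL L) Ω)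
    (hLhom : ∀ p ∈ Ω, ∀ s : ℝ, 0 < s → L p.1 (s • p.2) = s ^ 2 * L p.1 p.2)
    (hLinv : ∀ p ∈ Ω, IsUnit (gmet L p.1 p.2).det)
    (hUopen : IsOpen Uu) {s : Vec m → Vec m}
    (hssmooth : ContDiffOn ℝ (⊤ : ℕ∞) s Uu) (hsΩ : ∀ x ∈ Uu, (x, s x) ∈ Ω)
    {x : Vec m} (hx : x ∈ Uu) (α : Fin m) :
    ∑ μ, nConn L α μ x (s x) * s x μ
      = ∑ μ, ∑ ν, christ (fun y => gmet L y (s y)) α ν μ x * s x ν * s x μ := by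
  have hq : (x, s x) ∈ Ω := hsΩ x hx
  set v : Vec m := s x with hv
  -- abbreviations
  set T : Fin m → Fin m → Fin m → ℝ :=
    fun a b c => DD (DD (DD (FL L) (Vd b)) (Vd a)) (Xd c) (x, v) with hT
  set D3 : Fin m → Fin m → Fin m → ℝ :=
    fun ρ a b => DD (DD (DD (FL L) (Vd b)) (Vd a)) (Vd ρ) (x, v) with hD3
  set Ds : Fin m → Fin m → ℝ := fun ρ c => pde s ρ c x with hDs
  -- Cartan contraction over innermost slot
  have hzin : ∀ a ρ, ∑ b, D3 ρ a b * v b = 0 := by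
    intro a ρ
    exact zInner L hΩopen hΩcone hLsmooth hLhom hq a ρ
  -- symmetry of T in first two slots
  have hTsym : ∀ a b c, T a b c = T b a c := by
    intro a b c
    exact sym23 L hΩopen hLsmooth hq a b (Xd c)
  -- pdx literal = T
  have hpdx : ∀ a b c, pdx (fun y' w' => gmet L y' w' a b) c x v = T a b c :=
    fun a b c => pdx_gmet_eq hΩopen hLsmooth hq a b c
  -- pdm expansion
  have hpdm : ∀ a b c, pdm (fun y => gmet L y (s y)) a b c x
      = T a b c + ∑ ρ, D3 ρ a b * Ds ρ c :=
    fun a b c => pdm_eq L hΩopen hLsmooth hUopen hssmooth hsΩ hx a b c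
  -- LHS
  have hlhs : ∑ μ, nConn L α μ x v * v μ = 2 * spray L α x v :=
    nconn_contract L hΩopen hΩcone hLsmooth hLhom hLinv hq α
  have hspray : spray L α x v = (1/4) * ∑ δ, ginv L x v α δ *
      (∑ β, ∑ γ, (T δ γ β + T δ β γ - T β γ δ) * v β * v γ) := by
    show (1/4 : ℝ) * ∑ δ, ginv L x v α δ * (∑ β, ∑ γ, _) = _
    refine congrArg _ (Finset.sum_congr rfl fun δ _ => congrArg _ ?_)
    refine Finset.sum_congr rfl fun β _ => Finset.sum_congr rfl fun γ _ => ?_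
    rw [hpdx δ γ β, hpdx δ β γ, hpdx β γ δ]
  -- RHS: christ expansion
  have hchrist : ∀ ν μ, christ (fun y => gmet L y (s y)) α ν μ x
      = (1/2) * ∑ σ, ginv L x v α σ *
          (pdm (fun y => gmet L y (s y)) σ μ ν x + pdm (fun y => gmet L y (s y)) σ ν μ x
            - pdm (fun y => gmet L y (s y)) ν μ σ x) := fun ν μ => rfl
  -- Cartan vanishing sums
  have hZ1 : ∀ σ, ∑ μ, ∑ ν, (∑ ρ, D3 ρ σ μ * Ds ρ ν) * v ν * v μ = 0 := by
    intro σ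
    have : ∀ μ ν : Fin m, (∑ ρ, D3 ρ σ μ * Ds ρ ν) * v ν * v μ
        = ∑ ρ, (D3 ρ σ μ * v μ) * (Ds ρ ν * v ν) := by
      intro μ ν
      rw [Finset.sum_mul, Finset.sum_mul]
      exact Finset.sum_congr rfl fun ρ _ => by ring
    simp only [this]
    apply triple_zero
    intro ρ ν
    rw [← Finset.sum_mul]
    have h2 : ∑ μ, D3 ρ σ μ * v μ = 0 := hzin σ ρ
    rw [h2, zero_mul]
  have hZ2 : ∀ σ, ∑ μ, ∑ ν, (∑ ρ, D3 ρ σ ν * Ds ρ μ) * v ν * v μ = 0 := by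
    intro σ
    have : ∀ μ ν : Fin m, (∑ ρ, D3 ρ σ ν * Ds ρ μ) * v ν * v μ
        = ∑ ρ, (D3 ρ σ ν * v ν) * (Ds ρ μ * v μ) := by
      intro μ ν
      rw [Finset.sum_mul, Finset.sum_mul]
      exact Finset.sum_congr rfl fun ρ _ => by ring
    simp only [this]
    apply triple_zero'
    intro ρ μ
    rw [← Finset.sum_mul]
    rw [hzin σ ρ, zero_mul]
  have hZ3 : ∀ σ, ∑ μ, ∑ ν, (∑ ρ, D3 ρ ν μ * Ds ρ σ) * v ν * v μ = 0 := by
    intro σ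
    have : ∀ μ ν : Fin m, (∑ ρ, D3 ρ ν μ * Ds ρ σ) * v ν * v μ
        = ∑ ρ, (D3 ρ ν μ * v μ) * (Ds ρ σ * v ν) := by
      intro μ ν
      rw [Finset.sum_mul, Finset.sum_mul]
      exact Finset.sum_congr rfl fun ρ _ => by ring
    simp only [this]
    apply triple_zero
    intro ρ ν
    rw [← Finset.sum_mul]
    rw [hzin ν ρ, zero_mul]
  -- per-σ reduction
  have hper : ∀ σ, ∑ μ, ∑ ν,
      (pdm (fun y => gmet L y (s y)) σ μ ν x + pdm (fun y => gmet L y (s y)) σ ν μ x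
        - pdm (fun y => gmet L y (s y)) ν μ σ x) * v ν * v μ
      = ∑ μ, ∑ ν, (T σ μ ν + T σ ν μ - T ν μ σ) * v ν * v μ := by
    intro σ
    have hsplit : ∀ μ ν : Fin m,
        (pdm (fun y => gmet L y (s y)) σ μ ν x + pdm (fun y => gmet L y (s y)) σ ν μ x
          - pdm (fun y => gmet L y (s y)) ν μ σ x) * v ν * v μ
        = (T σ μ ν + T σ ν μ - T ν μ σ) * v ν * v μ
          + ((∑ ρ, D3 ρ σ μ * Ds ρ ν) * v ν * v μ
            + (∑ ρ, D3 ρ σ ν * Ds ρ μ) * v ν * v μ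
            - (∑ ρ, D3 ρ ν μ * Ds ρ σ) * v ν * v μ) := by
      intro μ ν
      rw [hpdm σ μ ν, hpdm σ ν μ, hpdm ν μ σ]
      ring
    simp only [hsplit]
    rw [Finset.sum_congr rfl (fun μ _ => Finset.sum_add_distrib),
      Finset.sum_add_distrib]
    have hrest : ∑ μ, ∑ ν,
        ((∑ ρ, D3 ρ σ μ * Ds ρ ν) * v ν * v μ
          + (∑ ρ, D3 ρ σ ν * Ds ρ μ) * v ν * v μ
          - (∑ ρ, D3 ρ ν μ * Ds ρ σ) * v ν * v μ) = 0 := by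
      rw [Finset.sum_congr rfl (fun μ _ => Finset.sum_sub_distrib _ _),
        Finset.sum_sub_distrib,
        Finset.sum_congr rfl (fun μ _ => Finset.sum_add_distrib),
        Finset.sum_add_distrib]
      rw [hZ1 σ, hZ2 σ, hZ3 σ]
      ring
    rw [hrest, add_zero]
  -- assemble
  rw [hlhs]
  have hrhs : ∑ μ, ∑ ν, christ (fun y => gmet L y (s y)) α ν μ x * v ν * v μ
      = (1/2) * ∑ σ, ginv L x v α σ *
          (∑ μ, ∑ ν, (T σ μ ν + T σ ν μ - T ν μ σ) * v ν * v μ) := by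
    calc ∑ μ, ∑ ν, christ (fun y => gmet L y (s y)) α ν μ x * v ν * v μ
        = ∑ μ, ∑ ν, ((1/2) * ∑ σ, ginv L x v α σ *
            (pdm (fun y => gmet L y (s y)) σ μ ν x + pdm (fun y => gmet L y (s y)) σ ν μ x
              - pdm (fun y => gmet L y (s y)) ν μ σ x)) * v ν * v μ := by
          refine Finset.sum_congr rfl fun μ _ => Finset.sum_congr rfl fun ν _ => ?_
          rw [hchrist ν μ]
      _ = (1/2) * ∑ σ, ginv L x v α σ *
            (∑ μ, ∑ ν, (pdm (fun y => gmet L y (s y)) σ μ ν x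
              + pdm (fun y => gmet L y (s y)) σ ν μ x
              - pdm (fun y => gmet L y (s y)) ν μ σ x) * v ν * v μ) := rearr _ _ _ _
      _ = (1/2) * ∑ σ, ginv L x v α σ *
            (∑ μ, ∑ ν, (T σ μ ν + T σ ν μ - T ν μ σ) * v ν * v μ) := by
          refine congrArg _ (Finset.sum_congr rfl fun σ _ => congrArg _ (hper σ))
  rw [hrhs, hspray]
  -- final index gymnastics
  have hfin : ∀ σ, ∑ β, ∑ γ, (T σ γ β + T σ β γ - T β γ σ) * v β * v γ
      = ∑ μ, ∑ ν, (T σ μ ν + T σ ν μ - T ν μ σ) * v ν * v μ := by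
    intro σ
    refine Finset.sum_congr rfl fun β _ => Finset.sum_congr rfl fun γ _ => ?_
    rw [hTsym γ β σ]
    ring
  simp only [hfin]
  ring

end Core


/-- Corollary (Cor. 2.6, geodesic case): `D_s s = ∇^{g_s}_s s` pointwise on `U`; in
particular the Finslerian geodesic (resp. pregeodesic) equation for `s` is equivalent
to the geodesic (resp. pregeodesic) equation of the Levi-Civita connection of the
pullback metric `g_s`. -/
theorem statement7 {m : ℕ} (hm : 2 ≤ m)
    (Ω : Set (Vec m × Vec m)) (hΩopen : IsOpen Ω) (hΩne : Ω.Nonempty)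
    (hΩslit : ∀ p ∈ Ω, p.2 ≠ 0)
    (hΩcone : ∀ p ∈ Ω, ∀ s : ℝ, 0 < s → (p.1, s • p.2) ∈ Ω)
    (L : Vec m → Vec m → ℝ)
    (hLsmooth : ContDiffOn ℝ (⊤ : ℕ∞) (fun p : Vec m × Vec m => L p.1 p.2) Ω)
    (hLhom : ∀ p ∈ Ω, ∀ s : ℝ, 0 < s → L p.1 (s • p.2) = s ^ 2 * L p.1 p.2)
    (hLinv : ∀ p ∈ Ω, IsUnit (gmet L p.1 p.2).det)
    (U : Set (Vec m)) (hUopen : IsOpen U)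
    (s : Vec m → Vec m) (hssmooth : ContDiffOn ℝ (⊤ : ℕ∞) s U)
    (hsΩ : ∀ x ∈ U, (x, s x) ∈ Ω) :
    (∀ x ∈ U, ∀ α, covD L s s x α = lcCov (fun y => gmet L y (s y)) s s x α)
    ∧ ((∀ x ∈ U, ∀ α, covD L s s x α = 0)
        ↔ (∀ x ∈ U, ∀ α, lcCov (fun y => gmet L y (s y)) s s x α = 0))
    ∧ (∀ f : Vec m → ℝ,
        (∀ x ∈ U, ∀ α, covD L s s x α = f x * s x α)
          ↔ (∀ x ∈ U, ∀ α, lcCov (fun y => gmet L y (s y)) s s x α = f x * s x α)) := by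
  have hLs : ContDiffOn ℝ (⊤ : ℕ∞) (FL L) Ω := hLsmooth
  have main : ∀ x ∈ U, ∀ α, covD L s s x α = lcCov (fun y => gmet L y (s y)) s s x α := by
    intro x hx α
    have hcore := core_identity L hΩopen hΩcone hLs hLhom hLinv hUopen hssmooth hsΩ hx α
    show (∑ μ, (pde s α μ x + nConn L α μ x (s x)) * s x μ)
      = (∑ μ, s x μ * pde s α μ x)
        + ∑ μ, ∑ ν, christ (fun y => gmet L y (s y)) α ν μ x * s x ν * s x μ
    rw [← hcore]
    rw [Finset.sum_congr rfl (fun μ _ => add_mul _ _ _), Finset.sum_add_distrib]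
    congr 1
    exact Finset.sum_congr rfl fun μ _ => mul_comm _ _
  refine ⟨main, ?_, ?_⟩
  · constructor
    · intro h x hx α; rw [← main x hx α]; exact h x hx α
    · intro h x hx α; rw [main x hx α]; exact h x hx α
  · intro f
    constructor
    · intro h x hx α; rw [← main x hx α]; exact h x hx α
    · intro h x hx α; rw [main x hx α]; exact h x hx α
end
end
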